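/- arXiv:2311.09837 — 10 statements merged into one kernel-verified Lean document; each statement's English description precedes it below -/
import Mathlib

section
/- Let (F, G₁, G₂) be a boundary system for A. Then the kernel of F equals dom(A₀); that is, for u ∈ dom(A) one has Fu = 0 if and only if u ∈ dom(A₀). -/
open scoped RealInnerProductSpace

/-- For a boundary system `(F, G₁, G₂)` of `A = -A₀*`, the kernel of `F = (F₁, F₂)`
equals `dom A₀`. -/
theorem stmt_2 {H : Type*} [NormedAddCommGroup H] [InnerProductSpace ℝ H] [CompleteSpace H]
    {G₁ G₂ : Type*} [NormedAddCommGroup G₁] [InnerProductSpace ℝ G₁] [CompleteSpace G₁]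
    [NormedAddCommGroup G₂] [InnerProductSpace ℝ G₂] [CompleteSpace G₂]
    (A₀ : H →ₗ.[ℝ] H) (hdense : Dense (A₀.domain : Set H)) (hclosed : A₀.IsClosed)
    (hskew : ∀ u v : A₀.domain, ⟪A₀ u, (v : H)⟫ = -⟪(u : H), A₀ v⟫)
    (A : H →ₗ.[ℝ] H) (hA : A = -A₀.adjoint)
    (F₁ : A.domain →ₗ[ℝ] G₁) (F₂ : A.domain →ₗ[ℝ] G₂)
    (hFsurj : ∀ (g₁ : G₁) (g₂ : G₂), ∃ u : A.domain, F₁ u = g₁ ∧ F₂ u = g₂)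
    (hbs : ∀ u v : A.domain,
      ⟪A u, (v : H)⟫ + ⟪(u : H), A v⟫ = ⟪F₁ u, F₁ v⟫ - ⟪F₂ u, F₂ v⟫) :
    ∀ u : A.domain, (F₁ u = 0 ∧ F₂ u = 0) ↔ (u : H) ∈ A₀.domain := by
  subst hA
  have hadj := LinearPMap.adjoint_isFormalAdjoint hdense
  intro u
  constructor
  · rintro ⟨h1, h2⟩
    have key : ∀ v : (-A₀.adjoint).domain,
        ⟪(-A₀.adjoint) u, (v : H)⟫ + ⟪(u : H), (-A₀.adjoint) v⟫ = 0 := by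
      intro v
      rw [hbs u v, h1, h2]
      simp
    set G : Submodule ℝ (WithLp 2 (H × H)) :=
      A₀.graph.comap (WithLp.linearEquiv 2 ℝ (H × H)).toLinearMap with hGdef
    have hGclosed : IsClosed (G : Set (WithLp 2 (H × H))) := by
      have h := hclosed.preimage (WithLp.prodContinuousLinearEquiv 2 ℝ H H).continuous
      exact h
    haveI : CompleteSpace G := hGclosed.completeSpace_coe
    have hGoo : Gᗮᗮ = G := Submodule.orthogonal_orthogonal G
    set p : WithLp 2 (H × H) :=
      (WithLp.equiv 2 (H × H)).symm ((u : H), (-A₀.adjoint) u) with hp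
    have hpmem : p ∈ Gᗮᗮ := by
      rw [Submodule.mem_orthogonal]
      intro w hw
      set w₁ : H := ((WithLp.equiv 2 (H × H)) w).1 with hw1
      set w₂ : H := ((WithLp.equiv 2 (H × H)) w).2 with hw2
      have hwg : ∀ x : A₀.domain, ⟪(x : H), w₁⟫ + ⟪A₀ x, w₂⟫ = 0 := by
        intro x
        have hx : (WithLp.equiv 2 (H × H)).symm ((x : H), A₀ x) ∈ G := by
          show ((x : H), A₀ x) ∈ A₀.graph
          exact A₀.mem_graph x
        have := hw _ hx
        simpa [WithLp.prod_inner_apply, hw1, hw2] using this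
      have hforall : ∀ x : A₀.domain, ⟪-w₁, (x : H)⟫ = ⟪w₂, A₀ x⟫ := by
        intro x
        have h := hwg x
        have e1 : ⟪(x : H), w₁⟫ = ⟪w₁, (x : H)⟫ := real_inner_comm _ _
        have e2 : ⟪A₀ x, w₂⟫ = ⟪w₂, A₀ x⟫ := real_inner_comm _ _
        rw [inner_neg_left]
        linarith
      have hmem2 : w₂ ∈ A₀.adjoint.domain :=
        LinearPMap.mem_adjoint_domain_of_exists _ ⟨-w₁, hforall⟩
      set v : (-A₀.adjoint).domain := ⟨w₂, hmem2⟩ with hv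
      have hnegapp : (-A₀.adjoint) v = w₁ := by
        rw [LinearPMap.neg_apply]
        rw [show A₀.adjoint v = -w₁ from LinearPMap.adjoint_apply_eq hdense v hforall, neg_neg]
      have hkey := key v
      rw [hnegapp] at hkey
      have e0 : (v : H) = w₂ := rfl
      rw [e0] at hkey
      have e1 : ⟪w₁, (u : H)⟫ = ⟪(u : H), w₁⟫ := real_inner_comm _ _
      have e2 : ⟪w₂, ((-A₀.adjoint) u : H)⟫ = ⟪((-A₀.adjoint) u : H), w₂⟫ := real_inner_comm _ _
      have hgoal : ⟪w₁, (u : H)⟫ + ⟪w₂, ((-A₀.adjoint) u : H)⟫ = 0 := by linarith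
      exact hgoal
    rw [hGoo] at hpmem
    have hpg : ((u : H), (-A₀.adjoint) u) ∈ A₀.graph := hpmem
    rw [LinearPMap.mem_graph_iff] at hpg
    obtain ⟨y, hy1, _⟩ := hpg
    have hy : (y : H) = (u : H) := hy1
    rw [← hy]
    exact y.2
  · intro hu
    have hAu : (-A₀.adjoint) u = A₀ ⟨(u : H), hu⟩ := by
      have hforall : ∀ x : A₀.domain, ⟪-(A₀ ⟨(u : H), hu⟩), (x : H)⟫ = ⟪(u : H), A₀ x⟫ := by
        intro x
        rw [inner_neg_left, hskew ⟨(u : H), hu⟩ x]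
        ring
      rw [LinearPMap.neg_apply]
      rw [show A₀.adjoint u = -(A₀ ⟨(u : H), hu⟩) from
        LinearPMap.adjoint_apply_eq hdense u hforall, neg_neg]
    have key0 : ∀ v : (-A₀.adjoint).domain,
        ⟪(-A₀.adjoint) u, (v : H)⟫ + ⟪(u : H), (-A₀.adjoint) v⟫ = 0 := by
      intro v
      have h2 : ⟪A₀.adjoint v, (u : H)⟫ = ⟪(v : H), A₀ ⟨(u : H), hu⟩⟫ :=
        hadj v ⟨(u : H), hu⟩
      rw [hAu, LinearPMap.neg_apply, inner_neg_right]
      have e1 : ⟪(u : H), A₀.adjoint v⟫ = ⟪A₀.adjoint v, (u : H)⟫ := real_inner_comm _ _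
      have e2 : ⟪A₀ ⟨(u : H), hu⟩, (v : H)⟫ = ⟪(v : H), A₀ ⟨(u : H), hu⟩⟫ := real_inner_comm _ _
      rw [e2, e1, h2]
      ring
    have hzero : ∀ v : (-A₀.adjoint).domain, ⟪F₁ u, F₁ v⟫ - ⟪F₂ u, F₂ v⟫ = 0 := by
      intro v
      rw [← hbs u v]
      exact key0 v
    constructor
    · obtain ⟨v, hv1, hv2⟩ := hFsurj (F₁ u) 0
      have := hzero v
      rw [hv1, hv2, inner_zero_right, sub_zero, inner_self_eq_zero] at this
      exact this
    · obtain ⟨v, hv1, hv2⟩ := hFsurj 0 (F₂ u)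
      have := hzero v
      rw [hv1, hv2, inner_zero_right, zero_sub, neg_eq_zero, inner_self_eq_zero] at this
      exact this
end

section
/- Let (F, G₁, G₂) be a boundary system for A. Then F is bounded with respect to the graph norm on dom(A); that is, there exists C ≥ 0 such that ‖Fu‖_{G₁×G₂} ≤ C (‖u‖² + ‖Au‖²)^{1/2} for all u ∈ dom(A). -/
open scoped RealInnerProductSpace

/-- For a boundary system `(F, G₁, G₂)` of `A = -A₀*`, the map `F = (F₁, F₂)` is bounded
with respect to the graph norm on `dom A`. -/
theorem stmt_3 {H : Type*} [NormedAddCommGroup H] [InnerProductSpace ℝ H] [CompleteSpace H]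
    {G₁ G₂ : Type*} [NormedAddCommGroup G₁] [InnerProductSpace ℝ G₁] [CompleteSpace G₁]
    [NormedAddCommGroup G₂] [InnerProductSpace ℝ G₂] [CompleteSpace G₂]
    (A₀ : H →ₗ.[ℝ] H) (hdense : Dense (A₀.domain : Set H)) (hclosed : A₀.IsClosed)
    (hskew : ∀ u v : A₀.domain, ⟪A₀ u, (v : H)⟫ = -⟪(u : H), A₀ v⟫)
    (A : H →ₗ.[ℝ] H) (hA : A = -A₀.adjoint)
    (F₁ : A.domain →ₗ[ℝ] G₁) (F₂ : A.domain →ₗ[ℝ] G₂)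
    (hFsurj : ∀ (g₁ : G₁) (g₂ : G₂), ∃ u : A.domain, F₁ u = g₁ ∧ F₂ u = g₂)
    (hbs : ∀ u v : A.domain,
      ⟪A u, (v : H)⟫ + ⟪(u : H), A v⟫ = ⟪F₁ u, F₁ v⟫ - ⟪F₂ u, F₂ v⟫) :
    ∃ C : ℝ, 0 ≤ C ∧ ∀ u : A.domain,
      Real.sqrt (‖F₁ u‖ ^ 2 + ‖F₂ u‖ ^ 2) ≤ C * Real.sqrt (‖(u : H)‖ ^ 2 + ‖A u‖ ^ 2) := by
  -- The graph of `A` is closed.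
  have hAc : IsClosed ((A.graph : Submodule ℝ (H × H)) : Set (H × H)) := by
    subst hA
    have hset : (((-A₀.adjoint).graph : Submodule ℝ (H × H)) : Set (H × H)) =
        ⋂ x : A₀.domain, {p : H × H | ⟪p.2, (x : H)⟫ + ⟪p.1, A₀ x⟫ = 0} := by
      ext p
      simp only [Set.mem_iInter, Set.mem_setOf_eq, SetLike.mem_coe]
      constructor
      · intro hp x
        rw [LinearPMap.mem_graph_iff] at hp
        obtain ⟨u, hu1, hu2⟩ := hp
        have hu2' : -(A₀.adjoint ⟨u.1, u.2⟩) = p.2 := hu2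
        have := (LinearPMap.adjoint_isFormalAdjoint hdense) ⟨u.1, u.2⟩ x
        rw [← hu2', ← hu1]
        simp only [inner_neg_left]
        rw [this]
        simp
      · intro hp
        have hmem : p.1 ∈ A₀.adjoint.domain := by
          apply LinearPMap.mem_adjoint_domain_of_exists
          exact ⟨-p.2, fun x => by have := hp x; rw [inner_neg_left]; linarith⟩
        have happ : A₀.adjoint ⟨p.1, hmem⟩ = -p.2 := by
          apply LinearPMap.adjoint_apply_eq hdense
          intro x
          have := hp x; rw [inner_neg_left]; linarith
        rw [LinearPMap.mem_graph_iff]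
        exact ⟨⟨p.1, hmem⟩, rfl, by
          show -(A₀.adjoint ⟨p.1, hmem⟩) = p.2
          rw [happ, neg_neg]⟩
    rw [hset]
    exact isClosed_iInter fun x => isClosed_eq
      ((continuous_snd.inner continuous_const).add (continuous_fst.inner continuous_const))
      continuous_const
  haveI : CompleteSpace A.graph := completeSpace_coe_iff_isComplete.mpr hAc.isComplete
  -- the linear equivalence between `A.domain` and `A.graph`
  let φ₀ : A.domain →ₗ[ℝ] A.graph :=
    { toFun := fun u => ⟨((u : H), A u), A.mem_graph u⟩
      map_add' := fun u v => by
        apply Subtype.ext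
        simp [Prod.ext_iff, A.map_add]
      map_smul' := fun c u => by
        apply Subtype.ext
        simp [Prod.ext_iff, A.map_smul] }
  have hbij : Function.Bijective φ₀ := by
    constructor
    · intro u v huv
      have : ((u : H), A u) = ((v : H), A v) := congrArg Subtype.val huv
      exact Subtype.ext (congrArg Prod.fst this)
    · rintro ⟨p, hp⟩
      rw [LinearPMap.mem_graph_iff] at hp
      obtain ⟨u, hu1, hu2⟩ := hp
      exact ⟨u, Subtype.ext (Prod.ext hu1 hu2)⟩
  let φ : A.domain ≃ₗ[ℝ] A.graph := LinearEquiv.ofBijective φ₀ hbij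
  let T : A.graph →ₗ[ℝ] G₁ × G₂ := (F₁.prod F₂).comp (φ.symm : A.graph →ₗ[ℝ] A.domain)
  have hTz : ∀ z : A.graph, T z = (F₁ (φ.symm z), F₂ (φ.symm z)) := fun z => rfl
  have hTapp : ∀ u : A.domain, T (φ₀ u) = (F₁ u, F₂ u) := by
    intro u
    have h : φ.symm (φ₀ u) = u := φ.symm_apply_apply u
    rw [hTz, h]
  -- continuity via the closed graph theorem
  have hTcont : Continuous T := by
    apply LinearMap.continuous_of_seq_closed_graph
    intro w x y hw hTw
    set u : ℕ → A.domain := fun n => φ.symm (w n) with hu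
    set u₀ : A.domain := φ.symm x with hu0
    have hwn : ∀ n, (w n : H × H) = ((u n : H), A (u n)) := fun n => by
      have : φ₀ (u n) = w n := φ.apply_symm_apply (w n)
      exact (congrArg Subtype.val this).symm
    have hx : (x : H × H) = ((u₀ : H), A u₀) := by
      have : φ₀ u₀ = x := φ.apply_symm_apply x
      exact (congrArg Subtype.val this).symm
    have hcoe : Filter.Tendsto (fun n => (w n : H × H)) Filter.atTop (nhds (x : H × H)) :=
      (continuous_subtype_val.tendsto x).comp hw
    have h1 : Filter.Tendsto (fun n => ((u n : H))) Filter.atTop (nhds (u₀ : H)) := by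
      have := (continuous_fst.tendsto _).comp hcoe
      simpa [Function.comp_def, hwn, hx] using this
    have h2 : Filter.Tendsto (fun n => A (u n)) Filter.atTop (nhds (A u₀)) := by
      have := (continuous_snd.tendsto _).comp hcoe
      simpa [Function.comp_def, hwn, hx] using this
    have hF1 : Filter.Tendsto (fun n => F₁ (u n)) Filter.atTop (nhds y.1) := by
      have := (continuous_fst.tendsto y).comp hTw
      have he : (fun n => F₁ (u n)) = Prod.fst ∘ (T ∘ w) := by
        funext n; simp [Function.comp, hTz (w n)]; rfl
      rw [he]; exact this
    have hF2 : Filter.Tendsto (fun n => F₂ (u n)) Filter.atTop (nhds y.2) := by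
      have := (continuous_snd.tendsto y).comp hTw
      have he : (fun n => F₂ (u n)) = Prod.snd ∘ (T ∘ w) := by
        funext n; simp [Function.comp, hTz (w n)]; rfl
      rw [he]; exact this
    -- the key limit identity
    have key : ∀ v : A.domain,
        ⟪y.1, F₁ v⟫ - ⟪y.2, F₂ v⟫ = ⟪F₁ u₀, F₁ v⟫ - ⟪F₂ u₀, F₂ v⟫ := by
      intro v
      have hlim1 : Filter.Tendsto (fun n => ⟪F₁ (u n), F₁ v⟫ - ⟪F₂ (u n), F₂ v⟫)
          Filter.atTop (nhds (⟪y.1, F₁ v⟫ - ⟪y.2, F₂ v⟫)) :=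
        ((hF1.inner tendsto_const_nhds).sub (hF2.inner tendsto_const_nhds))
      have hlim2 : Filter.Tendsto (fun n => ⟪A (u n), (v : H)⟫ + ⟪(u n : H), A v⟫)
          Filter.atTop (nhds (⟪A u₀, (v : H)⟫ + ⟪(u₀ : H), A v⟫)) :=
        ((h2.inner tendsto_const_nhds).add (h1.inner tendsto_const_nhds))
      have heq : (fun n => ⟪F₁ (u n), F₁ v⟫ - ⟪F₂ (u n), F₂ v⟫)
          = fun n => ⟪A (u n), (v : H)⟫ + ⟪(u n : H), A v⟫ := by
        funext n; exact (hbs (u n) v).symm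
      rw [heq] at hlim1
      have := tendsto_nhds_unique hlim1 hlim2
      rw [this, hbs u₀ v]
    -- conclude `y = T x`
    obtain ⟨v₁, hv₁, hv₁'⟩ := hFsurj (y.1 - F₁ u₀) 0
    obtain ⟨v₂, hv₂, hv₂'⟩ := hFsurj 0 (y.2 - F₂ u₀)
    have e1 : y.1 = F₁ u₀ := by
      have := key v₁
      rw [hv₁, hv₁'] at this
      simp only [inner_zero_right, sub_zero] at this
      have h0 : ⟪y.1 - F₁ u₀, y.1 - F₁ u₀⟫ = 0 := by
        rw [inner_sub_left]; linarith
      exact (sub_eq_zero.mp (inner_self_eq_zero.mp h0)).symm.symm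
    have e2 : y.2 = F₂ u₀ := by
      have := key v₂
      rw [hv₂, hv₂'] at this
      simp only [inner_zero_right, zero_sub, neg_inj] at this
      have h0 : ⟪y.2 - F₂ u₀, y.2 - F₂ u₀⟫ = 0 := by
        rw [inner_sub_left]; linarith
      exact sub_eq_zero.mp (inner_self_eq_zero.mp h0)
    rw [hTz x]
    exact Prod.ext e1 e2
  -- bundle as a continuous linear map and extract the bound
  let Tc : A.graph →L[ℝ] G₁ × G₂ := ⟨T, hTcont⟩
  refine ⟨Real.sqrt 2 * ‖Tc‖, mul_nonneg (Real.sqrt_nonneg 2) (ContinuousLinearMap.opNorm_nonneg _), fun u => ?_⟩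
  set x : A.graph := φ₀ u with hx
  have hxnorm : ‖x‖ = max ‖(u : H)‖ ‖A u‖ := rfl
  have hTx : Tc x = (F₁ u, F₂ u) := hTapp u
  have hTxnorm : ‖Tc x‖ = max ‖F₁ u‖ ‖F₂ u‖ := by rw [hTx]; rfl
  have hb := Tc.le_opNorm x
  have h1 : Real.sqrt (‖F₁ u‖ ^ 2 + ‖F₂ u‖ ^ 2) ≤ Real.sqrt 2 * ‖Tc x‖ := by
    rw [hTxnorm]
    have hm : (0:ℝ) ≤ max ‖F₁ u‖ ‖F₂ u‖ := le_max_of_le_left (norm_nonneg _)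
    have : ‖F₁ u‖ ^ 2 + ‖F₂ u‖ ^ 2 ≤ 2 * (max ‖F₁ u‖ ‖F₂ u‖) ^ 2 := by
      have a1 : ‖F₁ u‖ ^ 2 ≤ (max ‖F₁ u‖ ‖F₂ u‖) ^ 2 :=
        pow_le_pow_left₀ (norm_nonneg _) (le_max_left _ _) 2
      have a2 : ‖F₂ u‖ ^ 2 ≤ (max ‖F₁ u‖ ‖F₂ u‖) ^ 2 :=
        pow_le_pow_left₀ (norm_nonneg _) (le_max_right _ _) 2
      linarith
    calc Real.sqrt (‖F₁ u‖ ^ 2 + ‖F₂ u‖ ^ 2)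
        ≤ Real.sqrt (2 * (max ‖F₁ u‖ ‖F₂ u‖) ^ 2) := Real.sqrt_le_sqrt this
      _ = Real.sqrt 2 * max ‖F₁ u‖ ‖F₂ u‖ := by
          rw [Real.sqrt_mul (by norm_num), Real.sqrt_sq hm]
  have h2 : ‖x‖ ≤ Real.sqrt (‖(u : H)‖ ^ 2 + ‖A u‖ ^ 2) := by
    rw [hxnorm]
    rcases max_cases ‖(u : H)‖ ‖A u‖ with ⟨he, _⟩ | ⟨he, _⟩ <;> rw [he]
    · have h := Real.sqrt_le_sqrt (show ‖(u : H)‖ ^ 2 ≤ ‖(u : H)‖ ^ 2 + ‖A u‖ ^ 2 by nlinarith [sq_nonneg ‖A u‖, sq_nonneg ‖(u : H)‖])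
      rwa [Real.sqrt_sq (norm_nonneg _)] at h
    · have h := Real.sqrt_le_sqrt (show ‖A u‖ ^ 2 ≤ ‖(u : H)‖ ^ 2 + ‖A u‖ ^ 2 by nlinarith [sq_nonneg ‖A u‖, sq_nonneg ‖(u : H)‖])
      rwa [Real.sqrt_sq (norm_nonneg _)] at h
  calc Real.sqrt (‖F₁ u‖ ^ 2 + ‖F₂ u‖ ^ 2) ≤ Real.sqrt 2 * ‖Tc x‖ := h1
    _ ≤ Real.sqrt 2 * (‖Tc‖ * ‖x‖) := by
        apply mul_le_mul_of_nonneg_left hb (Real.sqrt_nonneg 2)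
    _ ≤ Real.sqrt 2 * (‖Tc‖ * Real.sqrt (‖(u : H)‖ ^ 2 + ‖A u‖ ^ 2)) := by
        apply mul_le_mul_of_nonneg_left _ (Real.sqrt_nonneg 2)
        exact mul_le_mul_of_nonneg_left h2 (ContinuousLinearMap.opNorm_nonneg _)
    _ = Real.sqrt 2 * ‖Tc‖ * Real.sqrt (‖(u : H)‖ ^ 2 + ‖A u‖ ^ 2) := by ring
end

section
/- The orthogonal complement of dom(A₀) inside the Hilbert space (dom(A), ⟨·,·⟩_A) equals ker(1 − A²); that is, for u ∈ dom(A) one has ⟨u, v⟩ + ⟨Au, A₀v⟩ = 0 for all v ∈ dom(A₀) if and only if Au ∈ dom(A) and A(Au) = u. -/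
open scoped RealInnerProductSpace

/-- The orthogonal complement of `dom A₀` in `(dom A, ⟨·,·⟩_A)` equals `ker (1 - A²)`:
for `u ∈ dom A`, `⟨u, v⟩ + ⟨Au, A₀v⟩ = 0` for all `v ∈ dom A₀` iff
`Au ∈ dom A` and `A(Au) = u`. -/
theorem stmt_4 {H : Type*} [NormedAddCommGroup H] [InnerProductSpace ℝ H] [CompleteSpace H]
    (A₀ : H →ₗ.[ℝ] H) (hdense : Dense (A₀.domain : Set H)) (hclosed : A₀.IsClosed)
    (hskew : ∀ u v : A₀.domain, ⟪A₀ u, (v : H)⟫ = -⟪(u : H), A₀ v⟫)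
    (A : H →ₗ.[ℝ] H) (hA : A = -A₀.adjoint) :
    ∀ u : A.domain,
      (∀ v : A₀.domain, ⟪(u : H), (v : H)⟫ + ⟪A u, A₀ v⟫ = 0) ↔
        ∃ w : A.domain, (w : H) = A u ∧ A w = (u : H) := by
  subst hA
  intro u
  constructor
  · intro h
    have hmem : (-A₀.adjoint) u ∈ A₀.adjoint.domain := by
      apply A₀.mem_adjoint_domain_of_exists
      refine ⟨-(u : H), fun x => ?_⟩
      rw [inner_neg_left]
      linarith [h x]
    refine ⟨⟨(-A₀.adjoint) u, hmem⟩, rfl, ?_⟩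
    have hval : A₀.adjoint ⟨(-A₀.adjoint) u, hmem⟩ = -(u : H) := by
      apply LinearPMap.adjoint_apply_eq hdense
      intro x
      rw [inner_neg_left]
      linarith [h x]
    show (-A₀.adjoint) _ = _
    rw [LinearPMap.neg_apply, hval, neg_neg]
  · rintro ⟨w, hw1, hw2⟩
    intro v
    have hform := LinearPMap.adjoint_isFormalAdjoint hdense (T := A₀)
    have key : ⟪A₀.adjoint w, (v : H)⟫ = ⟪(w : H), A₀ v⟫ := hform w v
    have hw2' : A₀.adjoint w = -(u : H) := by
      have : (-A₀.adjoint) w = (u : H) := hw2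
      rw [LinearPMap.neg_apply] at this
      rw [← this, neg_neg]
    rw [hw2', hw1] at key
    have : ⟪-(u : H), (v : H)⟫ = -⟪(u : H), (v : H)⟫ := inner_neg_left _ _
    rw [this] at key
    linarith
end

section
/- Set ker(1−A) := {w ∈ dom(A) : Aw = w} and ker(1+A) := {w ∈ dom(A) : Aw = −w}. Then every u ∈ dom(A) can be written uniquely as u = u₀ + u₊ + u₋ with u₀ ∈ dom(A₀), u₊ ∈ ker(1−A) and u₋ ∈ ker(1+A); the resulting map u ↦ (u₊, u₋) is linear and onto ker(1−A) × ker(1+A); and for all u, v ∈ dom(A), writing v = v₀ + v₊ + v₋ accordingly, one has ⟨Au, v⟩ + ⟨u, Av⟩ = 2⟨u₊, v₊⟩ − 2⟨u₋, v₋⟩ = ⟨u₊, v₊⟩_A − ⟨u₋, v₋⟩_A. In particular, ((π₁, π₋₁), ker(1−A), ker(1+A)) with π₁u := u₊, π₋₁u := u₋ is a boundary system for A when ker(1−A) and ker(1+A) carry the graph inner product. -/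
open scoped RealInnerProductSpace

set_option maxHeartbeats 1000000 in
/-- The standard boundary system: every `u ∈ dom A` decomposes uniquely as
`u = u₀ + u₊ + u₋` with `u₀ ∈ dom A₀`, `Au₊ = u₊`, `Au₋ = -u₋`; the map
`u ↦ (u₊, u₋)` is linear and onto `ker(1-A) × ker(1+A)`, and
`⟨Au, v⟩ + ⟨u, Av⟩ = 2⟨u₊, v₊⟩ - 2⟨u₋, v₋⟩ = ⟨u₊, v₊⟩_A - ⟨u₋, v₋⟩_A`. -/
theorem stmt_6 {H : Type*} [NormedAddCommGroup H] [InnerProductSpace ℝ H] [CompleteSpace H]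
    (A₀ : H →ₗ.[ℝ] H) (hdense : Dense (A₀.domain : Set H)) (hclosed : A₀.IsClosed)
    (hskew : ∀ u v : A₀.domain, ⟪A₀ u, (v : H)⟫ = -⟪(u : H), A₀ v⟫)
    (A : H →ₗ.[ℝ] H) (hA : A = -A₀.adjoint) :
    ∃ pr₁ prm₁ : A.domain →ₗ[ℝ] A.domain,
      (∀ u : A.domain, A (pr₁ u) = (pr₁ u : H)) ∧
      (∀ u : A.domain, A (prm₁ u) = -(prm₁ u : H)) ∧
      (∀ u : A.domain, ((u : H) - (pr₁ u : H) - (prm₁ u : H)) ∈ A₀.domain) ∧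
      (∀ u u₀ up um : A.domain, (u₀ : H) ∈ A₀.domain → A up = (up : H) →
        A um = -(um : H) → (u : H) = (u₀ : H) + (up : H) + (um : H) →
        up = pr₁ u ∧ um = prm₁ u) ∧
      (∀ wp wm : A.domain, A wp = (wp : H) → A wm = -(wm : H) →
        ∃ u : A.domain, pr₁ u = wp ∧ prm₁ u = wm) ∧
      (∀ u v : A.domain,
        ⟪A u, (v : H)⟫ + ⟪(u : H), A v⟫
          = 2 * ⟪(pr₁ u : H), (pr₁ v : H)⟫ - 2 * ⟪(prm₁ u : H), (prm₁ v : H)⟫ ∧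
        2 * ⟪(pr₁ u : H), (pr₁ v : H)⟫ - 2 * ⟪(prm₁ u : H), (prm₁ v : H)⟫
          = (⟪(pr₁ u : H), (pr₁ v : H)⟫ + ⟪A (pr₁ u), A (pr₁ v)⟫)
            - (⟪(prm₁ u : H), (prm₁ v : H)⟫ + ⟪A (prm₁ u), A (prm₁ v)⟫)) := by
  subst hA
  set A : H →ₗ.[ℝ] H := -A₀.adjoint with hA
  -- Step 1: basic facts about A
  have hfa : A₀.IsFormalAdjoint (-A₀) := by
    intro x y
    rw [LinearPMap.neg_apply, inner_neg_right]
    exact hskew x y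
  have hle' : -A₀ ≤ A₀.adjoint := hfa.le_adjoint hdense
  have hAle : A₀ ≤ A := by
    constructor
    · exact hle'.1
    · intro x y hxy
      have : (-A₀) ⟨(x : H), x.2⟩ = A₀.adjoint ⟨(y : H), y.2⟩ := hle'.2 hxy
      rw [LinearPMap.neg_apply] at this
      show A₀ x = -(A₀.adjoint ⟨(y : H), y.2⟩)
      rw [← this]; simp
  have hAapply : ∀ (v : A.domain) (x : A₀.domain), ⟪A v, (x : H)⟫ = -⟪(v : H), A₀ x⟫ := by
    intro v x
    have h1 : A₀.adjoint ⟨(v : H), v.2⟩ = -(A v) := by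
      show A₀.adjoint ⟨(v : H), v.2⟩ = -((-A₀.adjoint) v)
      rw [LinearPMap.neg_apply, neg_neg]; rfl
    have h2 := LinearPMap.adjoint_isFormalAdjoint hdense (⟨(v : H), v.2⟩ : A₀.adjoint.domain) x
    rw [h1, inner_neg_left] at h2
    have h3 : ⟪((⟨(v : H), v.2⟩ : A₀.adjoint.domain) : H), A₀ x⟫ = ⟪(v : H), A₀ x⟫ := rfl
    rw [h3] at h2
    linarith
  have hmemA : ∀ (v w : H), (∀ x : A₀.domain, ⟪w, (x : H)⟫ = -⟪v, A₀ x⟫) →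
      ∃ hv : v ∈ A.domain, A ⟨v, hv⟩ = w := by
    intro v w hvw
    have hv : v ∈ A₀.adjoint.domain := by
      apply LinearPMap.mem_adjoint_domain_of_exists
      exact ⟨-w, fun x => by rw [inner_neg_left, hvw x, neg_neg]⟩
    have happ : A₀.adjoint ⟨v, hv⟩ = -w := by
      apply LinearPMap.adjoint_apply_eq hdense
      intro x; rw [inner_neg_left, hvw x, neg_neg]
    refine ⟨hv, ?_⟩
    show (-A₀.adjoint) ⟨v, hv⟩ = w
    rw [LinearPMap.neg_apply]
    show -(A₀.adjoint ⟨v, hv⟩) = w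
    rw [happ, neg_neg]
  -- Step 2: the graph spaces
  have hgraphA : IsClosed (A.graph : Set (H × H)) := by
    have hset : (A.graph : Set (H × H)) =
        ⋂ (p : A₀.domain), {x : H × H | ⟪x.2, (p : H)⟫ + ⟪x.1, A₀ p⟫ = 0} := by
      ext x
      simp only [Set.mem_iInter, Set.mem_setOf_eq, SetLike.mem_coe]
      constructor
      · intro hx p
        rw [LinearPMap.mem_graph_iff] at hx
        obtain ⟨y, hy1, hy2⟩ := hx
        have := hAapply y p
        rw [hy2, hy1] at this
        linarith
      · intro hx
        obtain ⟨hv, happ⟩ := hmemA x.1 x.2 (fun p => by have := hx p; linarith)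
        rw [LinearPMap.mem_graph_iff]
        exact ⟨⟨x.1, hv⟩, rfl, happ⟩
    rw [hset]
    exact isClosed_iInter fun p => isClosed_eq
      (((continuous_snd.inner continuous_const)).add
        ((continuous_fst.inner continuous_const))) continuous_const
  set E := WithLp 2 (H × H) with hE
  let Φ : E ≃ₗ[ℝ] (H × H) := WithLp.linearEquiv 2 ℝ (H × H)
  set Gs : Submodule ℝ E := A.graph.comap Φ.toLinearMap with hGs
  set G0s : Submodule ℝ E := A₀.graph.comap Φ.toLinearMap with hG0s
  have hGsc : IsClosed (Gs : Set E) :=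
    hgraphA.preimage (WithLp.prodContinuousLinearEquiv 2 ℝ H H).continuous
  have hG0c : IsClosed (G0s : Set E) :=
    hclosed.preimage (WithLp.prodContinuousLinearEquiv 2 ℝ H H).continuous
  haveI : CompleteSpace Gs := hGsc.completeSpace_coe
  set D₀ : Submodule ℝ Gs := G0s.comap Gs.subtype with hD₀
  have hD₀c : IsClosed (D₀ : Set Gs) := hG0c.preimage continuous_subtype_val
  haveI : CompleteSpace D₀ := hD₀c.completeSpace_coe
  -- Step 3: maps between dom A and the graph
  let gmap : A.domain →ₗ[ℝ] Gs :=
    { toFun := fun u => ⟨(WithLp.equiv 2 (H × H)).symm ((u : H), A u), A.mem_graph u⟩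
      map_add' := fun u v => Subtype.ext <| by
        show (WithLp.equiv 2 (H × H)).symm _ =
          (WithLp.equiv 2 (H × H)).symm _ + (WithLp.equiv 2 (H × H)).symm _
        refine Eq.trans ?_ (WithLp.toLp_add 2 _ _)
        exact congrArg _ (Prod.ext rfl (A.map_add u v))
      map_smul' := fun c u => Subtype.ext <| by
        show (WithLp.equiv 2 (H × H)).symm _ = c • (WithLp.equiv 2 (H × H)).symm _
        refine Eq.trans ?_ (WithLp.toLp_smul 2 c _)
        exact congrArg _ (Prod.ext rfl (A.map_smul c u)) }
  let cfst : Gs →ₗ[ℝ] H := (LinearMap.fst ℝ H H).comp (Φ.toLinearMap.comp Gs.subtype)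
  let csnd : Gs →ₗ[ℝ] H := (LinearMap.snd ℝ H H).comp (Φ.toLinearMap.comp Gs.subtype)
  have hcfst_g : ∀ u : A.domain, cfst (gmap u) = (u : H) := fun u => rfl
  have hcsnd_g : ∀ u : A.domain, csnd (gmap u) = A u := fun u => rfl
  have hGg : ∀ g : Gs, ∃ h1 : cfst g ∈ A.domain, A ⟨cfst g, h1⟩ = csnd g := by
    intro g
    have hg : Φ.toLinearMap (g : E) ∈ A.graph := g.2
    rw [LinearPMap.mem_graph_iff] at hg
    obtain ⟨y, h1, h2⟩ := hg
    have e1 : cfst g = (y : H) := h1.symm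
    have hm : cfst g ∈ A.domain := by rw [e1]; exact y.2
    refine ⟨hm, ?_⟩
    rw [show (⟨cfst g, hm⟩ : A.domain) = y from Subtype.ext e1]
    exact h2
  have hD₀g : ∀ d : Gs, d ∈ D₀ → ∃ h1 : cfst d ∈ A₀.domain, A₀ ⟨cfst d, h1⟩ = csnd d := by
    intro d hd
    have hd' : Φ.toLinearMap (d : E) ∈ A₀.graph := hd
    rw [LinearPMap.mem_graph_iff] at hd'
    obtain ⟨y, h1, h2⟩ := hd'
    refine ?_
    have e1 : cfst d = (y : H) := h1.symm
    have hm : cfst d ∈ A₀.domain := by rw [e1]; exact y.2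
    refine ⟨hm, ?_⟩
    rw [show (⟨cfst d, hm⟩ : A₀.domain) = y from Subtype.ext e1]
    exact h2
  have hD₀mem : ∀ (x : A₀.domain) (hx : (x : H) ∈ A.domain)
      (hax : A ⟨(x : H), hx⟩ = A₀ x), (gmap ⟨(x : H), hx⟩) ∈ D₀ := by
    intro x hx hax
    show Φ.toLinearMap ((gmap ⟨(x : H), hx⟩ : Gs) : E) ∈ A₀.graph
    rw [LinearPMap.mem_graph_iff]
    exact ⟨x, rfl, by rw [← hax]; rfl⟩
  have hinner : ∀ g k : Gs, (inner ℝ g k : ℝ) = ⟪cfst g, cfst k⟫ + ⟪csnd g, csnd k⟫ := fun g k => rfl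
  -- Step 4: projection onto D₀ and its complement
  let kmap : Gs →ₗ[ℝ] Gs :=
    LinearMap.id - D₀.subtype.comp (D₀.orthogonalProjectionOnto).toLinearMap
  have hkval : ∀ g : Gs, kmap g = g - (D₀.orthogonalProjectionOnto g : Gs) := fun g => rfl
  have hk : ∀ g : Gs, kmap g ∈ D₀ᗮ := fun g => by
    rw [hkval]; exact D₀.sub_starProjection_mem_orthogonal g
  have hkd : ∀ g : Gs, g - kmap g ∈ D₀ := fun g => by
    rw [hkval, sub_sub_cancel]; exact (D₀.orthogonalProjectionOnto g).2
  -- Step 5: characterization of D₀ᗮ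
  have horth : ∀ g : Gs, g ∈ D₀ᗮ → ∃ h2 : csnd g ∈ A.domain, A ⟨csnd g, h2⟩ = cfst g := by
    intro g hg
    apply hmemA (csnd g) (cfst g)
    intro x
    have hdg : ((x : H), A₀ x) ∈ A.graph := by
      rw [LinearPMap.mem_graph_iff]
      exact ⟨⟨(x : H), hAle.1 x.2⟩, rfl, (hAle.2 rfl).symm⟩
    set d : Gs := ⟨(WithLp.equiv 2 (H × H)).symm ((x : H), A₀ x), hdg⟩ with hd
    have hdD : d ∈ D₀ := by
      show Φ.toLinearMap (d : E) ∈ A₀.graph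
      rw [LinearPMap.mem_graph_iff]
      exact ⟨x, rfl, rfl⟩
    have h0 := (Submodule.mem_orthogonal D₀ g).mp hg d hdD
    rw [hinner] at h0
    have e1 : cfst d = (x : H) := rfl
    have e2 : csnd d = A₀ x := rfl
    rw [e1, e2] at h0
    have c1 := real_inner_comm ((x : H)) (cfst g)
    have c2 := real_inner_comm ((A₀ x : H)) (csnd g)
    linarith
  -- Step 5b: converse characterization
  have horth' : ∀ (g : Gs) (h2 : csnd g ∈ A.domain), A ⟨csnd g, h2⟩ = cfst g → g ∈ D₀ᗮ := by
    intro g h2 ha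
    rw [Submodule.mem_orthogonal]
    intro d hd
    obtain ⟨h0, hd2⟩ := hD₀g d hd
    rw [hinner]
    have h3 := hAapply ⟨csnd g, h2⟩ ⟨cfst d, h0⟩
    have e1 : ((⟨cfst d, h0⟩ : A₀.domain) : H) = cfst d := rfl
    have e2 : ((⟨csnd g, h2⟩ : A.domain) : H) = csnd g := rfl
    rw [ha, e1, e2, hd2] at h3
    have c1 := real_inner_comm (cfst d) (cfst g)
    have c2 := real_inner_comm (csnd d) (csnd g)
    linarith
  -- Step 6: the projections
  let Ylm : A.domain →ₗ[ℝ] H := cfst.comp (kmap.comp gmap)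
  let Zlm : A.domain →ₗ[ℝ] H := csnd.comp (kmap.comp gmap)
  have hY : ∀ u : A.domain, ∃ h1 : Ylm u ∈ A.domain, A ⟨Ylm u, h1⟩ = Zlm u :=
    fun u => hGg (kmap (gmap u))
  have hZ : ∀ u : A.domain, ∃ h2 : Zlm u ∈ A.domain, A ⟨Zlm u, h2⟩ = Ylm u :=
    fun u => horth _ (hk (gmap u))
  let ay : A.domain →ₗ[ℝ] A.domain := LinearMap.codRestrict A.domain Ylm fun u => (hY u).choose
  let az : A.domain →ₗ[ℝ] A.domain := LinearMap.codRestrict A.domain Zlm fun u => (hZ u).choose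
  let p1 : A.domain →ₗ[ℝ] A.domain := (2⁻¹ : ℝ) • (ay + az)
  let m1 : A.domain →ₗ[ℝ] A.domain := (2⁻¹ : ℝ) • (ay - az)
  have hAay : ∀ u : A.domain, A (ay u) = Zlm u := fun u => (hY u).choose_spec
  have hAaz : ∀ u : A.domain, A (az u) = Ylm u := fun u => (hZ u).choose_spec
  have hp1v : ∀ u : A.domain, (p1 u : H) = (2⁻¹ : ℝ) • (Ylm u + Zlm u) := fun u => rfl
  have hm1v : ∀ u : A.domain, (m1 u : H) = (2⁻¹ : ℝ) • (Ylm u - Zlm u) := fun u => rfl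
  have hp1e : ∀ u : A.domain, p1 u = (2⁻¹ : ℝ) • (ay u + az u) := fun u => rfl
  have hm1e : ∀ u : A.domain, m1 u = (2⁻¹ : ℝ) • (ay u - az u) := fun u => rfl
  -- Clause 1
  have hAp1 : ∀ u : A.domain, A (p1 u) = (p1 u : H) := by
    intro u
    calc A (p1 u) = (2⁻¹ : ℝ) • (A (ay u) + A (az u)) := by
          rw [hp1e, A.map_smul, A.map_add]
      _ = (2⁻¹ : ℝ) • (Zlm u + Ylm u) := by rw [hAay, hAaz]
      _ = (p1 u : H) := by rw [hp1v, add_comm]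
  -- Clause 2
  have hAm1 : ∀ u : A.domain, A (m1 u) = -(m1 u : H) := by
    intro u
    have hsub : A (ay u - az u) = A (ay u) - A (az u) := by
      have := A.map_add (ay u - az u) (az u)
      rw [sub_add_cancel] at this
      rw [this]; abel
    calc A (m1 u) = (2⁻¹ : ℝ) • (A (ay u) - A (az u)) := by
          rw [hm1e, A.map_smul, hsub]
      _ = (2⁻¹ : ℝ) • (Zlm u - Ylm u) := by rw [hAay, hAaz]
      _ = -(m1 u : H) := by rw [hm1v, ← smul_neg, neg_sub]
  -- Clause 3
  have hcoe_pm : ∀ u : A.domain, (p1 u : H) + (m1 u : H) = Ylm u := by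
    intro u
    rw [hp1v, hm1v]
    module
  have hdom0 : ∀ u : A.domain, ((u : H) - (p1 u : H) - (m1 u : H)) ∈ A₀.domain := by
    intro u
    have h1 : (u : H) - (p1 u : H) - (m1 u : H) = cfst (gmap u - kmap (gmap u)) := by
      rw [map_sub, sub_sub, hcoe_pm]
      rfl
    rw [h1]
    exact (hD₀g _ (hkd (gmap u))).choose
  -- Clause 4: uniqueness
  have huniq : ∀ u u₀ up um : A.domain, (u₀ : H) ∈ A₀.domain → A up = (up : H) →
      A um = -(um : H) → (u : H) = (u₀ : H) + (up : H) + (um : H) →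
      up = p1 u ∧ um = m1 u := by
    intro u u₀ up um h0 hup hum hsum
    have hsum' : u = u₀ + up + um := Subtype.ext hsum
    have hA0 : A u₀ = A₀ ⟨(u₀ : H), h0⟩ :=
      (hAle.2 (rfl : ((⟨(u₀ : H), h0⟩ : A₀.domain) : H) = (u₀ : H))).symm
    have hg0 : gmap u₀ ∈ D₀ := by
      show Φ.toLinearMap ((gmap u₀ : Gs) : E) ∈ A₀.graph
      rw [LinearPMap.mem_graph_iff]
      exact ⟨⟨(u₀ : H), h0⟩, rfl, by rw [← hA0]; rfl⟩
    have hgp : gmap up ∈ D₀ᗮ := by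
      have e : csnd (gmap up) = (up : H) := hup
      have hm : csnd (gmap up) ∈ A.domain := by rw [e]; exact up.2
      apply horth' _ hm
      rw [show (⟨csnd (gmap up), hm⟩ : A.domain) = up from Subtype.ext e, hup]
      rfl
    have hgm : gmap um ∈ D₀ᗮ := by
      have e : csnd (gmap um) = -(um : H) := hum
      have hm : csnd (gmap um) ∈ A.domain := by rw [e]; exact neg_mem um.2
      apply horth' _ hm
      rw [show (⟨csnd (gmap um), hm⟩ : A.domain) = -um from Subtype.ext e]
      have hneg : A (-um) = -(A um) := by
        have := A.map_smul (-1 : ℝ) um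
        rwa [neg_one_smul, neg_one_smul] at this
      rw [hneg, hum, neg_neg]
      rfl
    have hq : gmap up + gmap um ∈ D₀ᗮ := Submodule.add_mem _ hgp hgm
    have gdecomp : gmap u = gmap u₀ + (gmap up + gmap um) := by
      rw [hsum', map_add, map_add, add_assoc]
    have hdiff : kmap (gmap u) - (gmap up + gmap um) ∈ D₀ᗮ :=
      Submodule.sub_mem _ (hk _) hq
    have hdiff2 : kmap (gmap u) - (gmap up + gmap um) ∈ D₀ := by
      have h1 := hkd (gmap u)
      have h2 : kmap (gmap u) - (gmap up + gmap um) =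
          gmap u₀ - (gmap u - kmap (gmap u)) := by
        rw [show gmap u₀ = gmap u - (gmap up + gmap um) from by rw [gdecomp]; abel]
        abel
      rw [h2]
      exact Submodule.sub_mem _ hg0 h1
    have keq : kmap (gmap u) = gmap up + gmap um := by
      have hb := (Submodule.orthogonal_disjoint D₀).le_bot
        (Submodule.mem_inf.mpr ⟨hdiff2, hdiff⟩)
      rw [Submodule.mem_bot] at hb
      exact sub_eq_zero.mp hb
    have hYu : Ylm u = (up : H) + (um : H) := by
      show cfst (kmap (gmap u)) = _
      rw [keq, map_add]
      rfl
    have hZu : Zlm u = (up : H) - (um : H) := by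
      show csnd (kmap (gmap u)) = _
      rw [keq, map_add]
      show A up + A um = _
      rw [hup, hum]
      abel
    constructor
    · apply Subtype.ext
      show (up : H) = (p1 u : H)
      rw [hp1v, hYu, hZu]
      module
    · apply Subtype.ext
      show (um : H) = (m1 u : H)
      rw [hm1v, hYu, hZu]
      module
  -- Clause 5: surjectivity
  have hsurj : ∀ wp wm : A.domain, A wp = (wp : H) → A wm = -(wm : H) →
      ∃ u : A.domain, p1 u = wp ∧ m1 u = wm := by
    intro wp wm h1 h2
    have h0 : ((0 : A.domain) : H) ∈ A₀.domain := by
      show (0 : H) ∈ A₀.domain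
      exact zero_mem _
    have hsum : ((wp + wm : A.domain) : H) = ((0 : A.domain) : H) + (wp : H) + (wm : H) := by
      push_cast
      abel
    obtain ⟨e1, e2⟩ := huniq (wp + wm) 0 wp wm h0 h1 h2 hsum
    exact ⟨wp + wm, e1.symm, e2.symm⟩
  -- Clause 6: Green's identity
  have hB0 : ∀ (w x : A.domain), (w : H) ∈ A₀.domain →
      ⟪A w, (x : H)⟫ + ⟪(w : H), A x⟫ = 0 := by
    intro w x hw
    have hA0 : A w = A₀ ⟨(w : H), hw⟩ :=
      (hAle.2 (rfl : ((⟨(w : H), hw⟩ : A₀.domain) : H) = (w : H))).symm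
    have h1 := hAapply x ⟨(w : H), hw⟩
    have h1' : ⟪A x, (w : H)⟫ = -⟪(x : H), A w⟫ := by
      rw [hA0]; exact h1
    have c1 := real_inner_comm ((w : H)) (A x)
    have c2 := real_inner_comm (A w) ((x : H))
    linarith
  have hB0' : ∀ (x w : A.domain), (w : H) ∈ A₀.domain →
      ⟪A x, (w : H)⟫ + ⟪(x : H), A w⟫ = 0 := by
    intro x w hw
    have h1 := hB0 w x hw
    have c1 := real_inner_comm ((w : H)) (A x)
    have c2 := real_inner_comm (A w) ((x : H))
    linarith
  have hmain : ∀ u v p q m n : A.domain,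
      A p = (p : H) → A q = (q : H) → A m = -(m : H) → A n = -(n : H) →
      ((u : H) - (p : H) - (m : H)) ∈ A₀.domain →
      ((v : H) - (q : H) - (n : H)) ∈ A₀.domain →
      ⟪A u, (v : H)⟫ + ⟪(u : H), A v⟫
        = 2 * ⟪(p : H), (q : H)⟫ - 2 * ⟪(m : H), (n : H)⟫ := by
    intro u v p q m n hp hq hm hn hu0m hv0m
    set u0 : A.domain := u - p - m with hu0
    set v0 : A.domain := v - q - n with hv0
    have hu0coe : (u0 : H) = (u : H) - (p : H) - (m : H) := by rw [hu0]; push_cast; abel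
    have hv0coe : (v0 : H) = (v : H) - (q : H) - (n : H) := by rw [hv0]; push_cast; abel
    have hu0mem : (u0 : H) ∈ A₀.domain := by rw [hu0coe]; exact hu0m
    have hv0mem : (v0 : H) ∈ A₀.domain := by rw [hv0coe]; exact hv0m
    have hu' : u = u0 + p + m := by rw [hu0]; abel
    have hv' : v = v0 + q + n := by rw [hv0]; abel
    have hAu : A u = A u0 + A p + A m := by
      rw [show A u = A (u0 + p + m) from by rw [← hu'], A.map_add, A.map_add]
    have hAv : A v = A v0 + A q + A n := by
      rw [show A v = A (v0 + q + n) from by rw [← hv'], A.map_add, A.map_add]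
    have hcu : (u : H) = (u0 : H) + (p : H) + (m : H) := by rw [hu0coe]; abel
    have hcv : (v : H) = (v0 : H) + (q : H) + (n : H) := by rw [hv0coe]; abel
    have splitv : ∀ a : A.domain, ⟪A a, (v : H)⟫ + ⟪(a : H), A v⟫ =
        (⟪A a, (v0 : H)⟫ + ⟪(a : H), A v0⟫) + ((⟪A a, (q : H)⟫ + ⟪(a : H), A q⟫)
          + (⟪A a, (n : H)⟫ + ⟪(a : H), A n⟫)) := by
      intro a
      rw [hAv, hcv]
      simp only [inner_add_left, inner_add_right]
      ring
    have splitu : ⟪A u, (v : H)⟫ + ⟪(u : H), A v⟫ =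
        (⟪A u0, (v : H)⟫ + ⟪(u0 : H), A v⟫) + ((⟪A p, (v : H)⟫ + ⟪(p : H), A v⟫)
          + (⟪A m, (v : H)⟫ + ⟪(m : H), A v⟫)) := by
      rw [hAu, hcu]
      simp only [inner_add_left, inner_add_right]
      ring
    have row0 : ⟪A u0, (v : H)⟫ + ⟪(u0 : H), A v⟫ = 0 := hB0 u0 v hu0mem
    have rowp : ⟪A p, (v : H)⟫ + ⟪(p : H), A v⟫ = 2 * ⟪(p : H), (q : H)⟫ := by
      rw [splitv p]
      have t1 : ⟪A p, (v0 : H)⟫ + ⟪(p : H), A v0⟫ = 0 := hB0' p v0 hv0mem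
      have t2 : ⟪A p, (q : H)⟫ + ⟪(p : H), A q⟫ = 2 * ⟪(p : H), (q : H)⟫ := by
        rw [hp, hq]; ring
      have t3 : ⟪A p, (n : H)⟫ + ⟪(p : H), A n⟫ = 0 := by
        rw [hp, hn, inner_neg_right]; ring
      rw [t1, t2, t3]; ring
    have rowm : ⟪A m, (v : H)⟫ + ⟪(m : H), A v⟫ = -(2 * ⟪(m : H), (n : H)⟫) := by
      rw [splitv m]
      have t1 : ⟪A m, (v0 : H)⟫ + ⟪(m : H), A v0⟫ = 0 := hB0' m v0 hv0mem
      have t2 : ⟪A m, (q : H)⟫ + ⟪(m : H), A q⟫ = 0 := by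
        rw [hm, hq, inner_neg_left]; ring
      have t3 : ⟪A m, (n : H)⟫ + ⟪(m : H), A n⟫ = -(2 * ⟪(m : H), (n : H)⟫) := by
        rw [hm, hn, inner_neg_left, inner_neg_right]; ring
      rw [t1, t2, t3]; ring
    rw [splitu, row0, rowp, rowm]
    ring
  refine ⟨p1, m1, hAp1, hAm1, hdom0, huniq, hsurj, ?_⟩
  intro u v
  constructor
  · exact hmain u v (p1 u) (p1 v) (m1 u) (m1 v) (hAp1 u) (hAp1 v) (hAm1 u) (hAm1 v)
      (hdom0 u) (hdom0 v)
  · rw [hAp1 u, hAp1 v, hAm1 u, hAm1 v, inner_neg_left, inner_neg_right]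
    ring
end

section
/- Let (F, G₁, G₂) be a boundary system for A and let B ⊆ A be a restriction of A. Then B is accretive if and only if there exists a 1-Lipschitz mapping g : G₁ → G₂ (i.e. ‖g(x) − g(y)‖ ≤ ‖x − y‖ for all x, y ∈ G₁) such that dom(B) ⊆ {u ∈ dom(A) : g(F₁u) = F₂u}. -/
open scoped RealInnerProductSpace
open Metric Filter Set

section Kirszbraun

variable {E : Type*} {F : Type*} [NormedAddCommGroup E] [InnerProductSpace ℝ E]
  [NormedAddCommGroup F] [InnerProductSpace ℝ F]

lemma double_sum_id {ι : Type*} (S : Finset ι) (w : ι → ℝ) (u : ι → F) :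
    ∑ z ∈ S, ∑ z' ∈ S, (w z * w z') * ‖u z - u z'‖ ^ 2
      = 2 * (∑ z ∈ S, w z) * (∑ z ∈ S, w z * ‖u z‖ ^ 2)
        - 2 * ‖∑ z ∈ S, w z • u z‖ ^ 2 := by
  have h2 : ∑ z ∈ S, ∑ z' ∈ S, (w z * w z') * ⟪u z, u z'⟫
      = ‖∑ z ∈ S, w z • u z‖ ^ 2 := by
    rw [← real_inner_self_eq_norm_sq, sum_inner]
    refine Finset.sum_congr rfl fun z _ => ?_
    rw [real_inner_smul_left, inner_sum, Finset.mul_sum]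
    refine Finset.sum_congr rfl fun z' _ => ?_
    rw [real_inner_smul_right]; ring
  have t1 : ∑ z ∈ S, ∑ z' ∈ S, (w z * w z') * ‖u z‖ ^ 2
      = (∑ z ∈ S, w z * ‖u z‖ ^ 2) * (∑ z ∈ S, w z) := by
    rw [Finset.sum_mul_sum]
    exact Finset.sum_congr rfl fun z _ => Finset.sum_congr rfl fun z' _ => by ring
  have t3 : ∑ z ∈ S, ∑ z' ∈ S, (w z * w z') * ‖u z'‖ ^ 2
      = (∑ z ∈ S, w z) * (∑ z ∈ S, w z * ‖u z‖ ^ 2) := by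
    rw [Finset.sum_mul_sum]
    exact Finset.sum_congr rfl fun z _ => Finset.sum_congr rfl fun z' _ => by ring
  have expand : ∑ z ∈ S, ∑ z' ∈ S, (w z * w z') * ‖u z - u z'‖ ^ 2
      = ∑ z ∈ S, ∑ z' ∈ S, ((w z * w z') * ‖u z‖ ^ 2
          - 2 * ((w z * w z') * ⟪u z, u z'⟫) + (w z * w z') * ‖u z'‖ ^ 2) := by
    refine Finset.sum_congr rfl fun z _ => Finset.sum_congr rfl fun z' _ => ?_
    rw [norm_sub_sq_real]; ring
  rw [expand]
  simp only [Finset.sum_add_distrib, Finset.sum_sub_distrib, ← Finset.mul_sum]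
  rw [t1, t3, h2]
  ring

set_option maxHeartbeats 1000000 in
lemma kirszbraun_finset (R : Finset (E × F))
    (hR : ∀ p ∈ R, ∀ q ∈ R, ‖p.2 - q.2‖ ≤ ‖p.1 - q.1‖) (x : E) :
    ∃ y : F, ∀ p ∈ R, ‖y - p.2‖ ≤ ‖x - p.1‖ := by
  classical
  rcases R.eq_empty_or_nonempty with rfl | hRe
  · exact ⟨0, by simp⟩
  -- the finite-dimensional subspace where we minimize
  set V : Submodule ℝ F := Submodule.span ℝ (Prod.snd '' (R : Set (E × F))) with hV
  haveI : FiniteDimensional ℝ V :=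
    FiniteDimensional.span_of_finite ℝ (R.finite_toSet.image _)
  -- the functional to minimize
  set φ : F → ℝ := fun y => R.sup' hRe (fun p => ‖y - p.2‖ - ‖x - p.1‖) with hφ
  have hle : ∀ y : F, ∀ p ∈ R, ‖y - p.2‖ - ‖x - p.1‖ ≤ φ y :=
    fun y p hp => Finset.le_sup' (fun p => ‖y - p.2‖ - ‖x - p.1‖) hp
  have hφle : ∀ y y' : F, φ y ≤ φ y' + ‖y - y'‖ := by
    intro y y'
    refine Finset.sup'_le _ _ fun p hp => ?_
    have h1 : ‖y - p.2‖ ≤ ‖y' - p.2‖ + ‖y - y'‖ := by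
      have h0 : y - p.2 = (y' - p.2) + (y - y') := by abel
      rw [h0]
      exact norm_add_le _ _
    have := hle y' p hp
    linarith
  have hφcont : Continuous φ := by
    have : LipschitzWith 1 φ := by
      refine LipschitzWith.of_dist_le_mul fun y y' => ?_
      rw [NNReal.coe_one, one_mul, Real.dist_eq, abs_le]
      constructor
      · have := hφle y' y
        rw [norm_sub_rev] at this
        rw [dist_eq_norm]; linarith
      · have := hφle y y'
        rw [dist_eq_norm]; linarith
    exact this.continuous
  -- minimize over V
  obtain ⟨y₀, hy₀⟩ : ∃ y₀ : V, ∀ z : V, φ y₀ ≤ φ z := by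
    have hc : Continuous (fun z : V => φ z) := hφcont.comp continuous_subtype_val
    have hcoer : Tendsto (fun z : V => φ z) (cocompact V) atTop := by
      obtain ⟨p₀, hp₀⟩ := hRe
      have hb : ∀ z : V, ‖(z : F)‖ - (‖p₀.2‖ + ‖x - p₀.1‖) ≤ φ z := by
        intro z
        have h1 := hle z p₀ hp₀
        have h2 : ‖(z : F)‖ - ‖p₀.2‖ ≤ ‖(z : F) - p₀.2‖ := norm_sub_norm_le _ _
        linarith
      have hnorm : Tendsto (fun z : V => ‖(z : F)‖ - (‖p₀.2‖ + ‖x - p₀.1‖))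
          (cocompact V) atTop := by
        have : Tendsto (fun z : V => ‖z‖) (cocompact V) atTop :=
          tendsto_norm_cocompact_atTop
        exact tendsto_atTop_add_const_right _ _ this
      exact tendsto_atTop_mono hb hnorm
    exact hc.exists_forall_le hcoer
  set m : ℝ := φ y₀ with hm
  by_cases hm0 : m ≤ 0
  · refine ⟨y₀, fun p hp => ?_⟩
    have := hle y₀ p hp
    linarith
  push_neg at hm0
  exfalso
  -- active set
  set T : Finset (E × F) := R.filter (fun p => ‖(y₀ : F) - p.2‖ - ‖x - p.1‖ = m) with hT
  have hTR : T ⊆ R := Finset.filter_subset _ _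
  have hTne : T.Nonempty := by
    obtain ⟨p, hp, hpe⟩ := Finset.exists_mem_eq_sup' hRe (fun p => ‖(y₀ : F) - p.2‖ - ‖x - p.1‖)
    exact ⟨p, Finset.mem_filter.2 ⟨hp, hpe.symm⟩⟩
  -- y₀ lies in the convex hull of the active values
  have hhull : (y₀ : F) ∈ convexHull ℝ (Prod.snd '' (T : Set (E × F))) := by
    by_contra hnot
    set K : Set F := convexHull ℝ (Prod.snd '' (T : Set (E × F))) with hK
    have hKconv : Convex ℝ K := convex_convexHull _ _
    have hKcomp : IsCompact K := (T.finite_toSet.image _).isCompact_convexHull ℝ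
    have hKne : K.Nonempty := by
      obtain ⟨p, hp⟩ := hTne
      exact ⟨p.2, subset_convexHull _ _ ⟨p, hp, rfl⟩⟩
    obtain ⟨pr, hprK, hprmin⟩ :=
      exists_norm_eq_iInf_of_complete_convex hKne hKcomp.isComplete hKconv (y₀ : F)
    have hsep0 : ∀ w ∈ K, ⟪(y₀ : F) - pr, w - pr⟫ ≤ 0 :=
      (norm_eq_iInf_iff_real_inner_le_zero hKconv hprK).1 hprmin
    set v : F := pr - (y₀ : F) with hv
    have hvne : v ≠ 0 := by
      intro h
      apply hnot
      have : pr = (y₀ : F) := by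
        have := sub_eq_zero.1 h
        exact this
      rwa [← this]
    have hvpos : (0 : ℝ) < ‖v‖ := norm_pos_iff.2 hvne
    have hsep : ∀ w ∈ K, ‖v‖ ^ 2 ≤ ⟪v, w - (y₀ : F)⟫ := by
      intro w hw
      have h0 := hsep0 w hw
      have : ⟪v, w - (y₀ : F)⟫ = ⟪v, w - pr⟫ + ⟪v, v⟫ := by
        rw [← inner_add_right]
        congr 1
        rw [hv]
        abel
      rw [this, real_inner_self_eq_norm_sq]
      have : (0 : ℝ) ≤ ⟪v, w - pr⟫ := by
        have : ⟪v, w - pr⟫ = -⟪(y₀ : F) - pr, w - pr⟫ := by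
          rw [← inner_neg_left]; congr 1; rw [hv]; abel
        rw [this]; linarith
      linarith
    -- v belongs to V
    have hKV : K ⊆ (V : Set F) := by
      refine convexHull_min ?_ (V.convex)
      rintro _ ⟨p, hp, rfl⟩
      exact Submodule.subset_span ⟨p, hTR hp, rfl⟩
    have hvV : v ∈ V := by
      have h1 : pr ∈ V := hKV hprK
      exact V.sub_mem h1 y₀.2
    -- gap of inactive constraints
    set η : ℝ := if h : (R \ T).Nonempty
      then m - (R \ T).sup' h (fun p => ‖(y₀ : F) - p.2‖ - ‖x - p.1‖) else 1 with hη
    have hηpos : 0 < η := by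
      rw [hη]
      split_ifs with h
      · rw [sub_pos]
        obtain ⟨p, hp, hpe⟩ := Finset.exists_mem_eq_sup' h
          (fun p => ‖(y₀ : F) - p.2‖ - ‖x - p.1‖)
        rw [hpe]
        rcases Finset.mem_sdiff.1 hp with ⟨hpR, hpT⟩
        have hlt : ‖(y₀ : F) - p.2‖ - ‖x - p.1‖ ≠ m := by
          intro hcontra
          exact hpT (Finset.mem_filter.2 ⟨hpR, hcontra⟩)
        have := hle y₀ p hpR
        exact lt_of_le_of_ne this hlt
      · exact one_pos
    set δ : ℝ := min 1 (η / (2 * ‖v‖)) with hδ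
    have hδpos : 0 < δ := lt_min one_pos (div_pos hηpos (by positivity))
    have hδ1 : δ ≤ 1 := min_le_left _ _
    have hδη : δ * ‖v‖ < η := by
      have h1 : δ ≤ η / (2 * ‖v‖) := min_le_right _ _
      have hv0 : (‖v‖ : ℝ) ≠ 0 := ne_of_gt hvpos
      have h2 : η / (2 * ‖v‖) * ‖v‖ = η / 2 := by field_simp
      have h3 := mul_le_mul_of_nonneg_right h1 (norm_nonneg v)
      linarith
    -- the new point
    set y₁ : F := (y₀ : F) + δ • v with hy₁
    have hy₁V : y₁ ∈ V := V.add_mem y₀.2 (V.smul_mem _ hvV)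
    have hmin : m ≤ φ y₁ := hy₀ ⟨y₁, hy₁V⟩
    -- but φ y₁ < m
    have hlt : φ y₁ < m := by
      obtain ⟨p, hp, hpe⟩ := Finset.exists_mem_eq_sup' hRe
        (fun q => ‖y₁ - q.2‖ - ‖x - q.1‖)
      rw [show φ y₁ = ‖y₁ - p.2‖ - ‖x - p.1‖ from hpe]
      by_cases hpT : p ∈ T
      · -- active constraint strictly decreases
        have hact : ‖(y₀ : F) - p.2‖ - ‖x - p.1‖ = m := (Finset.mem_filter.1 hpT).2
        have hKmem : p.2 ∈ K := subset_convexHull _ _ ⟨p, hpT, rfl⟩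
        have hs := hsep p.2 hKmem
        have hnormsq : ‖y₁ - p.2‖ ^ 2 ≤ ‖(y₀ : F) - p.2‖ ^ 2 - δ * ‖v‖ ^ 2 := by
          have hexp : ‖y₁ - p.2‖ ^ 2
              = ‖(y₀ : F) - p.2‖ ^ 2 - 2 * δ * ⟪v, p.2 - (y₀ : F)⟫ + δ ^ 2 * ‖v‖ ^ 2 := by
            have : y₁ - p.2 = ((y₀ : F) - p.2) + δ • v := by rw [hy₁]; abel
            rw [this, norm_add_sq_real, real_inner_smul_right, norm_smul]
            have : ⟪(y₀ : F) - p.2, v⟫ = -⟪v, p.2 - (y₀ : F)⟫ := by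
              rw [real_inner_comm, ← inner_neg_right]
              congr 1; abel
            rw [this]
            simp [Real.norm_eq_abs, abs_of_pos hδpos]
            ring
          rw [hexp]
          have hh1 : δ * ‖v‖ ^ 2 ≤ δ * ⟪v, p.2 - (y₀ : F)⟫ :=
            mul_le_mul_of_nonneg_left hs hδpos.le
          have hh2 : δ ^ 2 * ‖v‖ ^ 2 ≤ δ * ‖v‖ ^ 2 := by
            have : δ ^ 2 ≤ δ := by nlinarith
            nlinarith [sq_nonneg ‖v‖]
          linarith
        have hold : 0 < ‖(y₀ : F) - p.2‖ := by
          nlinarith [norm_nonneg ((y₀ : F) - p.2), norm_nonneg (x - p.1)]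
        have hlt2 : ‖y₁ - p.2‖ < ‖(y₀ : F) - p.2‖ := by
          by_contra hge
          push_neg at hge
          have hsq : ‖(y₀ : F) - p.2‖ ^ 2 ≤ ‖y₁ - p.2‖ ^ 2 := by nlinarith
          have : 0 < δ * ‖v‖ ^ 2 := mul_pos hδpos (pow_pos hvpos 2)
          linarith
        linarith
      · -- inactive constraint stays below m
        have hpRT : p ∈ R \ T := Finset.mem_sdiff.2 ⟨hp, hpT⟩
        have hRTne : (R \ T).Nonempty := ⟨p, hpRT⟩
        have hval : ‖(y₀ : F) - p.2‖ - ‖x - p.1‖ ≤ m - η := by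
          rw [hη, dif_pos hRTne]
          have := Finset.le_sup' (fun q => ‖(y₀ : F) - q.2‖ - ‖x - q.1‖) hpRT
          linarith
        have htri : ‖y₁ - p.2‖ ≤ ‖(y₀ : F) - p.2‖ + δ * ‖v‖ := by
          have : y₁ - p.2 = ((y₀ : F) - p.2) + δ • v := by rw [hy₁]; abel
          rw [this]
          calc ‖((y₀ : F) - p.2) + δ • v‖ ≤ ‖(y₀ : F) - p.2‖ + ‖δ • v‖ := norm_add_le _ _
            _ = ‖(y₀ : F) - p.2‖ + δ * ‖v‖ := by
                rw [norm_smul, Real.norm_eq_abs, abs_of_pos hδpos]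
        linarith
    linarith
  -- extract convex combination and derive the contradiction
  rw [← Finset.coe_image, Finset.convexHull_eq] at hhull
  obtain ⟨w, hw0, hw1, hwc⟩ := hhull
  set S : Finset F := T.image Prod.snd with hS
  rw [Finset.centerMass_eq_of_sum_1 _ _ hw1] at hwc
  simp only [id] at hwc
  have hex : ∀ z ∈ S, ∃ p, p ∈ T ∧ p.2 = z := by
    intro z hz
    obtain ⟨p, hp, hpz⟩ := Finset.mem_image.1 hz
    exact ⟨p, hp, hpz⟩
  set q : F → E × F := fun z => if h : ∃ p, p ∈ T ∧ p.2 = z then h.choose else (x, z) with hq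
  have hqT : ∀ z ∈ S, q z ∈ T ∧ (q z).2 = z := by
    intro z hz
    have h := hex z hz
    rw [hq]; simp only [dif_pos h]
    exact h.choose_spec
  set r : F → ℝ := fun z => ‖x - (q z).1‖ with hr
  have hrnn : ∀ z, 0 ≤ r z := fun z => norm_nonneg _
  have hact2 : ∀ z ∈ S, ‖z - (y₀ : F)‖ = m + r z := by
    intro z hz
    obtain ⟨hqz, hq2⟩ := hqT z hz
    have h3 := (Finset.mem_filter.1 hqz).2
    rw [hq2] at h3
    rw [norm_sub_rev]
    have : r z = ‖x - (q z).1‖ := rfl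
    linarith
  have hlip : ∀ z ∈ S, ∀ z' ∈ S, ‖z - z'‖ ≤ ‖(q z).1 - (q z').1‖ := by
    intro z hz z' hz'
    obtain ⟨hqz, hq2⟩ := hqT z hz
    obtain ⟨hqz', hq2'⟩ := hqT z' hz'
    have := hR (q z) (hTR hqz) (q z') (hTR hqz')
    rwa [hq2, hq2'] at this
  have hid1 := double_sum_id S w (fun z => z - (y₀ : F))
  have hid2 := double_sum_id S w (fun z => (q z).1 - x)
  simp only [sub_sub_sub_cancel_right] at hid1 hid2
  have hzero : ∑ z ∈ S, w z • (z - (y₀ : F)) = 0 := by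
    have h4 : ∑ z ∈ S, w z • (z - (y₀ : F))
        = (∑ z ∈ S, w z • z) - (∑ z ∈ S, w z) • (y₀ : F) := by
      rw [Finset.sum_smul, ← Finset.sum_sub_distrib]
      exact Finset.sum_congr rfl fun z _ => smul_sub _ _ _
    rw [h4, hwc, hw1, one_smul, sub_self]
  rw [hzero, hw1] at hid1
  simp only [norm_zero] at hid1
  have hmono : ∑ z ∈ S, ∑ z' ∈ S, (w z * w z') * ‖z - z'‖ ^ 2
      ≤ ∑ z ∈ S, ∑ z' ∈ S, (w z * w z') * ‖(q z).1 - (q z').1‖ ^ 2 := by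
    refine Finset.sum_le_sum fun z hz => Finset.sum_le_sum fun z' hz' => ?_
    have h1 := hlip z hz z' hz'
    have hcoeff : 0 ≤ w z * w z' := mul_nonneg (hw0 z hz) (hw0 z' hz')
    have h2 : ‖z - z'‖ ^ 2 ≤ ‖(q z).1 - (q z').1‖ ^ 2 := by
      nlinarith [norm_nonneg (z - z')]
    exact mul_le_mul_of_nonneg_left h2 hcoeff
  have hsumA : ∑ z ∈ S, w z * ‖z - (y₀ : F)‖ ^ 2 = ∑ z ∈ S, w z * (m + r z) ^ 2 := by
    refine Finset.sum_congr rfl fun z hz => ?_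
    rw [hact2 z hz]
  have hsumB : ∑ z ∈ S, w z * ‖(q z).1 - x‖ ^ 2 = ∑ z ∈ S, w z * (r z) ^ 2 := by
    refine Finset.sum_congr rfl fun z hz => ?_
    rw [norm_sub_rev]
  rw [hsumA] at hid1
  rw [hw1, hsumB] at hid2
  have hnn : (0 : ℝ) ≤ ‖∑ z ∈ S, w z • ((q z).1 - x)‖ ^ 2 := sq_nonneg _
  -- 2 ∑ w (m+r)² ≤ 2 ∑ w r²
  have hkey : ∑ z ∈ S, w z * (m + r z) ^ 2 ≤ ∑ z ∈ S, w z * (r z) ^ 2 := by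
    have h0 : (0:ℝ) ^ 2 = 0 := by norm_num
    rw [h0] at hid1
    linarith
  have hterm : ∑ z ∈ S, w z * m ^ 2
      ≤ ∑ z ∈ S, (w z * (m + r z) ^ 2 - w z * (r z) ^ 2) := by
    refine Finset.sum_le_sum fun z hz => ?_
    have h5 : 0 ≤ w z * (m * r z) :=
      mul_nonneg (hw0 z hz) (mul_nonneg hm0.le (hrnn z))
    nlinarith [h5]
  rw [Finset.sum_sub_distrib] at hterm
  have hm2 : ∑ z ∈ S, w z * m ^ 2 = m ^ 2 := by
    rw [← Finset.sum_mul, hw1, one_mul]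
  have hfin : m ^ 2 ≤ 0 := by linarith
  have : (0:ℝ) < m ^ 2 := pow_pos hm0 2
  linarith

lemma kirszbraun_ball [CompleteSpace F] (R : Set (E × F))
    (hR : ∀ p ∈ R, ∀ q ∈ R, ‖p.2 - q.2‖ ≤ ‖p.1 - q.1‖) (x : E) :
    ∃ y : F, ∀ p ∈ R, ‖y - p.2‖ ≤ ‖x - p.1‖ := by
  classical
  rcases R.eq_empty_or_nonempty with rfl | ⟨p₀, hp₀⟩
  · exact ⟨0, by simp⟩
  set D := InnerProductSpace.toDual ℝ F with hD
  set K : Set (WeakDual ℝ F) :=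
    WeakDual.toStrongDual ⁻¹' Metric.closedBall (D p₀.2) ‖x - p₀.1‖ with hK
  set Z : R → Set (WeakDual ℝ F) := fun p =>
    WeakDual.toStrongDual ⁻¹' Metric.closedBall (D (p : E × F).2) ‖x - (p : E × F).1‖ with hZ
  have hKc : IsCompact K := by
    rw [hK]; exact WeakDual.isCompact_closedBall (𝕜 := ℝ) _ _
  have hZc : ∀ p, IsClosed (Z p) := fun p => WeakDual.isClosed_closedBall _ _
  have hne : (K ∩ ⋂ p, Z p).Nonempty := by
    rw [Set.nonempty_iff_ne_empty]
    intro hempty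
    obtain ⟨Tf, hTf⟩ := hKc.elim_finite_subfamily_closed Z hZc hempty
    set R' : Finset (E × F) := insert p₀ (Tf.image Subtype.val) with hR'
    have hR'sub : ∀ p ∈ R', p ∈ R := by
      intro p hp
      rcases Finset.mem_insert.1 hp with h | h
      · rw [h]; exact hp₀
      · obtain ⟨q, _, rfl⟩ := Finset.mem_image.1 h
        exact q.property
    obtain ⟨y, hy⟩ := kirszbraun_finset R'
      (fun p hp q hq => hR p (hR'sub p hp) q (hR'sub q hq)) x
    have hball : ∀ p ∈ R', StrongDual.toWeakDual (D y) ∈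
        WeakDual.toStrongDual ⁻¹' Metric.closedBall (D p.2) ‖x - p.1‖ := by
      intro p hp
      simp only [Set.mem_preimage]
      have : WeakDual.toStrongDual (StrongDual.toWeakDual (D y)) = D y :=
        LinearEquiv.symm_apply_apply _ _
      rw [this, Metric.mem_closedBall, LinearIsometryEquiv.dist_map, dist_eq_norm]
      exact hy p hp
    have hmem : StrongDual.toWeakDual (D y) ∈ K ∩ ⋂ p ∈ Tf, Z p := by
      constructor
      · exact hball p₀ (Finset.mem_insert_self _ _)
      · refine Set.mem_iInter₂.2 fun p hp => ?_
        exact hball (p : E × F)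
          (Finset.mem_insert_of_mem (Finset.mem_image_of_mem Subtype.val hp))
    rw [hTf] at hmem
    exact hmem
  obtain ⟨φ, hφK, hφZ⟩ := hne
  refine ⟨D.symm (WeakDual.toStrongDual φ), fun p hp => ?_⟩
  have h1 : φ ∈ Z ⟨p, hp⟩ := Set.mem_iInter.1 hφZ ⟨p, hp⟩
  simp only [hZ, Set.mem_preimage, Metric.mem_closedBall] at h1
  have h2 : WeakDual.toStrongDual φ = D (D.symm (WeakDual.toStrongDual φ)) :=
    (LinearIsometryEquiv.apply_symm_apply _ _).symm
  rw [h2, LinearIsometryEquiv.dist_map, dist_eq_norm] at h1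
  exact h1

lemma kirszbraun_graph [CompleteSpace F] (R : Set (E × F))
    (hR : ∀ p ∈ R, ∀ q ∈ R, ‖p.2 - q.2‖ ≤ ‖p.1 - q.1‖) :
    ∃ g : E → F, (∀ a b : E, ‖g a - g b‖ ≤ ‖a - b‖) ∧ ∀ p ∈ R, g p.1 = p.2 := by
  classical
  set 𝒮 : Set (Set (E × F)) :=
    {M | R ⊆ M ∧ ∀ p ∈ M, ∀ q ∈ M, ‖p.2 - q.2‖ ≤ ‖p.1 - q.1‖} with h𝒮
  obtain ⟨M, hRM, hMmax⟩ := zorn_subset_nonempty 𝒮 (by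
    intro c hc hchain hcne
    refine ⟨⋃₀ c, ⟨?_, ?_⟩, fun s hs => subset_sUnion_of_mem hs⟩
    · obtain ⟨s, hs⟩ := hcne
      exact (hc hs).1.trans (subset_sUnion_of_mem hs)
    · rintro p ⟨s, hs, hps⟩ q ⟨t, ht, hqt⟩
      rcases hchain.total hs ht with hst | hts
      · exact (hc ht).2 p (hst hps) q hqt
      · exact (hc hs).2 p hps q (hts hqt)) R ⟨Set.Subset.rfl, hR⟩
  have hM𝒮 : M ∈ 𝒮 := hMmax.prop
  have htot : ∀ a : E, ∃ b : F, (a, b) ∈ M := by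
    intro a
    obtain ⟨y, hy⟩ := kirszbraun_ball M hM𝒮.2 a
    refine ⟨y, ?_⟩
    have hM' : insert (a, y) M ∈ 𝒮 := by
      refine ⟨hM𝒮.1.trans (Set.subset_insert _ _), ?_⟩
      rintro p hp q hq
      rcases Set.mem_insert_iff.1 hp with rfl | hp <;>
        rcases Set.mem_insert_iff.1 hq with rfl | hq
      · simp
      · exact hy q hq
      · rw [norm_sub_rev, norm_sub_rev p.1]
        exact hy p hp
      · exact hM𝒮.2 p hp q hq
    have hsub : insert (a, y) M ⊆ M := hMmax.2 hM' (Set.subset_insert _ _)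
    exact hsub (Set.mem_insert _ _)
  have hsingle : ∀ a : E, ∀ b b' : F, (a, b) ∈ M → (a, b') ∈ M → b = b' := by
    intro a b b' h1 h2
    have := hM𝒮.2 (a, b) h1 (a, b') h2
    simp only [sub_self, norm_zero] at this
    rw [← sub_eq_zero]
    exact norm_le_zero_iff.1 this
  choose g hg using htot
  refine ⟨g, fun a b => hM𝒮.2 (a, g a) (hg a) (b, g b) (hg b), fun p hp => ?_⟩
  exact hsingle p.1 (g p.1) p.2 (hg p.1) (by simpa using hRM hp)

end Kirszbraun

/-- A restriction `B ⊆ A` is accretive iff there is a `1`-Lipschitz map `g : G₁ → G₂`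
with `dom B ⊆ {u ∈ dom A : g (F₁ u) = F₂ u}`. -/
theorem stmt_7 {H : Type*} [NormedAddCommGroup H] [InnerProductSpace ℝ H] [CompleteSpace H]
    {G₁ G₂ : Type*} [NormedAddCommGroup G₁] [InnerProductSpace ℝ G₁] [CompleteSpace G₁]
    [NormedAddCommGroup G₂] [InnerProductSpace ℝ G₂] [CompleteSpace G₂]
    (A₀ : H →ₗ.[ℝ] H) (hdense : Dense (A₀.domain : Set H)) (hclosed : A₀.IsClosed)
    (hskew : ∀ u v : A₀.domain, ⟪A₀ u, (v : H)⟫ = -⟪(u : H), A₀ v⟫)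
    (A : H →ₗ.[ℝ] H) (hA : A = -A₀.adjoint)
    (F₁ : A.domain →ₗ[ℝ] G₁) (F₂ : A.domain →ₗ[ℝ] G₂)
    (hFsurj : ∀ (g₁ : G₁) (g₂ : G₂), ∃ u : A.domain, F₁ u = g₁ ∧ F₂ u = g₂)
    (hbs : ∀ u v : A.domain,
      ⟪A u, (v : H)⟫ + ⟪(u : H), A v⟫ = ⟪F₁ u, F₁ v⟫ - ⟪F₂ u, F₂ v⟫)
    (domB : Set A.domain) :
    (∀ u ∈ domB, ∀ v ∈ domB, 0 ≤ ⟪A u - A v, (u : H) - (v : H)⟫) ↔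
      ∃ g : G₁ → G₂, (∀ x y : G₁, ‖g x - g y‖ ≤ ‖x - y‖) ∧
        ∀ u ∈ domB, g (F₁ u) = F₂ u := by
  have key : ∀ u v : A.domain, 2 * ⟪A u - A v, (u : H) - (v : H)⟫
      = ‖F₁ u - F₁ v‖ ^ 2 - ‖F₂ u - F₂ v‖ ^ 2 := by
    intro u v
    have h := hbs (u - v) (u - v)
    rw [A.map_sub, F₁.map_sub, F₂.map_sub] at h
    have hcoe : ((u - v : A.domain) : H) = (u : H) - (v : H) := rfl
    rw [hcoe] at h
    rw [real_inner_self_eq_norm_sq, real_inner_self_eq_norm_sq] at h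
    have hsym : ⟪(u : H) - (v : H), A u - A v⟫ = ⟪A u - A v, (u : H) - (v : H)⟫ :=
      real_inner_comm _ _
    linarith
  constructor
  · intro hacc
    set R : Set (G₁ × G₂) := (fun u => (F₁ u, F₂ u)) '' domB with hR
    have hRlip : ∀ p ∈ R, ∀ q ∈ R, ‖p.2 - q.2‖ ≤ ‖p.1 - q.1‖ := by
      rintro _ ⟨u, hu, rfl⟩ _ ⟨v, hv, rfl⟩
      have h1 := hacc u hu v hv
      have h2 := key u v
      simp only at h2 ⊢
      nlinarith [norm_nonneg (F₁ u - F₁ v), norm_nonneg (F₂ u - F₂ v)]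
    obtain ⟨g, hg1, hg2⟩ := kirszbraun_graph R hRlip
    exact ⟨g, hg1, fun u hu => hg2 (F₁ u, F₂ u) ⟨u, hu, rfl⟩⟩
  · rintro ⟨g, hg1, hg2⟩ u hu v hv
    have h1 := key u v
    have h2 : ‖F₂ u - F₂ v‖ ≤ ‖F₁ u - F₁ v‖ := by
      rw [← hg2 u hu, ← hg2 v hv]
      exact hg1 _ _
    nlinarith [norm_nonneg (F₂ u - F₂ v)]
end

section
/- Let (F, G₁, G₂) be a boundary system for A and let B ⊆ A be an m-accretive restriction of A. Then there exists a 1-Lipschitz mapping g : G₁ → G₂ such that dom(B) = {u ∈ dom(A) : g(F₁u) = F₂u}. -/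
open scoped RealInnerProductSpace

private lemma exists_proj {K : Type*} [NormedAddCommGroup K] [InnerProductSpace ℝ K]
    {C : Set K} (hne : C.Nonempty) (hcomp : IsComplete C) (hconv : Convex ℝ C) (u : K) :
    ∃ v ∈ C, (∀ w ∈ C, ⟪u - v, w - v⟫ ≤ 0) ∧ ∀ w ∈ C, ‖u - v‖ ≤ ‖u - w‖ := by
  obtain ⟨v, hvC, hv⟩ := exists_norm_eq_iInf_of_complete_convex hne hcomp hconv u
  refine ⟨v, hvC, (norm_eq_iInf_iff_real_inner_le_zero hconv hvC).1 hv, fun w hw => ?_⟩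
  rw [hv]
  exact ciInf_le ⟨0, Set.forall_mem_range.2 fun _ => norm_nonneg _⟩ (⟨w, hw⟩ : C)

private lemma inner_sum_sum {K : Type*} [NormedAddCommGroup K] [InnerProductSpace ℝ K]
    {ι : Type*} (t : Finset ι) (w : ι → ℝ) (c : ι → K) :
    ⟪∑ i ∈ t, w i • c i, ∑ j ∈ t, w j • c j⟫ = ∑ i ∈ t, ∑ j ∈ t, w i * w j * ⟪c i, c j⟫ := by
  rw [sum_inner]
  refine Finset.sum_congr rfl fun i _ => ?_
  rw [inner_sum]
  refine Finset.sum_congr rfl fun j _ => ?_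
  rw [real_inner_smul_left, real_inner_smul_right]; ring

private lemma kirszbraun_finset_s8 {G K : Type*} [NormedAddCommGroup G] [InnerProductSpace ℝ G]
    [NormedAddCommGroup K] [InnerProductSpace ℝ K] {ι : Type*}
    (a : ι → G) (b : ι → K) (hab : ∀ i j, ‖b i - b j‖ ≤ ‖a i - a j‖) (x : G)
    (s : Finset ι) (hs : s.Nonempty) :
    ∃ y : K, ∀ i ∈ s, ‖y - b i‖ ≤ ‖x - a i‖ := by
  classical
  have hfc : Continuous (fun y : K => s.sup' hs fun i => ‖y - b i‖ ^ 2 - ‖x - a i‖ ^ 2) := by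
    rw [continuous_iff_continuousAt]
    intro y
    exact ContinuousAt.finset_sup'_apply hs fun i _ =>
      (((continuous_id.sub continuous_const).norm.pow 2).sub continuous_const).continuousAt
  have hCcomp : IsCompact (convexHull ℝ (b '' ↑s)) := (s.finite_toSet.image b).isCompact_convexHull (𝕜 := ℝ)
  have hCconv : Convex ℝ (convexHull ℝ (b '' ↑s)) := convex_convexHull ℝ _
  have hCne : (convexHull ℝ (b '' ↑s)).Nonempty := by
    obtain ⟨i, hi⟩ := hs
    exact ⟨b i, subset_convexHull ℝ _ ⟨i, hi, rfl⟩⟩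
  obtain ⟨y₀, hy₀C, hy₀min⟩ := hCcomp.exists_isMinOn hCne hfc.continuousOn
  -- global minimality via projection
  have hglob : ∀ y : K, (s.sup' hs fun i => ‖y₀ - b i‖ ^ 2 - ‖x - a i‖ ^ 2)
      ≤ s.sup' hs fun i => ‖y - b i‖ ^ 2 - ‖x - a i‖ ^ 2 := by
    intro y
    obtain ⟨v, hvC, hv1, -⟩ := exists_proj hCne hCcomp.isComplete hCconv y
    refine (hy₀min hvC).trans (Finset.sup'_le hs _ fun i hi => ?_)
    have h2 := hv1 (b i) (subset_convexHull ℝ _ ⟨i, hi, rfl⟩)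
    have h3 : 0 ≤ ⟪y - v, v - b i⟫ := by
      rw [show v - b i = -(b i - v) by abel, inner_neg_right]; linarith
    have expand : ‖y - b i‖ ^ 2 = ‖y - v‖ ^ 2 + 2 * ⟪y - v, v - b i⟫ + ‖v - b i‖ ^ 2 := by
      rw [show y - b i = (y - v) + (v - b i) by abel, norm_add_sq_real]
    have h4 : ‖v - b i‖ ^ 2 - ‖x - a i‖ ^ 2 ≤ ‖y - b i‖ ^ 2 - ‖x - a i‖ ^ 2 := by
      nlinarith [sq_nonneg ‖y - v‖]
    exact h4.trans (Finset.le_sup' (fun i => ‖y - b i‖ ^ 2 - ‖x - a i‖ ^ 2) hi)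
  -- it suffices that the minimum value is ≤ 0
  suffices hle : (s.sup' hs fun i => ‖y₀ - b i‖ ^ 2 - ‖x - a i‖ ^ 2) ≤ 0 by
    refine ⟨y₀, fun i hi => ?_⟩
    have := (Finset.le_sup' (fun i => ‖y₀ - b i‖ ^ 2 - ‖x - a i‖ ^ 2) hi).trans hle
    nlinarith [norm_nonneg (y₀ - b i), norm_nonneg (x - a i)]
  by_contra hmle
  push_neg at hmle
  set m : ℝ := s.sup' hs fun i => ‖y₀ - b i‖ ^ 2 - ‖x - a i‖ ^ 2 with hm
  -- the active index set
  set I : Finset ι := s.filter (fun i => ‖y₀ - b i‖ ^ 2 - ‖x - a i‖ ^ 2 = m) with hI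
  have hIs : I ⊆ s := Finset.filter_subset _ _
  have hIne : I.Nonempty := by
    obtain ⟨i, hi, hieq⟩ := Finset.exists_mem_eq_sup' hs
      (fun i => ‖y₀ - b i‖ ^ 2 - ‖x - a i‖ ^ 2)
    exact ⟨i, Finset.mem_filter.2 ⟨hi, by rw [← hieq, ← hm]⟩⟩
  have hIval : ∀ i ∈ I, ‖y₀ - b i‖ ^ 2 = ‖x - a i‖ ^ 2 + m := by
    intro i hi
    have := (Finset.mem_filter.1 hi).2
    linarith
  have hC'comp : IsCompact (convexHull ℝ (b '' ↑I)) :=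
    (I.finite_toSet.image b).isCompact_convexHull (𝕜 := ℝ)
  have hC'conv : Convex ℝ (convexHull ℝ (b '' ↑I)) := convex_convexHull ℝ _
  have hC'ne : (convexHull ℝ (b '' ↑I)).Nonempty := by
    obtain ⟨i, hi⟩ := hIne
    exact ⟨b i, subset_convexHull ℝ _ ⟨i, hi, rfl⟩⟩
  -- Claim: y₀ lies in the convex hull of the active points.
  have hy₀C' : y₀ ∈ convexHull ℝ (b '' ↑I) := by
    by_contra hnot
    obtain ⟨p, hpC', hp1, -⟩ := exists_proj hC'ne hC'comp.isComplete hC'conv y₀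
    have hdne : p - y₀ ≠ 0 := sub_ne_zero.2 fun h => hnot (h ▸ hpC')
    have hdpos : 0 < ‖p - y₀‖ ^ 2 := by
      have := norm_pos_iff.2 hdne; positivity
    have hact : ∀ i ∈ I, ‖p - y₀‖ ^ 2 ≤ ⟪p - y₀, b i - y₀⟫ := by
      intro i hi
      have h2 := hp1 (b i) (subset_convexHull ℝ _ ⟨i, hi, rfl⟩)
      have h4 : ⟪p - y₀, b i - y₀⟫ - ⟪p - y₀, b i - p⟫ = ‖p - y₀‖ ^ 2 := by
        rw [← inner_sub_right, show (b i - y₀) - (b i - p) = p - y₀ by abel,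
          real_inner_self_eq_norm_sq]
      have h5 : ⟪-(y₀ - p), b i - p⟫ = -⟪y₀ - p, b i - p⟫ := inner_neg_left _ _
      rw [neg_sub] at h5
      linarith
    -- a uniform gap on inactive indices
    obtain ⟨δ, hδpos, hδ⟩ : ∃ δ : ℝ, 0 < δ ∧
        ∀ i ∈ s, i ∉ I → ‖y₀ - b i‖ ^ 2 - ‖x - a i‖ ^ 2 + δ ≤ m := by
      rcases (s \ I).eq_empty_or_nonempty with hSI | hSI
      · exact ⟨1, one_pos, fun i hi hni =>
          absurd (Finset.mem_sdiff.2 ⟨hi, hni⟩) (by simp [hSI])⟩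
      · refine ⟨(s \ I).inf' hSI (fun i => m - (‖y₀ - b i‖ ^ 2 - ‖x - a i‖ ^ 2)), ?_, ?_⟩
        · rw [Finset.lt_inf'_iff]
          intro i hi
          obtain ⟨his, hiI⟩ := Finset.mem_sdiff.1 hi
          have h1 : ‖y₀ - b i‖ ^ 2 - ‖x - a i‖ ^ 2 ≤ m := by
            rw [hm]
            exact Finset.le_sup' (fun i => ‖y₀ - b i‖ ^ 2 - ‖x - a i‖ ^ 2) his
          have h2 : ‖y₀ - b i‖ ^ 2 - ‖x - a i‖ ^ 2 ≠ m := fun h =>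
            hiI (Finset.mem_filter.2 ⟨his, h⟩)
          have := lt_of_le_of_ne h1 h2
          linarith
        · intro i hi hni
          have := Finset.inf'_le (fun i => m - (‖y₀ - b i‖ ^ 2 - ‖x - a i‖ ^ 2))
            (Finset.mem_sdiff.2 ⟨hi, hni⟩)
          linarith
    set P : ℝ := s.sup' hs (fun i => |⟪p - y₀, y₀ - b i⟫|) with hP
    have hPnn : 0 ≤ P := by
      obtain ⟨i, hi⟩ := hs
      rw [hP]
      exact (abs_nonneg _).trans (Finset.le_sup' (fun i => |⟪p - y₀, y₀ - b i⟫|) hi)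
    have hPle : ∀ i ∈ s, |⟪p - y₀, y₀ - b i⟫| ≤ P := by
      intro i hi
      rw [hP]; exact Finset.le_sup' (fun i => |⟪p - y₀, y₀ - b i⟫|) hi
    set ε : ℝ := min 1 (δ / (2 * P + ‖p - y₀‖ ^ 2 + 1)) with hε
    have hεpos : 0 < ε := lt_min one_pos (by positivity)
    have hε1 : ε ≤ 1 := min_le_left _ _
    have hεδ : ε * (2 * P + ‖p - y₀‖ ^ 2) < δ := by
      have h1 : ε ≤ δ / (2 * P + ‖p - y₀‖ ^ 2 + 1) := min_le_right _ _
      have h2 : 0 < 2 * P + ‖p - y₀‖ ^ 2 + 1 := by positivity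
      rw [le_div_iff₀ h2] at h1
      nlinarith
    -- the value at the perturbed point is < m, contradicting global minimality
    have hlt : (s.sup' hs fun i => ‖y₀ + ε • (p - y₀) - b i‖ ^ 2 - ‖x - a i‖ ^ 2) < m := by
      rw [Finset.sup'_lt_iff]
      intro i hi
      have expand : ‖y₀ + ε • (p - y₀) - b i‖ ^ 2 - ‖x - a i‖ ^ 2
          = (‖y₀ - b i‖ ^ 2 - ‖x - a i‖ ^ 2)
            + 2 * ε * ⟪p - y₀, y₀ - b i⟫ + ε ^ 2 * ‖p - y₀‖ ^ 2 := by
        rw [show y₀ + ε • (p - y₀) - b i = (y₀ - b i) + ε • (p - y₀) by abel,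
          norm_add_sq_real, real_inner_smul_right, norm_smul]
        rw [real_inner_comm]
        rw [Real.norm_eq_abs, abs_of_pos hεpos, mul_pow]
        ring
      by_cases hiI : i ∈ I
      · have h1 := hact i hiI
        have h2 : ⟪p - y₀, y₀ - b i⟫ = -⟪p - y₀, b i - y₀⟫ := by
          rw [show y₀ - b i = -(b i - y₀) by abel, inner_neg_right]
        have h3 : ‖y₀ - b i‖ ^ 2 - ‖x - a i‖ ^ 2 = m := (Finset.mem_filter.1 hiI).2
        rw [expand, h2, h3]
        have e1 : ε * ‖p - y₀‖ ^ 2 ≤ ε * ⟪p - y₀, b i - y₀⟫ :=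
          mul_le_mul_of_nonneg_left h1 hεpos.le
        have eps : ε ^ 2 ≤ ε := by nlinarith
        have e2 : ε ^ 2 * ‖p - y₀‖ ^ 2 ≤ ε * ‖p - y₀‖ ^ 2 :=
          mul_le_mul_of_nonneg_right eps (by positivity)
        have e3 : 0 < ε * ‖p - y₀‖ ^ 2 := mul_pos hεpos hdpos
        linarith
      · have h1 := hPle i hi
        have h2 := hδ i hi hiI
        have h3 : ⟪p - y₀, y₀ - b i⟫ ≤ P := (le_abs_self _).trans h1
        rw [expand]
        have eps : ε ^ 2 ≤ ε := by nlinarith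
        have e2 : ε ^ 2 * ‖p - y₀‖ ^ 2 ≤ ε * ‖p - y₀‖ ^ 2 :=
          mul_le_mul_of_nonneg_right eps (by positivity)
        have h6 : ε * ⟪p - y₀, y₀ - b i⟫ ≤ ε * P := mul_le_mul_of_nonneg_left h3 hεpos.le
        nlinarith
    exact absurd (hglob (y₀ + ε • (p - y₀))) (not_le.2 hlt)
  -- extract a convex combination and derive the contradiction
  rw [convexHull_eq] at hy₀C'
  obtain ⟨ι', t, w, z, hw0, hw1, hz, hcm⟩ := hy₀C'
  obtain ⟨j₀, hj₀⟩ := hIne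
  have hzI : ∀ i : ι', ∃ j : ι, j ∈ I ∧ (i ∈ t → b j = z i) := by
    intro i
    by_cases hi : i ∈ t
    · obtain ⟨j, hj, hbj⟩ := hz i hi
      exact ⟨j, hj, fun _ => hbj⟩
    · exact ⟨j₀, hj₀, fun h => absurd h hi⟩
  choose σ hσI hσb using hzI
  have hsum : ∑ i ∈ t, w i • (y₀ - z i) = 0 := by
    have h1 : ∑ i ∈ t, w i • z i = y₀ := by
      rw [← Finset.centerMass_eq_of_sum_1 _ _ hw1]; exact hcm
    calc ∑ i ∈ t, w i • (y₀ - z i)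
        = (∑ i ∈ t, w i) • y₀ - ∑ i ∈ t, w i • z i := by
          rw [Finset.sum_smul, ← Finset.sum_sub_distrib]
          exact Finset.sum_congr rfl fun i _ => smul_sub _ _ _
      _ = 0 := by rw [hw1, h1, one_smul, sub_self]
  have hpair : ∀ i ∈ t, ∀ j ∈ t,
      m + ⟪x - a (σ i), x - a (σ j)⟫ ≤ ⟪y₀ - z i, y₀ - z j⟫ := by
    intro i hi j hj
    have h1 : ‖z i - z j‖ ≤ ‖a (σ i) - a (σ j)‖ := by
      rw [← hσb i hi, ← hσb j hj]; exact hab _ _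
    have h2 : ‖z i - z j‖ ^ 2 ≤ ‖a (σ i) - a (σ j)‖ ^ 2 := by
      nlinarith [norm_nonneg (z i - z j)]
    have e1 : ‖z i - z j‖ ^ 2
        = ‖y₀ - z j‖ ^ 2 - 2 * ⟪y₀ - z j, y₀ - z i⟫ + ‖y₀ - z i‖ ^ 2 := by
      rw [show z i - z j = (y₀ - z j) - (y₀ - z i) by abel, norm_sub_sq_real]
    have e2 : ‖a (σ i) - a (σ j)‖ ^ 2
        = ‖x - a (σ j)‖ ^ 2 - 2 * ⟪x - a (σ j), x - a (σ i)⟫ + ‖x - a (σ i)‖ ^ 2 := by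
      rw [show a (σ i) - a (σ j) = (x - a (σ j)) - (x - a (σ i)) by abel, norm_sub_sq_real]
    have hvi : ‖y₀ - z i‖ ^ 2 = ‖x - a (σ i)‖ ^ 2 + m := by
      rw [← hσb i hi]; exact hIval _ (hσI i)
    have hvj : ‖y₀ - z j‖ ^ 2 = ‖x - a (σ j)‖ ^ 2 + m := by
      rw [← hσb j hj]; exact hIval _ (hσI j)
    have c1 : ⟪y₀ - z j, y₀ - z i⟫ = ⟪y₀ - z i, y₀ - z j⟫ := real_inner_comm _ _
    have c2 : ⟪x - a (σ j), x - a (σ i)⟫ = ⟪x - a (σ i), x - a (σ j)⟫ := real_inner_comm _ _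
    nlinarith
  have hzero : (0 : ℝ) = ∑ i ∈ t, ∑ j ∈ t, w i * w j * ⟪y₀ - z i, y₀ - z j⟫ := by
    rw [← inner_sum_sum, hsum, inner_zero_left]
  have hlow : ∑ i ∈ t, ∑ j ∈ t, w i * w j * (m + ⟪x - a (σ i), x - a (σ j)⟫)
      ≤ ∑ i ∈ t, ∑ j ∈ t, w i * w j * ⟪y₀ - z i, y₀ - z j⟫ := by
    refine Finset.sum_le_sum fun i hi => Finset.sum_le_sum fun j hj => ?_
    exact mul_le_mul_of_nonneg_left (hpair i hi j hj) (mul_nonneg (hw0 i hi) (hw0 j hj))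
  have hsplit : ∑ i ∈ t, ∑ j ∈ t, w i * w j * (m + ⟪x - a (σ i), x - a (σ j)⟫)
      = m + ⟪∑ i ∈ t, w i • (x - a (σ i)), ∑ j ∈ t, w j • (x - a (σ j))⟫ := by
    rw [inner_sum_sum]
    rw [Finset.sum_congr rfl fun i (hi : i ∈ t) => Finset.sum_congr rfl
      fun j (hj : j ∈ t) => show w i * w j * (m + ⟪x - a (σ i), x - a (σ j)⟫)
        = w i * w j * m + w i * w j * ⟪x - a (σ i), x - a (σ j)⟫ from by ring]
    rw [Finset.sum_congr rfl fun i (hi : i ∈ t) => Finset.sum_add_distrib,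
      Finset.sum_add_distrib]
    congr 1
    calc ∑ i ∈ t, ∑ j ∈ t, w i * w j * m
        = ∑ i ∈ t, w i * ((∑ j ∈ t, w j) * m) := by
          refine Finset.sum_congr rfl fun i _ => ?_
          rw [Finset.sum_mul, Finset.mul_sum]
          exact Finset.sum_congr rfl fun j _ => by ring
      _ = m := by rw [hw1, one_mul, ← Finset.sum_mul, hw1, one_mul]
  have hfin : 0 ≤ ⟪∑ i ∈ t, w i • (x - a (σ i)), ∑ j ∈ t, w j • (x - a (σ j))⟫ :=
    real_inner_self_nonneg
  rw [← hzero, hsplit] at hlow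
  linarith

private lemma kirszbraun_point {G K : Type*} [NormedAddCommGroup G] [InnerProductSpace ℝ G]
    [NormedAddCommGroup K] [InnerProductSpace ℝ K] [CompleteSpace K] {ι : Type*} [Nonempty ι]
    (a : ι → G) (b : ι → K) (hab : ∀ i j, ‖b i - b j‖ ≤ ‖a i - a j‖) (x : G) :
    ∃ y : K, ∀ i, ‖y - b i‖ ≤ ‖x - a i‖ := by
  classical
  obtain ⟨i₀⟩ := ‹Nonempty ι›
  set D : Finset ι → Set K :=
    fun Φ => ⋂ i ∈ (insert i₀ Φ : Finset ι), Metric.closedBall (b i) (‖x - a i‖) with hD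
  have hDmem : ∀ (Φ : Finset ι) (y : K), y ∈ D Φ ↔ ∀ i ∈ insert i₀ Φ, ‖y - b i‖ ≤ ‖x - a i‖ := by
    intro Φ y
    simp [hD, Set.mem_iInter₂, Metric.mem_closedBall, dist_eq_norm]
  have hDcl : ∀ Φ, IsClosed (D Φ) := fun Φ =>
    isClosed_biInter fun i _ => Metric.isClosed_closedBall
  have hDconv : ∀ Φ, Convex ℝ (D Φ) := fun Φ =>
    convex_iInter₂ fun i _ => convex_closedBall _ _
  have hDne : ∀ Φ, (D Φ).Nonempty := by
    intro Φ
    obtain ⟨y, hy⟩ := kirszbraun_finset_s8 a b hab x (insert i₀ Φ) ⟨i₀, Finset.mem_insert_self _ _⟩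
    exact ⟨y, (hDmem Φ y).2 hy⟩
  have hDanti : ∀ {Φ Ψ : Finset ι}, Φ ⊆ Ψ → D Ψ ⊆ D Φ := by
    intro Φ Ψ hΦΨ y hy
    rw [hDmem] at hy ⊢
    exact fun i hi => hy i (Finset.insert_subset_insert i₀ hΦΨ hi)
  -- projections of b i₀ onto the D Φ
  have hproj : ∀ Φ : Finset ι, ∃ y, y ∈ D Φ ∧ ∀ w ∈ D Φ, ‖b i₀ - y‖ ≤ ‖b i₀ - w‖ := by
    intro Φ
    obtain ⟨v, hv1, -, hv3⟩ := exists_proj (hDne Φ) (hDcl Φ).isComplete (hDconv Φ) (b i₀)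
    exact ⟨v, hv1, hv3⟩
  choose yP hymem hymin using hproj
  set d : Finset ι → ℝ := fun Φ => ‖b i₀ - yP Φ‖ with hd
  have hdnn : ∀ Φ, 0 ≤ d Φ := fun Φ => norm_nonneg _
  have hdmono : ∀ {Φ Ψ : Finset ι}, Φ ⊆ Ψ → d Φ ≤ d Ψ := fun {Φ Ψ} h =>
    hymin Φ _ (hDanti h (hymem Ψ))
  have hdbdd : ∀ Φ, d Φ ≤ ‖x - a i₀‖ := by
    intro Φ
    have h1 := ((hDmem Φ (yP Φ)).1 (hymem Φ)) i₀ (Finset.mem_insert_self _ _)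
    have h2 : d Φ = ‖yP Φ - b i₀‖ := by simp only [hd]; rw [norm_sub_rev]
    rw [h2]
    exact h1
  set m : ℝ := sSup (Set.range d) with hmdef
  have hrange_ne : (Set.range d).Nonempty := ⟨d ∅, ⟨∅, rfl⟩⟩
  have hbdd : BddAbove (Set.range d) := ⟨‖x - a i₀‖, Set.forall_mem_range.2 hdbdd⟩
  have hdlem : ∀ Φ, d Φ ≤ m := fun Φ => le_csSup hbdd ⟨Φ, rfl⟩
  have hmnn : 0 ≤ m := (hdnn ∅).trans (hdlem ∅)
  -- a sequence approaching the sup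
  have hseq : ∀ n : ℕ, ∃ Φ, m - 1 / (n + 1) < d Φ := by
    intro n
    have hlt : m - 1 / (n + 1) < m := by
      have : (0 : ℝ) < 1 / (n + 1) := by positivity
      linarith
    obtain ⟨_, ⟨Φ, rfl⟩, h⟩ := exists_lt_of_lt_csSup hrange_ne hlt
    exact ⟨Φ, h⟩
  choose φ hφ using hseq
  set Ψ : ℕ → Finset ι := fun n => (Finset.range (n + 1)).sup φ with hΨ
  have hΨmono : ∀ {n k : ℕ}, n ≤ k → Ψ n ⊆ Ψ k := fun {n k} h =>
    Finset.sup_mono (Finset.range_subset_range.2 (by omega))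
  have hφΨ : ∀ n, φ n ⊆ Ψ n := fun n =>
    Finset.le_sup (f := φ) (Finset.mem_range.2 (by omega))
  have hdΨ : ∀ n, m - 1 / (n + 1) < d (Ψ n) := fun n =>
    lt_of_lt_of_le (hφ n) (hdmono (hφΨ n))
  have htendd : Filter.Tendsto (fun n => d (Ψ n)) Filter.atTop (nhds m) := by
    have h1 : Filter.Tendsto (fun n : ℕ => m - 1 / (n + 1)) Filter.atTop (nhds m) := by
      have h2 := Filter.Tendsto.const_sub m tendsto_one_div_add_atTop_nhds_zero_nat
      simpa using h2
    exact tendsto_of_tendsto_of_tendsto_of_le_of_le h1 tendsto_const_nhds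
      (fun n => (hdΨ n).le) (fun n => hdlem _)
  -- the parallelogram estimate
  have hkey : ∀ (Φ Ψ₁ Ψ₂ : Finset ι), Φ ⊆ Ψ₁ → Φ ⊆ Ψ₂ →
      ‖yP Ψ₁ - yP Ψ₂‖ ^ 2 ≤ 2 * d Ψ₁ ^ 2 + 2 * d Ψ₂ ^ 2 - 4 * d Φ ^ 2 := by
    intro Φ Ψ₁ Ψ₂ h1 h2
    have hu : yP Ψ₁ ∈ D Φ := hDanti h1 (hymem Ψ₁)
    have hv : yP Ψ₂ ∈ D Φ := hDanti h2 (hymem Ψ₂)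
    have hz : (2⁻¹ : ℝ) • yP Ψ₁ + (2⁻¹ : ℝ) • yP Ψ₂ ∈ D Φ :=
      (hDconv Φ) hu hv (by norm_num) (by norm_num) (by norm_num)
    have hdz : d Φ ≤ ‖b i₀ - ((2⁻¹ : ℝ) • yP Ψ₁ + (2⁻¹ : ℝ) • yP Ψ₂)‖ := hymin Φ _ hz
    have hpar := parallelogram_law_with_norm ℝ (b i₀ - yP Ψ₁) (b i₀ - yP Ψ₂)
    have hsum : (b i₀ - yP Ψ₁) + (b i₀ - yP Ψ₂)
        = (2 : ℝ) • (b i₀ - ((2⁻¹ : ℝ) • yP Ψ₁ + (2⁻¹ : ℝ) • yP Ψ₂)) := by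
      module
    have hdiff : (b i₀ - yP Ψ₁) - (b i₀ - yP Ψ₂) = yP Ψ₂ - yP Ψ₁ := by abel
    rw [hsum, hdiff, norm_smul, Real.norm_ofNat] at hpar
    have hq : d Φ ^ 2 ≤ ‖b i₀ - ((2⁻¹ : ℝ) • yP Ψ₁ + (2⁻¹ : ℝ) • yP Ψ₂)‖ ^ 2 := by
      have := hdnn Φ
      nlinarith
    have hd1 : d Ψ₁ = ‖b i₀ - yP Ψ₁‖ := by simp only [hd]
    have hd2 : d Ψ₂ = ‖b i₀ - yP Ψ₂‖ := by simp only [hd]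
    have hrev : ‖yP Ψ₂ - yP Ψ₁‖ = ‖yP Ψ₁ - yP Ψ₂‖ := norm_sub_rev _ _
    rw [hrev] at hpar
    rw [hd1, hd2]
    nlinarith [hpar, hq]
  -- the projections along Ψ form a Cauchy sequence
  have hcauchy : CauchySeq (fun n => yP (Ψ n)) := by
    apply cauchySeq_of_le_tendsto_0 (fun N => Real.sqrt (4 * (m ^ 2 - d (Ψ N) ^ 2)))
    · intro n k N hn hk
      have h := hkey (Ψ N) (Ψ n) (Ψ k) (hΨmono hn) (hΨmono hk)
      have h2 : ‖yP (Ψ n) - yP (Ψ k)‖ ^ 2 ≤ 4 * (m ^ 2 - d (Ψ N) ^ 2) := by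
        have b1 : d (Ψ n) ≤ m := hdlem _
        have b2 : d (Ψ k) ≤ m := hdlem _
        have b3 : d (Ψ N) ≤ d (Ψ n) := hdmono (hΨmono hn)
        have b4 : 0 ≤ d (Ψ N) := hdnn _
        have b5 : 0 ≤ d (Ψ n) := hdnn _
        have b6 : 0 ≤ d (Ψ k) := hdnn _
        nlinarith
      rw [dist_eq_norm]
      exact Real.le_sqrt_of_sq_le h2
    · have hg : Filter.Tendsto (fun N => 4 * (m ^ 2 - d (Ψ N) ^ 2)) Filter.atTop (nhds 0) := by
        have h1 : Filter.Tendsto (fun N => d (Ψ N) ^ 2) Filter.atTop (nhds (m ^ 2)) :=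
          htendd.pow 2
        have h2 := (tendsto_const_nhds (x := m ^ 2) (f := Filter.atTop (α := ℕ))).sub h1
        have h3 := h2.const_mul (4 : ℝ)
        simpa using h3
      have h5 := (Real.continuous_sqrt.tendsto 0).comp hg
      rw [Real.sqrt_zero] at h5
      exact h5
  obtain ⟨y, hy⟩ := cauchySeq_tendsto_of_complete hcauchy
  refine ⟨y, fun j => ?_⟩
  -- compare with projections onto D (insert j (Ψ n))
  have hvj : ∀ n : ℕ, ‖yP (insert j (Ψ n)) - b j‖ ≤ ‖x - a j‖ := by
    intro n
    exact ((hDmem _ _).1 (hymem (insert j (Ψ n)))) j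
      (Finset.mem_insert.2 (Or.inr (Finset.mem_insert_self _ _)))
  have hnv : ∀ n : ℕ, ‖yP (Ψ n) - yP (insert j (Ψ n))‖
      ≤ Real.sqrt (4 * (m ^ 2 - d (Ψ n) ^ 2)) := by
    intro n
    have h := hkey (Ψ n) (Ψ n) (insert j (Ψ n)) subset_rfl (Finset.subset_insert _ _)
    have b1 : d (insert j (Ψ n)) ≤ m := hdlem _
    have b2 : d (Ψ n) ≤ m := hdlem _
    have b4 : 0 ≤ d (Ψ n) := hdnn _
    have b5 : 0 ≤ d (insert j (Ψ n)) := hdnn _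
    have h2 : ‖yP (Ψ n) - yP (insert j (Ψ n))‖ ^ 2 ≤ 4 * (m ^ 2 - d (Ψ n) ^ 2) := by
      nlinarith
    exact Real.le_sqrt_of_sq_le h2
  have t1 : Filter.Tendsto (fun n => ‖y - yP (Ψ n)‖) Filter.atTop (nhds 0) := by
    have := (tendsto_const_nhds (x := y) (f := Filter.atTop (α := ℕ))).sub hy
    have h2 := this.norm
    simpa using h2
  have t2 : Filter.Tendsto (fun n => ‖yP (Ψ n) - yP (insert j (Ψ n))‖) Filter.atTop (nhds 0) := by
    have hg : Filter.Tendsto (fun n => Real.sqrt (4 * (m ^ 2 - d (Ψ n) ^ 2)))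
        Filter.atTop (nhds 0) := by
      have h1 : Filter.Tendsto (fun N => d (Ψ N) ^ 2) Filter.atTop (nhds (m ^ 2)) :=
        htendd.pow 2
      have h2 := (tendsto_const_nhds (x := m ^ 2) (f := Filter.atTop (α := ℕ))).sub h1
      have h3 := h2.const_mul (4 : ℝ)
      have h4 : Filter.Tendsto (fun N => 4 * (m ^ 2 - d (Ψ N) ^ 2)) Filter.atTop (nhds 0) := by
        simpa using h3
      have h5 := (Real.continuous_sqrt.tendsto 0).comp h4
      rw [Real.sqrt_zero] at h5
      exact h5
    exact squeeze_zero (fun n => norm_nonneg _) hnv hg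
  have htot : Filter.Tendsto
      (fun n => ‖y - yP (Ψ n)‖ + ‖yP (Ψ n) - yP (insert j (Ψ n))‖ + ‖x - a j‖)
      Filter.atTop (nhds (0 + 0 + ‖x - a j‖)) :=
    (t1.add t2).add tendsto_const_nhds
  have hbound : ∀ n : ℕ, ‖y - b j‖
      ≤ ‖y - yP (Ψ n)‖ + ‖yP (Ψ n) - yP (insert j (Ψ n))‖ + ‖x - a j‖ := by
    intro n
    have tri : ‖y - b j‖ ≤ ‖y - yP (Ψ n)‖ + ‖yP (Ψ n) - yP (insert j (Ψ n))‖
        + ‖yP (insert j (Ψ n)) - b j‖ := by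
      have : y - b j = (y - yP (Ψ n)) + (yP (Ψ n) - yP (insert j (Ψ n)))
          + (yP (insert j (Ψ n)) - b j) := by abel
      rw [this]
      exact norm_add₃_le
    exact tri.trans (by linarith [hvj n])
  have := ge_of_tendsto' htot hbound
  simpa using this

/-- If `B ⊆ A` is an m-accretive restriction, then there is a `1`-Lipschitz map
`g : G₁ → G₂` with `dom B = {u ∈ dom A : g (F₁ u) = F₂ u}`. -/
theorem stmt_8 {H : Type*} [NormedAddCommGroup H] [InnerProductSpace ℝ H] [CompleteSpace H]
    {G₁ G₂ : Type*} [NormedAddCommGroup G₁] [InnerProductSpace ℝ G₁] [CompleteSpace G₁]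
    [NormedAddCommGroup G₂] [InnerProductSpace ℝ G₂] [CompleteSpace G₂]
    (A₀ : H →ₗ.[ℝ] H) (hdense : Dense (A₀.domain : Set H)) (hclosed : A₀.IsClosed)
    (hskew : ∀ u v : A₀.domain, ⟪A₀ u, (v : H)⟫ = -⟪(u : H), A₀ v⟫)
    (A : H →ₗ.[ℝ] H) (hA : A = -A₀.adjoint)
    (F₁ : A.domain →ₗ[ℝ] G₁) (F₂ : A.domain →ₗ[ℝ] G₂)
    (hFsurj : ∀ (g₁ : G₁) (g₂ : G₂), ∃ u : A.domain, F₁ u = g₁ ∧ F₂ u = g₂)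
    (hbs : ∀ u v : A.domain,
      ⟪A u, (v : H)⟫ + ⟪(u : H), A v⟫ = ⟪F₁ u, F₁ v⟫ - ⟪F₂ u, F₂ v⟫)
    (domB : Set A.domain)
    (hacc : ∀ u ∈ domB, ∀ v ∈ domB, 0 ≤ ⟪A u - A v, (u : H) - (v : H)⟫)
    (honto : ∀ f : H, ∃ u ∈ domB, (u : H) + A u = f) :
    ∃ g : G₁ → G₂, (∀ x y : G₁, ‖g x - g y‖ ≤ ‖x - y‖) ∧
      ∀ u : A.domain, u ∈ domB ↔ g (F₁ u) = F₂ u := by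
  classical
  -- the key quadratic identity
  have key : ∀ u v : A.domain, 2 * ⟪A u - A v, (u : H) - (v : H)⟫
      = ‖F₁ u - F₁ v‖ ^ 2 - ‖F₂ u - F₂ v‖ ^ 2 := by
    intro u v
    have h := hbs (u - v) (u - v)
    rw [A.map_sub, map_sub, map_sub, Submodule.coe_sub] at h
    rw [real_inner_self_eq_norm_sq, real_inner_self_eq_norm_sq] at h
    have hc := real_inner_comm ((u : H) - (v : H)) ((A u : H) - A v)
    linarith [h, hc]
  -- F₂ is a contraction relative to F₁ on domB
  have hlip : ∀ u ∈ domB, ∀ v ∈ domB, ‖F₂ u - F₂ v‖ ≤ ‖F₁ u - F₁ v‖ := by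
    intro u hu v hv
    have h := hacc u hu v hv
    have k := key u v
    nlinarith [norm_nonneg (F₂ u - F₂ v), norm_nonneg (F₁ u - F₁ v)]
  -- maximality of domB
  have hmax : ∀ u : A.domain,
      (∀ v ∈ domB, (0 : ℝ) ≤ ⟪A u - A v, (u : H) - (v : H)⟫) → u ∈ domB := by
    intro u hu
    obtain ⟨v, hv, hsum⟩ := honto ((u : H) + A u)
    have h1 := hu v hv
    have h3 : ((u : H) + A u) - ((v : H) + A v) = 0 := by rw [hsum]; abel
    have h2 : ⟪A u - A v, (u : H) - (v : H)⟫
        = ⟪((u : H) + A u) - ((v : H) + A v), (u : H) - (v : H)⟫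
          - ‖(u : H) - (v : H)‖ ^ 2 := by
      rw [show ((u : H) + A u) - ((v : H) + A v)
          = (A u - A v) + ((u : H) - (v : H)) by abel, inner_add_left,
        real_inner_self_eq_norm_sq]
      ring
    rw [h3, inner_zero_left] at h2
    have h4 : ‖(u : H) - (v : H)‖ ^ 2 ≤ 0 := by linarith
    have h5 : (u : H) - (v : H) = 0 := by
      have := norm_nonneg ((u : H) - (v : H))
      have h6 : ‖(u : H) - (v : H)‖ = 0 := by nlinarith
      exact norm_eq_zero.1 h6
    have h7 : u = v := Subtype.coe_injective (sub_eq_zero.1 h5)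
    rwa [h7]
  -- every boundary value in G₁ is attained on domB
  have hexists : ∀ x : G₁, ∃ u : A.domain, u ∈ domB ∧ F₁ u = x := by
    intro x
    have hne : Nonempty ↥domB := by
      obtain ⟨u₀, hu₀, -⟩ := honto 0
      exact ⟨⟨u₀, hu₀⟩⟩
    obtain ⟨y, hy⟩ := kirszbraun_point (fun v : ↥domB => F₁ v.1) (fun v : ↥domB => F₂ v.1)
      (fun i j => hlip i.1 i.2 j.1 j.2) x
    obtain ⟨u, hu1, hu2⟩ := hFsurj x y
    refine ⟨u, hmax u ?_, hu1⟩
    intro v hv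
    have k := key u v
    have h := hy ⟨v, hv⟩
    rw [hu1, hu2] at k
    nlinarith [norm_nonneg (y - F₂ v), norm_nonneg (x - F₁ v)]
  choose sel hselB hselF using hexists
  refine ⟨fun x => F₂ (sel x), ?_, ?_⟩
  · intro x y
    have h := hlip (sel x) (hselB x) (sel y) (hselB y)
    rwa [hselF x, hselF y] at h
  · intro u
    constructor
    · intro hu
      show F₂ (sel (F₁ u)) = F₂ u
      have h := hlip (sel (F₁ u)) (hselB _) u hu
      rw [hselF] at h
      have h2 : ‖F₂ (sel (F₁ u)) - F₂ u‖ ≤ 0 := by simpa using h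
      exact sub_eq_zero.1 (norm_le_zero_iff.1 h2)
    · intro hg
      have hg' : F₂ (sel (F₁ u)) = F₂ u := hg
      apply hmax
      intro v hv
      have k := key u v
      have k' := key (sel (F₁ u)) v
      rw [hselF, hg'] at k'
      have hPos := hacc (sel (F₁ u)) (hselB _) v hv
      linarith
end

section
/- Let (F, G₁, G₂) be a boundary system for A and let B ⊆ A be a restriction of A. Then B is m-accretive if and only if there exists a mapping g : G₁ → G₂ with ‖g(x) − g(y)‖_{G₂} ≤ ‖x − y‖_{G₁} for all x, y ∈ G₁ such that dom(B) = {u ∈ dom(A) : g(F₁u) = F₂u}. -/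
open scoped RealInnerProductSpace


/-- Minimizer existence for strongly convex continuous bdd-below functions. -/
lemma aux_min_exists {E : Type*} [NormedAddCommGroup E] [InnerProductSpace ℝ E]
    [CompleteSpace E] (f : E → ℝ) (hc : Continuous f) (c : ℝ) (hlb : ∀ z, c ≤ f z)
    (hsc : ∀ y z : E, f ((2:ℝ)⁻¹ • (y + z)) ≤ f y / 2 + f z / 2 - ‖y - z‖ ^ 2 / 4) :
    ∃ y : E, ∀ z, f y ≤ f z := by
  have hne : (Set.range f).Nonempty := ⟨f 0, 0, rfl⟩
  have hbdd : BddBelow (Set.range f) := ⟨c, by rintro _ ⟨z, rfl⟩; exact hlb z⟩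
  set m : ℝ := sInf (Set.range f) with hm
  have hminf : ∀ z, m ≤ f z := fun z => csInf_le hbdd ⟨z, rfl⟩
  -- choose approximate minimizers
  have hex : ∀ n : ℕ, ∃ y : E, f y < m + 1 / (n + 1) := by
    intro n
    have h1 : m < m + 1 / (n + 1) := by
      have : (0:ℝ) < 1 / ((n:ℝ)+1) := by positivity
      linarith
    obtain ⟨_, ⟨y, rfl⟩, hy⟩ := exists_lt_of_csInf_lt hne h1
    exact ⟨y, hy⟩
  choose y hy using hex
  have key : ∀ n k : ℕ, ‖y n - y k‖ ^ 2 ≤ 2 * (1 / (n + 1) + 1 / (k + 1)) := by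
    intro n k
    have h1 := hsc (y n) (y k)
    have h2 := hminf ((2:ℝ)⁻¹ • (y n + y k))
    have h3 := hy n; have h4 := hy k
    nlinarith
  have hcau : CauchySeq y := by
    rw [Metric.cauchySeq_iff']
    intro ε hε
    obtain ⟨N, hN⟩ := exists_nat_gt (4 / ε ^ 2)
    refine ⟨N, fun n hn => ?_⟩
    have h1 : ‖y n - y N‖ ^ 2 ≤ 2 * (1 / (n + 1) + 1 / (N + 1)) := key n N
    have hNn : (1:ℝ) / (n + 1) ≤ 1 / (N + 1) := by
      apply one_div_le_one_div_of_le (by positivity)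
      exact_mod_cast by omega
    have h2 : ‖y n - y N‖ ^ 2 ≤ 4 / ((N:ℝ) + 1) := by
      have h6 : 2 * (1 / ((n:ℝ) + 1) + 1 / ((N:ℝ) + 1)) ≤ 4 / ((N:ℝ)+1) := by
        have : (4:ℝ) / ((N:ℝ)+1) = 2 * (1/((N:ℝ)+1) + 1/((N:ℝ)+1)) := by ring
        rw [this]
        linarith
      linarith
    have h3 : (4:ℝ) / (N + 1) < ε ^ 2 := by
      rw [div_lt_iff₀ (by positivity)]
      have h4 : 4 / ε ^ 2 < (N:ℝ) := hN
      have h5 : (0:ℝ) < ε ^2 := by positivity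
      rw [div_lt_iff₀ h5] at h4
      nlinarith
    rw [dist_eq_norm]
    nlinarith [norm_nonneg (y n - y N)]
  obtain ⟨p, hp⟩ := cauchySeq_tendsto_of_complete hcau
  refine ⟨p, fun z => ?_⟩
  have hfp : Filter.Tendsto (f ∘ y) Filter.atTop (nhds (f p)) := (hc.tendsto p).comp hp
  have hfm : Filter.Tendsto (f ∘ y) Filter.atTop (nhds m) := by
    have hsq : Filter.Tendsto (fun n : ℕ => m + 1 / ((n:ℝ) + 1)) Filter.atTop (nhds m) := by
      have := tendsto_one_div_add_atTop_nhds_zero_nat (𝕜 := ℝ)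
      simpa using (tendsto_const_nhds (x := m)).add this
    refine tendsto_of_tendsto_of_tendsto_of_le_of_le tendsto_const_nhds hsq ?_ ?_
    · exact fun n => hminf (y n)
    · exact fun n => (hy n).le
  have : f p = m := tendsto_nhds_unique hfp hfm
  rw [this]; exact hminf z

section sums
variable {E : Type*} [NormedAddCommGroup E] [InnerProductSpace ℝ E]
variable {ι : Type*}

lemma sum_dist_sq (t : Finset ι) (w : ι → ℝ) (p : ι → E) (hw1 : ∑ i ∈ t, w i = 1)
    (b : E) (hb : b = ∑ i ∈ t, w i • p i) (c : E) :
    ∑ i ∈ t, w i * ‖c - p i‖ ^ 2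
      = (∑ i ∈ t, w i * ‖p i‖ ^ 2 - ‖b‖ ^ 2) + ‖c - b‖ ^ 2 := by
  have hcb : ⟪c, b⟫ = ∑ i ∈ t, w i * ⟪c, p i⟫ := by
    rw [hb, inner_sum]
    exact Finset.sum_congr rfl fun i _ => real_inner_smul_right _ _ _
  have hexp : ∀ i ∈ t, w i * ‖c - p i‖ ^ 2
      = w i * ‖c‖ ^ 2 - 2 * (w i * ⟪c, p i⟫) + w i * ‖p i‖ ^ 2 := by
    intro i _
    rw [norm_sub_sq_real]; ring
  rw [Finset.sum_congr rfl hexp]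
  rw [Finset.sum_add_distrib, Finset.sum_sub_distrib, ← Finset.sum_mul, hw1,
    ← Finset.mul_sum, ← hcb]
  have h2 : ‖c - b‖ ^ 2 = ‖c‖ ^ 2 - 2 * ⟪c, b⟫ + ‖b‖ ^ 2 := norm_sub_sq_real c b
  linarith

lemma double_sum_dist_sq (t : Finset ι) (w : ι → ℝ) (p : ι → E) (hw1 : ∑ i ∈ t, w i = 1)
    (b : E) (hb : b = ∑ i ∈ t, w i • p i) :
    ∑ i ∈ t, ∑ j ∈ t, w i * w j * ‖p i - p j‖ ^ 2
      = 2 * (∑ i ∈ t, w i * ‖p i‖ ^ 2 - ‖b‖ ^ 2) := by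
  set S : ℝ := ∑ i ∈ t, w i * ‖p i‖ ^ 2 - ‖b‖ ^ 2 with hS
  have hrow : ∀ i ∈ t, ∑ j ∈ t, w i * w j * ‖p i - p j‖ ^ 2 = w i * (S + ‖p i - b‖ ^ 2) := by
    intro i _
    have h := sum_dist_sq t w p hw1 b hb (p i)
    calc ∑ j ∈ t, w i * w j * ‖p i - p j‖ ^ 2
        = w i * ∑ j ∈ t, w j * ‖p i - p j‖ ^ 2 := by
          rw [Finset.mul_sum]; exact Finset.sum_congr rfl fun j _ => by ring
      _ = w i * (S + ‖p i - b‖ ^ 2) := by rw [h, hS]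
  rw [Finset.sum_congr rfl hrow]
  have hsum2 : ∑ i ∈ t, w i * (S + ‖p i - b‖ ^ 2)
      = S + ∑ i ∈ t, w i * ‖b - p i‖ ^ 2 := by
    have : ∀ i ∈ t, w i * (S + ‖p i - b‖ ^ 2) = w i * S + w i * ‖b - p i‖ ^ 2 := by
      intro i _; rw [norm_sub_rev]; ring
    rw [Finset.sum_congr rfl this, Finset.sum_add_distrib, ← Finset.sum_mul, hw1, one_mul]
  rw [hsum2, sum_dist_sq t w p hw1 b hb b, sub_self, norm_zero]
  ring_nf
  linarith [hS]

end sums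

lemma kirszbraun_finset_s9 {G₁ G₂ : Type*} [NormedAddCommGroup G₁] [InnerProductSpace ℝ G₁]
    [NormedAddCommGroup G₂] [InnerProductSpace ℝ G₂] [CompleteSpace G₂]
    (g : G₁ → G₂) (x : G₁) (F : Finset G₁) (hne : F.Nonempty)
    (hg : ∀ ξ ∈ F, ∀ η ∈ F, ‖g ξ - g η‖ ≤ ‖ξ - η‖)
    (y : G₂)
    (hmin : ∀ z : G₂, F.sup' hne (fun ξ => ‖y - g ξ‖ ^ 2 - ‖x - ξ‖ ^ 2)
        ≤ F.sup' hne (fun ξ => ‖z - g ξ‖ ^ 2 - ‖x - ξ‖ ^ 2)) :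
    F.sup' hne (fun ξ => ‖y - g ξ‖ ^ 2 - ‖x - ξ‖ ^ 2) ≤ 0 := by
  by_contra hpos
  push_neg at hpos
  set v : G₁ → ℝ := fun ξ => ‖y - g ξ‖ ^ 2 - ‖x - ξ‖ ^ 2 with hv
  set m : ℝ := F.sup' hne v with hm
  have hmpos : 0 < m := hpos
  set Aset : Finset G₁ := F.filter (fun ξ => v ξ = m) with hA
  obtain ⟨ξ₀, hξ₀F, hξ₀⟩ := Finset.exists_mem_eq_sup' hne v
  have hξ₀A : ξ₀ ∈ Aset := Finset.mem_filter.2 ⟨hξ₀F, hξ₀.symm⟩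
  have hAsub : ∀ ξ ∈ Aset, ξ ∈ F := fun ξ h => (Finset.mem_filter.1 h).1
  have hAval : ∀ ξ ∈ Aset, v ξ = m := fun ξ h => (Finset.mem_filter.1 h).2
  have hvle : ∀ ξ ∈ F, v ξ ≤ m := fun ξ h => Finset.le_sup' v h
  set K : Set G₂ := convexHull ℝ (g '' ↑Aset) with hK
  have hKconv : Convex ℝ K := convex_convexHull ℝ _
  have hKcomp : IsCompact K := ((Aset.finite_toSet).image g).isCompact_convexHull ℝ
  have hKcompl : IsComplete K := hKcomp.isClosed.isComplete
  have hKne : K.Nonempty := ⟨g ξ₀, subset_convexHull ℝ _ ⟨ξ₀, Finset.mem_coe.2 hξ₀A, rfl⟩⟩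
  -- Step A : y lies in the convex hull of the active values
  have hyK : y ∈ K := by
    by_contra hyK
    obtain ⟨p, hpK, hpd⟩ := exists_norm_eq_iInf_of_complete_convex hKne hKcompl hKconv y
    have hproj : ∀ w ∈ K, ⟪y - p, w - p⟫ ≤ 0 :=
      (norm_eq_iInf_iff_real_inner_le_zero hKconv hpK).1 hpd
    set a : G₂ := p - y with ha
    have hane : a ≠ 0 := by
      intro h
      rw [ha, sub_eq_zero] at h
      exact hyK (h ▸ hpK)
    have hna : 0 < ‖a‖ ^ 2 := by
      have := norm_pos_iff.2 hane
      positivity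
    have hkey : ∀ ξ ∈ Aset, ‖a‖ ^ 2 ≤ ⟪a, g ξ - y⟫ := by
      intro ξ hξ
      have h1 : ⟪y - p, g ξ - p⟫ ≤ 0 :=
        hproj _ (subset_convexHull ℝ _ ⟨ξ, Finset.mem_coe.2 hξ, rfl⟩)
      have h2 : ⟪a, g ξ - y⟫ = ⟪p - y, g ξ - p⟫ + ‖a‖ ^ 2 := by
        have hsplit : g ξ - y = (g ξ - p) + (p - y) := by abel
        rw [ha, hsplit, inner_add_right]
        congr 1
        rw [← ha, real_inner_self_eq_norm_sq]
      have h3 : ⟪p - y, g ξ - p⟫ = -⟪y - p, g ξ - p⟫ := by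
        rw [← inner_neg_left, neg_sub]
      rw [h2, h3]; linarith
    -- choose step size
    set I : Finset G₁ := F.filter (fun ξ => v ξ < m) with hI
    have hcover : ∀ ξ ∈ F, ξ ∈ Aset ∨ ξ ∈ I := by
      intro ξ hξ
      rcases lt_or_eq_of_le (hvle ξ hξ) with h | h
      · exact Or.inr (Finset.mem_filter.2 ⟨hξ, h⟩)
      · exact Or.inl (Finset.mem_filter.2 ⟨hξ, h⟩)
    set D : G₁ → ℝ := fun ξ => 2 * |⟪a, g ξ - y⟫| + ‖a‖ ^ 2 + 1 with hD
    have hDpos : ∀ ξ, 0 < D ξ := by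
      intro ξ
      have := abs_nonneg (⟪a, g ξ - y⟫)
      simp only [hD]; nlinarith
    set t : ℝ := if hIne : I.Nonempty then
        min (1/2) (I.inf' hIne (fun ξ => (m - v ξ) / D ξ)) else (1/2 : ℝ) with hT
    have ht0 : 0 < t := by
      rw [hT]
      split_ifs with hIne
      · apply lt_min (by norm_num)
        rw [Finset.lt_inf'_iff]
        intro ξ hξ
        have h1 : v ξ < m := (Finset.mem_filter.1 hξ).2
        exact div_pos (by linarith) (hDpos ξ)
      · norm_num
    have ht1 : t ≤ 1/2 := by
      rw [hT]; split_ifs; exacts [min_le_left _ _, le_refl _]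
    have htI : ∀ ξ ∈ I, t * D ξ ≤ m - v ξ := by
      intro ξ hξ
      have h1 : t ≤ (m - v ξ) / D ξ := by
        rw [hT]
        split_ifs with hIne
        · exact le_trans (min_le_right _ _) (Finset.inf'_le _ hξ)
        · exact absurd ⟨ξ, hξ⟩ hIne
      rw [← le_div_iff₀ (hDpos ξ)]
      exact h1
    -- the perturbed point
    set z : G₂ := y + t • a with hz
    have hval : ∀ ξ, ‖z - g ξ‖ ^ 2 - ‖x - ξ‖ ^ 2 = v ξ - 2 * (t * ⟪a, g ξ - y⟫) + t ^ 2 * ‖a‖ ^ 2 := by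
      intro ξ
      have h1 : z - g ξ = (y - g ξ) + t • a := by rw [hz]; abel
      have h2 : (⟪y - g ξ, t • a⟫ : ℝ) = t * ⟪y - g ξ, a⟫ := real_inner_smul_right _ _ _
      have h2' : (⟪y - g ξ, a⟫ : ℝ) = -⟪a, g ξ - y⟫ := by
        rw [real_inner_comm, show y - g ξ = -(g ξ - y) from by abel, inner_neg_right]
      have h3 : ‖t • a‖ ^ 2 = t ^ 2 * ‖a‖ ^ 2 := by
        rw [norm_smul, mul_pow, Real.norm_eq_abs, sq_abs]
      rw [h1, norm_add_sq_real, h2, h2', h3]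
      simp only [hv]
      ring
    have hlt : ∀ ξ ∈ F, ‖z - g ξ‖ ^ 2 - ‖x - ξ‖ ^ 2 < m := by
      intro ξ hξ
      rcases hcover ξ hξ with hact | hinact
      · have h1 := hkey ξ hact
        have h2 := hAval ξ hact
        rw [hval ξ, h2]
        nlinarith [mul_pos ht0 hna, mul_le_mul_of_nonneg_left h1 (le_of_lt ht0)]
      · have h1 : v ξ < m := (Finset.mem_filter.1 hinact).2
        have h2 := htI ξ hinact
        have h3 : -⟪a, g ξ - y⟫ ≤ |⟪a, g ξ - y⟫| := neg_le_abs _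
        rw [hval ξ]
        have ht2 : t ^ 2 ≤ t := by nlinarith
        simp only [hD] at h2
        nlinarith [abs_nonneg (⟪a, g ξ - y⟫)]
    have : F.sup' hne (fun ξ => ‖z - g ξ‖ ^ 2 - ‖x - ξ‖ ^ 2) < m :=
      (Finset.sup'_lt_iff hne).2 hlt
    linarith [hmin z]
  -- Step B : the barycentric computation
  rw [hK, convexHull_eq] at hyK
  obtain ⟨ι, s, w, zf, hw0, hw1, hzf, hyc⟩ := hyK
  have hchoice : ∀ i ∈ s, ∃ ξ, ξ ∈ Aset ∧ g ξ = zf i := by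
    intro i hi
    obtain ⟨ξ, hξ, hgξ⟩ := hzf i hi
    exact ⟨ξ, Finset.mem_coe.1 hξ, hgξ⟩
  choose! ξf hξfA hξfg using hchoice
  have hyrep : y = ∑ i ∈ s, w i • g (ξf i) := by
    rw [← hyc, Finset.centerMass_eq_of_sum_1 _ _ hw1]
    exact Finset.sum_congr rfl fun i hi => by rw [hξfg i hi]
  set xb : G₁ := ∑ i ∈ s, w i • ξf i with hxb
  have I1 := sum_dist_sq s w (fun i => g (ξf i)) hw1 y hyrep y
  have I2 := sum_dist_sq s w ξf hw1 xb hxb x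
  have I3 := double_sum_dist_sq s w (fun i => g (ξf i)) hw1 y hyrep
  have I4 := double_sum_dist_sq s w ξf hw1 xb hxb
  have I5 : ∑ i ∈ s, ∑ j ∈ s, w i * w j * ‖g (ξf i) - g (ξf j)‖ ^ 2
      ≤ ∑ i ∈ s, ∑ j ∈ s, w i * w j * ‖ξf i - ξf j‖ ^ 2 := by
    apply Finset.sum_le_sum
    intro i hi
    apply Finset.sum_le_sum
    intro j hj
    have h1 : ‖g (ξf i) - g (ξf j)‖ ≤ ‖ξf i - ξf j‖ :=
      hg _ (hAsub _ (hξfA i hi)) _ (hAsub _ (hξfA j hj))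
    have h2 : 0 ≤ w i * w j := mul_nonneg (hw0 i hi) (hw0 j hj)
    have h3 : ‖g (ξf i) - g (ξf j)‖ ^ 2 ≤ ‖ξf i - ξf j‖ ^ 2 := by
      nlinarith [norm_nonneg (g (ξf i) - g (ξf j)), norm_nonneg (ξf i - ξf j)]
    nlinarith
  have hact : ∀ i ∈ s, ‖y - g (ξf i)‖ ^ 2 = m + ‖x - ξf i‖ ^ 2 := by
    intro i hi
    have := hAval _ (hξfA i hi)
    simp only [hv] at this
    linarith
  have hmsum : m = ∑ i ∈ s, w i * (‖y - g (ξf i)‖ ^ 2 - ‖x - ξf i‖ ^ 2) := by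
    have : ∀ i ∈ s, w i * (‖y - g (ξf i)‖ ^ 2 - ‖x - ξf i‖ ^ 2) = w i * m := by
      intro i hi
      rw [hact i hi]; ring
    rw [Finset.sum_congr rfl this, ← Finset.sum_mul, hw1, one_mul]
  have hsplit : ∑ i ∈ s, w i * (‖y - g (ξf i)‖ ^ 2 - ‖x - ξf i‖ ^ 2)
      = ∑ i ∈ s, w i * ‖y - g (ξf i)‖ ^ 2 - ∑ i ∈ s, w i * ‖x - ξf i‖ ^ 2 := by
    rw [← Finset.sum_sub_distrib]
    exact Finset.sum_congr rfl fun i _ => by ring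
  have hfinal : m ≤ -‖x - xb‖ ^ 2 := by
    rw [hmsum, hsplit]
    have hy0 : ‖y - y‖ ^ 2 = 0 := by simp
    nlinarith [sq_nonneg (‖x - xb‖)]
  nlinarith [sq_nonneg (‖x - xb‖)]

lemma kirszbraun_point_s9 {G₁ G₂ : Type*} [NormedAddCommGroup G₁] [InnerProductSpace ℝ G₁]
    [NormedAddCommGroup G₂] [InnerProductSpace ℝ G₂] [CompleteSpace G₂]
    (D : Set G₁) (g : G₁ → G₂)
    (hg : ∀ ξ ∈ D, ∀ η ∈ D, ‖g ξ - g η‖ ≤ ‖ξ - η‖) (x : G₁) :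
    ∃ y : G₂, ∀ ξ ∈ D, ‖y - g ξ‖ ≤ ‖x - ξ‖ := by
  classical
  rcases D.eq_empty_or_nonempty with hD | ⟨ξ₀, hξ₀⟩
  · exact ⟨0, by simp [hD]⟩
  set S := {F : Finset G₁ // (↑F : Set G₁) ⊆ D ∧ F.Nonempty} with hS
  have hSne : Nonempty S := ⟨⟨{ξ₀}, by simpa using hξ₀, Finset.singleton_nonempty _⟩⟩
  set hfun : S → G₂ → ℝ :=
    fun F z => F.1.sup' F.2.2 (fun ξ => ‖z - g ξ‖ ^ 2 - ‖x - ξ‖ ^ 2) with hhfun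
  -- strong convexity
  have hsc : ∀ (F : S) (a b : G₂),
      hfun F ((2:ℝ)⁻¹ • (a + b)) ≤ hfun F a / 2 + hfun F b / 2 - ‖a - b‖ ^ 2 / 4 := by
    intro F a b
    apply Finset.sup'_le
    intro ξ hξ
    have h1 : (2:ℝ)⁻¹ • (a + b) - g ξ = (2:ℝ)⁻¹ • ((a - g ξ) + (b - g ξ)) := by
      module
    have par : ‖(a - g ξ) + (b - g ξ)‖ ^ 2
        = 2 * (‖a - g ξ‖ ^ 2 + ‖b - g ξ‖ ^ 2) - ‖a - b‖ ^ 2 := by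
      have par0 := parallelogram_law_with_norm ℝ (a - g ξ) (b - g ξ)
      have h2 : (a - g ξ) - (b - g ξ) = a - b := by abel
      rw [h2] at par0
      linarith
    have h3 : ‖(2:ℝ)⁻¹ • ((a - g ξ) + (b - g ξ))‖ ^ 2
        = (1/4) * ‖(a - g ξ) + (b - g ξ)‖ ^ 2 := by
      rw [norm_smul, mul_pow]
      norm_num
    have h4 : ‖a - g ξ‖ ^ 2 - ‖x - ξ‖ ^ 2 ≤ hfun F a :=
      Finset.le_sup' (fun ξ => ‖a - g ξ‖ ^ 2 - ‖x - ξ‖ ^ 2) hξ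
    have h5 : ‖b - g ξ‖ ^ 2 - ‖x - ξ‖ ^ 2 ≤ hfun F b :=
      Finset.le_sup' (fun ξ => ‖b - g ξ‖ ^ 2 - ‖x - ξ‖ ^ 2) hξ
    rw [h1, h3, par]
    linarith
  -- continuity and lower bound, hence minimizers
  have hmin : ∀ F : S, ∃ y : G₂, ∀ z, hfun F y ≤ hfun F z := by
    intro F
    apply aux_min_exists (hfun F) ?_ (-(‖x - F.2.2.choose‖ ^ 2) ) ?_ (hsc F)
    · rw [continuous_iff_continuousAt]
      intro z
      apply ContinuousAt.finset_sup'_apply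
      intro ξ hξ
      exact ContinuousAt.sub (by fun_prop) continuousAt_const
    · intro z
      have h1 : ‖z - g F.2.2.choose‖ ^ 2 - ‖x - F.2.2.choose‖ ^ 2 ≤ hfun F z :=
        Finset.le_sup' (fun ξ => ‖z - g ξ‖ ^ 2 - ‖x - ξ‖ ^ 2) F.2.2.choose_spec
      nlinarith [sq_nonneg ‖z - g F.2.2.choose‖]
  choose yF hyF using hmin
  set mF : S → ℝ := fun F => hfun F (yF F) with hmF
  -- finite Kirszbraun : the min is ≤ 0
  have f1 : ∀ F : S, mF F ≤ 0 := by
    intro F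
    exact kirszbraun_finset_s9 g x F.1 F.2.2
      (fun ξ hξ η hη => hg ξ (F.2.1 hξ) η (F.2.1 hη)) (yF F) (hyF F)
  -- monotonicity of hfun in F
  have hfunmono : ∀ (F F' : S), F.1 ⊆ F'.1 → ∀ z, hfun F z ≤ hfun F' z := by
    intro F F' hsub z
    apply Finset.sup'_le
    intro ξ hξ
    exact Finset.le_sup' (fun ξ => ‖z - g ξ‖ ^ 2 - ‖x - ξ‖ ^ 2) (hsub hξ)
  have f2 : ∀ (F F' : S), F.1 ⊆ F'.1 → mF F ≤ mF F' := by
    intro F F' hsub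
    exact le_trans (hyF F (yF F')) (hfunmono F F' hsub (yF F'))
  have f3 : ∀ (F F' : S), F.1 ⊆ F'.1 → ‖yF F - yF F'‖ ^ 2 ≤ 2 * (mF F' - mF F) := by
    intro F F' hsub
    have h1 := hsc F (yF F) (yF F')
    have h2 : mF F ≤ hfun F ((2:ℝ)⁻¹ • (yF F + yF F')) := hyF F _
    have h3 : hfun F (yF F') ≤ mF F' := hfunmono F F' hsub (yF F')
    linarith
  -- the sup of the minimal values
  have hbdd : BddAbove (Set.range mF) := ⟨0, by rintro _ ⟨F, rfl⟩; exact f1 F⟩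
  have hrne : (Set.range mF).Nonempty := Set.range_nonempty _
  set M : ℝ := sSup (Set.range mF) with hM
  have hle : ∀ F : S, mF F ≤ M := fun F => le_csSup hbdd ⟨F, rfl⟩
  have hex : ∀ n : ℕ, ∃ F : S, M - 1 / (n + 1) < mF F := by
    intro n
    have h1 : M - 1 / (n + 1) < M := by
      have : (0:ℝ) < 1 / ((n:ℝ) + 1) := by positivity
      linarith
    obtain ⟨_, ⟨F, rfl⟩, hF⟩ := exists_lt_of_lt_csSup hrne h1
    exact ⟨F, hF⟩
  choose Fs hFs using hex
  -- increasing sequence of finsets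
  set Gs : ℕ → S := fun n =>
    ⟨(Finset.range (n + 1)).sup (fun i => (Fs i).1), by
      intro ξ hξ
      simp only [Finset.mem_coe] at hξ
      rw [Finset.mem_sup] at hξ
      obtain ⟨i, _, hi⟩ := hξ
      exact (Fs i).2.1 hi, by
      obtain ⟨ξ, hξ⟩ := (Fs n).2.2
      exact ⟨ξ, Finset.mem_sup.2 ⟨n, Finset.self_mem_range_succ n, hξ⟩⟩⟩ with hGs
  have hGsub : ∀ n, (Fs n).1 ⊆ (Gs n).1 := by
    intro n ξ hξ
    exact Finset.mem_sup.2 ⟨n, Finset.self_mem_range_succ n, hξ⟩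
  have hGmono : ∀ n k, n ≤ k → (Gs n).1 ⊆ (Gs k).1 := by
    intro n k hnk
    have h := Finset.sup_mono (f := fun i => (Fs i).1)
      (Finset.range_subset_range.2 (by omega : n + 1 ≤ k + 1))
    exact h
  have hGlb : ∀ n, M - 1 / (n + 1) < mF (Gs n) :=
    fun n => lt_of_lt_of_le (hFs n) (f2 _ _ (hGsub n))
  have hkey : ∀ n k, n ≤ k → ‖yF (Gs n) - yF (Gs k)‖ ^ 2 ≤ 2 / (n + 1) := by
    intro n k hnk
    have h1 := f3 _ _ (hGmono n k hnk)
    have h2 := hGlb n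
    have h3 := hle (Gs k)
    have h22 : 2 / ((n:ℝ) + 1) = 2 * (1 / ((n:ℝ) + 1)) := by ring
    have : mF (Gs k) - mF (Gs n) ≤ 1 / ((n:ℝ) + 1) := by linarith
    linarith
  -- Cauchy
  have hcau : CauchySeq (fun n => yF (Gs n)) := by
    rw [Metric.cauchySeq_iff']
    intro ε hε
    obtain ⟨N, hN⟩ := exists_nat_gt (2 / ε ^ 2)
    refine ⟨N, fun n hn => ?_⟩
    have h1 := hkey N n hn
    rw [dist_eq_norm, ← neg_sub, norm_neg]
    have h2 : (2:ℝ) / (N + 1) < ε ^ 2 := by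
      rw [div_lt_iff₀ (by positivity)]
      rw [div_lt_iff₀ (by positivity)] at hN
      nlinarith
    nlinarith [norm_nonneg (yF (Gs N) - yF (Gs n))]
  obtain ⟨ystar, hystar⟩ := cauchySeq_tendsto_of_complete hcau
  refine ⟨ystar, fun ξ hξ => ?_⟩
  -- conclude for each ξ ∈ D
  have hbound : ∀ n : ℕ, ‖ystar - g ξ‖
      ≤ ‖ystar - yF (Gs n)‖ + Real.sqrt (2 / (n + 1)) + ‖x - ξ‖ := by
    intro n
    set F' : S := ⟨insert ξ (Gs n).1, by
      intro η hη
      simp only [Finset.coe_insert, Set.mem_insert_iff] at hη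
      rcases hη with rfl | hη
      · exact hξ
      · exact (Gs n).2.1 hη, Finset.insert_nonempty _ _⟩ with hF'
    have hsub : (Gs n).1 ⊆ F'.1 := Finset.subset_insert _ _
    have h1 : ‖yF (Gs n) - yF F'‖ ^ 2 ≤ 2 / (n + 1) := by
      have h2 := f3 _ _ hsub
      have h3 := hGlb n
      have h4 := hle F'
      have h22 : 2 / ((n:ℝ) + 1) = 2 * (1 / ((n:ℝ) + 1)) := by ring
      have : mF F' - mF (Gs n) ≤ 1 / ((n:ℝ) + 1) := by linarith
      linarith
    have h5 : ‖yF F' - g ξ‖ ^ 2 ≤ ‖x - ξ‖ ^ 2 := by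
      have h6 : ‖yF F' - g ξ‖ ^ 2 - ‖x - ξ‖ ^ 2 ≤ mF F' :=
        Finset.le_sup' (fun η => ‖yF F' - g η‖ ^ 2 - ‖x - η‖ ^ 2)
          (Finset.mem_insert_self ξ (Gs n).1)
      have h7 := f1 F'
      linarith
    have h8 : ‖yF F' - g ξ‖ ≤ ‖x - ξ‖ := by
      nlinarith [norm_nonneg (yF F' - g ξ), norm_nonneg (x - ξ)]
    have h9 : ‖yF (Gs n) - yF F'‖ ≤ Real.sqrt (2 / (n + 1)) := by
      rw [show (2:ℝ) / (n+1) = Real.sqrt (2/(n+1)) ^ 2 from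
        (Real.sq_sqrt (by positivity)).symm] at h1
      nlinarith [norm_nonneg (yF (Gs n) - yF F'), Real.sqrt_nonneg (2 / ((n:ℝ)+1))]
    calc ‖ystar - g ξ‖ = ‖(ystar - yF (Gs n)) + (yF (Gs n) - yF F') + (yF F' - g ξ)‖ := by
          congr 1; abel
      _ ≤ ‖(ystar - yF (Gs n)) + (yF (Gs n) - yF F')‖ + ‖yF F' - g ξ‖ := norm_add_le _ _
      _ ≤ ‖ystar - yF (Gs n)‖ + ‖yF (Gs n) - yF F'‖ + ‖yF F' - g ξ‖ := by
          have := norm_add_le (ystar - yF (Gs n)) (yF (Gs n) - yF F')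
          linarith
      _ ≤ ‖ystar - yF (Gs n)‖ + Real.sqrt (2 / (n + 1)) + ‖x - ξ‖ := by linarith
  -- pass to the limit
  have hlim : Filter.Tendsto
      (fun n : ℕ => ‖ystar - yF (Gs n)‖ + Real.sqrt (2 / (n + 1)) + ‖x - ξ‖)
      Filter.atTop (nhds (0 + 0 + ‖x - ξ‖)) := by
    apply Filter.Tendsto.add
    apply Filter.Tendsto.add
    · have h1 : Filter.Tendsto (fun n : ℕ => ystar - yF (Gs n)) Filter.atTop (nhds 0) := by
        have := (tendsto_const_nhds (x := ystar)).sub hystar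
        simpa using this
      simpa using h1.norm
    · have h2 : Filter.Tendsto (fun n : ℕ => (2:ℝ) / (n + 1)) Filter.atTop (nhds 0) := by
        have := tendsto_one_div_add_atTop_nhds_zero_nat (𝕜 := ℝ)
        have h3 := this.const_mul (2:ℝ)
        simp only [mul_zero] at h3
        convert h3 using 2 with n
        ring
      have := h2.sqrt
      simpa using this
    · exact tendsto_const_nhds
  have := ge_of_tendsto hlim (Filter.Eventually.of_forall hbound)
  simpa using this

/-- A strongly monotone Lipschitz map on a Hilbert space hits zero. -/
lemma strong_mono_surj {E : Type*} [NormedAddCommGroup E] [InnerProductSpace ℝ E]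
    [CompleteSpace E] (Φ : E → E) (c : ℝ) (hc0 : 0 < c) (hc1 : c ≤ 1)
    (hmono : ∀ y z : E, c * ‖y - z‖ ^ 2 ≤ ⟪Φ y - Φ z, y - z⟫)
    (hlip : ∀ y z : E, ‖Φ y - Φ z‖ ≤ 2 * ‖y - z‖) :
    ∃ y : E, Φ y = 0 := by
  set t : ℝ := c / 4 with ht
  set T : E → E := fun y => y - t • Φ y with hT
  have hcontr : ∀ y z : E, ‖T y - T z‖ ^ 2 ≤ (1 - c ^ 2 / 8) * ‖y - z‖ ^ 2 := by
    intro y z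
    have h1 : T y - T z = (y - z) - t • (Φ y - Φ z) := by
      simp only [hT, smul_sub]; abel
    have h2 : ‖(y - z) - t • (Φ y - Φ z)‖ ^ 2
        = ‖y - z‖ ^ 2 - 2 * (t * ⟪Φ y - Φ z, y - z⟫) + t ^ 2 * ‖Φ y - Φ z‖ ^ 2 := by
      have e := norm_sub_sq_real (y - z) (t • (Φ y - Φ z))
      rw [real_inner_smul_right, norm_smul, mul_pow, Real.norm_eq_abs, sq_abs,
        real_inner_comm] at e
      linarith [e]
    rw [h1, h2]
    have h3 := hmono y z
    have h4 := hlip y z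
    have h5 : ‖Φ y - Φ z‖ ^ 2 ≤ 4 * ‖y - z‖ ^ 2 := by
      nlinarith [norm_nonneg (Φ y - Φ z), norm_nonneg (y - z)]
    have ht0 : 0 < t := by rw [ht]; linarith
    have s1 : 2 * t * (c * ‖y - z‖ ^ 2) ≤ 2 * t * ⟪Φ y - Φ z, y - z⟫ :=
      mul_le_mul_of_nonneg_left h3 (by positivity)
    have s2 : t ^ 2 * ‖Φ y - Φ z‖ ^ 2 ≤ t ^ 2 * (4 * ‖y - z‖ ^ 2) :=
      mul_le_mul_of_nonneg_left h5 (sq_nonneg t)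
    have key2 : (1 - 2 * t * c + 4 * t ^ 2) * ‖y - z‖ ^ 2
        = (1 - c ^ 2 / 4) * ‖y - z‖ ^ 2 := by rw [ht]; ring
    have key3 : (1 - c ^ 2 / 4) * ‖y - z‖ ^ 2 ≤ (1 - c ^ 2 / 8) * ‖y - z‖ ^ 2 := by
      nlinarith [sq_nonneg ‖y - z‖, sq_nonneg c]
    nlinarith [s1, s2, key2, key3]
  set K : NNReal := ⟨Real.sqrt (1 - c ^ 2 / 8), Real.sqrt_nonneg _⟩ with hK
  have hKlt : (K : ℝ) < 1 := by
    have h8 : (0:ℝ) < c ^ 2 / 8 := by positivity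
    have h9 : (0:ℝ) ≤ 1 - c ^ 2 / 8 := by nlinarith
    have h10 : Real.sqrt (1 - c ^ 2 / 8) < Real.sqrt 1 := Real.sqrt_lt_sqrt h9 (by linarith)
    calc (K:ℝ) = Real.sqrt (1 - c ^ 2 / 8) := rfl
      _ < 1 := by rwa [Real.sqrt_one] at h10
  have hlipT : LipschitzWith K T := by
    apply LipschitzWith.of_dist_le_mul
    intro y z
    rw [dist_eq_norm, dist_eq_norm]
    have h1 := hcontr y z
    have hKsq : (K:ℝ) ^ 2 = 1 - c ^ 2 / 8 := by
      rw [hK]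
      exact Real.sq_sqrt (by nlinarith)
    have hKnn : (0:ℝ) ≤ (K:ℝ) := K.2
    nlinarith [norm_nonneg (T y - T z), norm_nonneg (y - z),
      mul_nonneg hKnn (norm_nonneg (y - z))]
  have hcon : ContractingWith K T := ⟨by exact_mod_cast hKlt, hlipT⟩
  have : Nonempty E := ⟨0⟩
  obtain ⟨y, hy⟩ := hcon.exists_fixedPoint 0 (by simp [edist_ne_top])
  refine ⟨y, ?_⟩
  have h2 : y - t • Φ y = y := hy.1
  have h3 : t • Φ y = 0 := by
    have := sub_eq_iff_eq_add.1 h2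
    have h4 : y = y + t • Φ y := by linear_combination (norm := module) this
    have := (left_eq_add).1 h4
    exact this
  have ht0 : t ≠ 0 := by rw [ht]; positivity
  exact (smul_eq_zero.1 h3).resolve_left ht0

set_option maxHeartbeats 1000000 in
lemma opcore_bound {H G₁ G₂ : Type*} [NormedAddCommGroup H] [InnerProductSpace ℝ H] [CompleteSpace H]
    [NormedAddCommGroup G₁] [InnerProductSpace ℝ G₁] [CompleteSpace G₁]
    [NormedAddCommGroup G₂] [InnerProductSpace ℝ G₂] [CompleteSpace G₂]
    (A₀ : H →ₗ.[ℝ] H) (A : H →ₗ.[ℝ] H)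
    (hskew : ∀ u v : A₀.domain, ⟪A₀ u, (v : H)⟫ = -⟪(u : H), A₀ v⟫)
    (hC : ∀ v w : H, (∃ hv : v ∈ A.domain, A ⟨v, hv⟩ = w) ↔
      (∀ u : A₀.domain, ⟪A₀ u, v⟫ = -⟪(u : H), w⟫))
    (F₁ : A.domain →ₗ[ℝ] G₁) (F₂ : A.domain →ₗ[ℝ] G₂)
    (hFsurj : ∀ (g₁ : G₁) (g₂ : G₂), ∃ u : A.domain, F₁ u = g₁ ∧ F₂ u = g₂)
    (hbs : ∀ u v : A.domain,
      ⟪A u, (v : H)⟫ + ⟪(u : H), A v⟫ = ⟪F₁ u, F₁ v⟫ - ⟪F₂ u, F₂ v⟫) :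
    ∃ M : ℝ, 1 ≤ M ∧ (∀ u : A.domain, ‖F₂ u‖ ^ 2 ≤ M ^ 2 * (‖(u : H)‖ ^ 2 + ‖A u‖ ^ 2)) := by
  classical
  have sqrt_le : ∀ a b : ℝ, 0 ≤ a → 0 ≤ b → a ^ 2 ≤ b ^ 2 → a ≤ b := by
    intro a b ha hb h; nlinarith
  -- A is "self-characterized" on its graph
  have hCval : ∀ v : A.domain, ∀ u : A₀.domain, ⟪A₀ u, (v : H)⟫ = -⟪(u : H), A v⟫ := by
    intro v
    exact (hC (v : H) (A v)).1 ⟨v.2, rfl⟩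
  -- the domain of A₀ embeds, and F vanishes on it
  have hembed : ∀ u₀ : A₀.domain, ∃ hv : (u₀ : H) ∈ A.domain, A ⟨(u₀ : H), hv⟩ = A₀ u₀ :=
    fun u₀ => (hC (u₀ : H) (A₀ u₀)).2 (fun u => hskew u u₀)
  have hpair0 : ∀ (u₀ : A₀.domain) (hv : (u₀ : H) ∈ A.domain),
      F₁ ⟨(u₀ : H), hv⟩ = 0 ∧ F₂ ⟨(u₀ : H), hv⟩ = 0 := by
    intro u₀ hv
    obtain ⟨hv', hA'⟩ := hembed u₀
    set uh : ↥A.domain := ⟨(u₀ : H), hv⟩ with huh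
    have hAuh : A uh = A₀ u₀ := hA'
    have hzero : ∀ v : A.domain, ⟪F₁ uh, F₁ v⟫ - ⟪F₂ uh, F₂ v⟫ = 0 := by
      intro v
      have h1 := hbs uh v
      have h3 := hCval v u₀
      rw [hAuh] at h1
      have h4 : ((uh : H)) = (u₀ : H) := rfl
      rw [h4] at h1
      linarith
    constructor
    · obtain ⟨v, hv1, hv2⟩ := hFsurj (F₁ uh) 0
      have h5 := hzero v
      rw [hv1, hv2] at h5
      simp only [inner_zero_right, sub_zero] at h5
      exact inner_self_eq_zero.1 h5
    · obtain ⟨v, hv1, hv2⟩ := hFsurj 0 (F₂ uh)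
      have h5 := hzero v
      rw [hv1, hv2] at h5
      simp only [inner_zero_right, zero_sub, neg_eq_zero] at h5
      exact inner_self_eq_zero.1 h5
  -- norm identity
  have nID : ∀ u : A.domain, ‖(u : H) + A u‖ ^ 2 + ‖F₂ u‖ ^ 2
      = ‖(u : H)‖ ^ 2 + ‖A u‖ ^ 2 + ‖F₁ u‖ ^ 2 := by
    intro u
    have h1 := hbs u u
    rw [real_inner_self_eq_norm_sq, real_inner_self_eq_norm_sq] at h1
    have h2 := norm_add_sq_real ((u : H)) (A u)
    have h3 : ⟪A u, (u : H)⟫ = ⟪(u : H), A u⟫ := real_inner_comm _ _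
    linarith
  -- the graph of A as a closed submodule of WithLp 2 (H × H)
  set Se : Submodule ℝ (WithLp 2 (H × H)) :=
    { carrier := {p | ∀ u : A₀.domain, ⟪A₀ u, p.fst⟫ = -⟪(u : H), p.snd⟫}
      add_mem' := by
        intro p q hp hq u
        have h1 := hp u
        have h2 := hq u
        show ⟪A₀ u, p.fst + q.fst⟫ = -⟪(u : H), p.snd + q.snd⟫
        rw [inner_add_right, inner_add_right, h1, h2]
        ring
      zero_mem' := by
        intro u
        show ⟪A₀ u, (0 : H)⟫ = -⟪(u : H), (0 : H)⟫
        simp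
      smul_mem' := by
        intro c p hp u
        have h1 := hp u
        show ⟪A₀ u, c • p.fst⟫ = -⟪(u : H), c • p.snd⟫
        rw [real_inner_smul_right, real_inner_smul_right, h1]
        ring } with hSe
  have hfstc : Continuous (fun p : WithLp 2 (H × H) => p.fst) :=
    continuous_fst.comp (WithLp.prodContinuousLinearEquiv 2 ℝ H H).continuous
  have hsndc : Continuous (fun p : WithLp 2 (H × H) => p.snd) :=
    continuous_snd.comp (WithLp.prodContinuousLinearEquiv 2 ℝ H H).continuous
  have hSecl : IsClosed ((Se : Submodule ℝ (WithLp 2 (H × H))) : Set (WithLp 2 (H × H))) := by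
    have heq : ((Se : Submodule ℝ (WithLp 2 (H × H))) : Set (WithLp 2 (H × H))) =
        ⋂ u : A₀.domain,
          {p : WithLp 2 (H × H) | ⟪A₀ u, p.fst⟫ + ⟪(u : H), p.snd⟫ = 0} := by
      ext p
      simp only [Set.mem_iInter, Set.mem_setOf_eq, SetLike.mem_coe]
      constructor
      · intro h u
        have := h u
        rw [this]; ring
      · intro h u
        have := h u
        linarith
    rw [heq]
    apply isClosed_iInter
    intro u
    apply isClosed_eq _ continuous_const
    exact (continuous_const.inner hfstc).add (continuous_const.inner hsndc)
  haveI : CompleteSpace Se := hSecl.completeSpace_coe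
  have hmemSe : ∀ e : Se, ((e : WithLp 2 (H × H)).fst) ∈ A.domain :=
    fun e => ((hC _ _).2 e.2).choose
  set uOf : Se → A.domain := fun e => ⟨(e : WithLp 2 (H × H)).fst, hmemSe e⟩ with huOf
  have hAOf : ∀ e : Se, A (uOf e) = (e : WithLp 2 (H × H)).snd :=
    fun e => ((hC _ _).2 e.2).choose_spec
  have huOfadd : ∀ e f : Se, uOf (e + f) = uOf e + uOf f := by
    intro e f; apply Subtype.ext; rfl
  have huOfsmul : ∀ (c : ℝ) (e : Se), uOf (c • e) = c • uOf e := by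
    intro c e; apply Subtype.ext; rfl
  set φ : Se →ₗ[ℝ] WithLp 2 (G₁ × G₂) :=
    { toFun := fun e => (WithLp.equiv 2 (G₁ × G₂)).symm (F₁ (uOf e), F₂ (uOf e))
      map_add' := by
        intro e f
        show (WithLp.equiv 2 (G₁ × G₂)).symm (F₁ (uOf (e + f)), F₂ (uOf (e + f)))
            = (WithLp.equiv 2 (G₁ × G₂)).symm (F₁ (uOf e), F₂ (uOf e))
              + (WithLp.equiv 2 (G₁ × G₂)).symm (F₁ (uOf f), F₂ (uOf f))
        rw [huOfadd, map_add, map_add]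
        rfl
      map_smul' := by
        intro c e
        show (WithLp.equiv 2 (G₁ × G₂)).symm (F₁ (uOf (c • e)), F₂ (uOf (c • e)))
            = c • (WithLp.equiv 2 (G₁ × G₂)).symm (F₁ (uOf e), F₂ (uOf e))
        rw [huOfsmul, map_smul, map_smul]
        rfl } with hφ
  have gfstc : Continuous (fun p : WithLp 2 (G₁ × G₂) => p.fst) :=
    continuous_fst.comp (WithLp.prodContinuousLinearEquiv 2 ℝ G₁ G₂).continuous
  have gsndc : Continuous (fun p : WithLp 2 (G₁ × G₂) => p.snd) :=
    continuous_snd.comp (WithLp.prodContinuousLinearEquiv 2 ℝ G₁ G₂).continuous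
  have hφfst : ∀ e : Se, (φ e).fst = F₁ (uOf e) := fun e => rfl
  have hφsnd : ∀ e : Se, (φ e).snd = F₂ (uOf e) := fun e => rfl
  have hφcont : Continuous φ := by
    apply LinearMap.continuous_of_seq_closed_graph
    intro seq ex q hex hq
    have hval : Filter.Tendsto (fun n => ((seq n : WithLp 2 (H × H)))) Filter.atTop
        (nhds (ex : WithLp 2 (H × H))) := (continuous_subtype_val.tendsto _).comp hex
    have hu : Filter.Tendsto (fun n => ((uOf (seq n)) : H)) Filter.atTop
        (nhds ((uOf ex : H))) := (hfstc.tendsto _).comp hval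
    have hw : Filter.Tendsto (fun n => A (uOf (seq n))) Filter.atTop
        (nhds (A (uOf ex))) := by
      have h1 : Filter.Tendsto (fun n => ((seq n : WithLp 2 (H × H)).snd)) Filter.atTop
          (nhds ((ex : WithLp 2 (H × H)).snd)) := (hsndc.tendsto _).comp hval
      have h2 : ∀ n, A (uOf (seq n)) = ((seq n : WithLp 2 (H × H)).snd) := fun n => hAOf _
      have h3 : A (uOf ex) = ((ex : WithLp 2 (H × H)).snd) := hAOf _
      rw [h3]
      exact h1.congr (fun n => (h2 n).symm)
    have hq1 : Filter.Tendsto (fun n => F₁ (uOf (seq n))) Filter.atTop (nhds q.fst) :=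
      (gfstc.tendsto _).comp hq
    have hq2 : Filter.Tendsto (fun n => F₂ (uOf (seq n))) Filter.atTop (nhds q.snd) :=
      (gsndc.tendsto _).comp hq
    have hkey : ∀ v : A.domain,
        ⟪q.fst, F₁ v⟫ - ⟪q.snd, F₂ v⟫ = ⟪F₁ (uOf ex), F₁ v⟫ - ⟪F₂ (uOf ex), F₂ v⟫ := by
      intro v
      have hL : Filter.Tendsto
          (fun n => (⟪F₁ (uOf (seq n)), F₁ v⟫ : ℝ) - ⟪F₂ (uOf (seq n)), F₂ v⟫)
          Filter.atTop (nhds ((⟪q.fst, F₁ v⟫ : ℝ) - ⟪q.snd, F₂ v⟫)) :=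
        (hq1.inner tendsto_const_nhds).sub (hq2.inner tendsto_const_nhds)
      have hR : Filter.Tendsto
          (fun n => (⟪A (uOf (seq n)), (v : H)⟫ : ℝ) + ⟪(uOf (seq n) : H), A v⟫)
          Filter.atTop
          (nhds ((⟪A (uOf ex), (v : H)⟫ : ℝ) + ⟪(uOf ex : H), A v⟫)) :=
        (hw.inner tendsto_const_nhds).add (hu.inner tendsto_const_nhds)
      have heqn : ∀ n, (⟪F₁ (uOf (seq n)), F₁ v⟫ : ℝ) - ⟪F₂ (uOf (seq n)), F₂ v⟫
          = ⟪A (uOf (seq n)), (v : H)⟫ + ⟪(uOf (seq n) : H), A v⟫ :=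
        fun n => (hbs (uOf (seq n)) v).symm
      have hlim := tendsto_nhds_unique (hL.congr heqn) hR
      have := hbs (uOf ex) v
      linarith
    obtain ⟨v1, hv11, hv12⟩ := hFsurj (q.fst - F₁ (uOf ex)) 0
    have he1 : q.fst = F₁ (uOf ex) := by
      have h := hkey v1
      rw [hv11, hv12] at h
      simp only [inner_zero_right, sub_zero] at h
      have h2 : (⟪q.fst - F₁ (uOf ex), q.fst - F₁ (uOf ex)⟫ : ℝ) = 0 := by
        rw [inner_sub_left]; linarith
      have := inner_self_eq_zero.1 h2
      rw [sub_eq_zero] at this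
      exact this
    obtain ⟨v2, hv21, hv22⟩ := hFsurj 0 (q.snd - F₂ (uOf ex))
    have he2 : q.snd = F₂ (uOf ex) := by
      have h := hkey v2
      rw [hv21, hv22] at h
      simp only [inner_zero_right, zero_sub] at h
      have h2 : (⟪q.snd - F₂ (uOf ex), q.snd - F₂ (uOf ex)⟫ : ℝ) = 0 := by
        rw [inner_sub_left]; linarith
      have := inner_self_eq_zero.1 h2
      rw [sub_eq_zero] at this
      exact this
    apply (WithLp.prodContinuousLinearEquiv 2 ℝ G₁ G₂).injective
    apply Prod.ext
    · exact he1
    · exact he2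
  set φc : Se →L[ℝ] WithLp 2 (G₁ × G₂) := ⟨φ, hφcont⟩ with hφc
  set M : ℝ := max ‖φc‖ 1 with hM
  have hM1 : (1 : ℝ) ≤ M := le_max_right _ _
  have hMnn : (0 : ℝ) ≤ M := by linarith
  have hbound : ∀ u : A.domain, ‖F₂ u‖ ^ 2 ≤ M ^ 2 * (‖(u : H)‖ ^ 2 + ‖A u‖ ^ 2) := by
    intro u
    have hmem : ((WithLp.equiv 2 (H × H)).symm ((u : H), A u)) ∈ Se := by
      intro z
      exact hCval u z
    set e : Se := ⟨_, hmem⟩ with he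
    have huOfe : uOf e = u := Subtype.ext rfl
    have h1 : φ e = (WithLp.equiv 2 (G₁ × G₂)).symm (F₁ u, F₂ u) := by
      show (WithLp.equiv 2 (G₁ × G₂)).symm (F₁ (uOf e), F₂ (uOf e)) = _
      rw [huOfe]
    have h2 : ‖φc e‖ ≤ ‖φc‖ * ‖e‖ := φc.le_opNorm e
    have h3 : ‖φc e‖ ^ 2 = ‖F₁ u‖ ^ 2 + ‖F₂ u‖ ^ 2 := by
      have h4 := WithLp.prod_norm_sq_eq_of_L2 (φ e)
      have h5 : (φ e).fst = F₁ u := by rw [hφfst, huOfe]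
      have h6 : (φ e).snd = F₂ u := by rw [hφsnd, huOfe]
      rw [h5, h6] at h4
      exact h4
    have h7 : ‖e‖ ^ 2 = ‖(u : H)‖ ^ 2 + ‖A u‖ ^ 2 := by
      have h8 := WithLp.prod_norm_sq_eq_of_L2 (e : WithLp 2 (H × H))
      have h9 : (e : WithLp 2 (H × H)).fst = (u : H) := rfl
      have h10 : (e : WithLp 2 (H × H)).snd = A u := rfl
      rw [h9, h10] at h8
      exact h8
    have h11 : ‖φc‖ ≤ M := le_max_left _ _
    have h12 : ‖φc e‖ ^ 2 ≤ M ^ 2 * ‖e‖ ^ 2 := by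
      nlinarith [norm_nonneg (φc e), norm_nonneg e, φc.opNorm_nonneg,
        mul_le_mul_of_nonneg_right h11 (norm_nonneg e)]
    rw [h3, h7] at h12
    nlinarith [sq_nonneg ‖F₁ u‖]
  exact ⟨M, hM1, hbound⟩

set_option maxHeartbeats 1000000 in
set_option synthInstance.maxHeartbeats 400000 in
lemma opcore_surj {H G₁ G₂ : Type*} [NormedAddCommGroup H] [InnerProductSpace ℝ H] [CompleteSpace H]
    [NormedAddCommGroup G₁] [InnerProductSpace ℝ G₁] [CompleteSpace G₁]
    [NormedAddCommGroup G₂] [InnerProductSpace ℝ G₂] [CompleteSpace G₂]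
    (A₀ : H →ₗ.[ℝ] H) (A : H →ₗ.[ℝ] H)
    (hskew : ∀ u v : A₀.domain, ⟪A₀ u, (v : H)⟫ = -⟪(u : H), A₀ v⟫)
    (hC : ∀ v w : H, (∃ hv : v ∈ A.domain, A ⟨v, hv⟩ = w) ↔
      (∀ u : A₀.domain, ⟪A₀ u, v⟫ = -⟪(u : H), w⟫))
    (F₁ : A.domain →ₗ[ℝ] G₁) (F₂ : A.domain →ₗ[ℝ] G₂)
    (hFsurj : ∀ (g₁ : G₁) (g₂ : G₂), ∃ u : A.domain, F₁ u = g₁ ∧ F₂ u = g₂)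
    (hbs : ∀ u v : A.domain,
      ⟪A u, (v : H)⟫ + ⟪(u : H), A v⟫ = ⟪F₁ u, F₁ v⟫ - ⟪F₂ u, F₂ v⟫)
    (M : ℝ) (hM1 : 1 ≤ M)
    (hbound : ∀ u : A.domain, ‖F₂ u‖ ^ 2 ≤ M ^ 2 * (‖(u : H)‖ ^ 2 + ‖A u‖ ^ 2)) :
    ∀ (f : H) (y : G₂), ∃ u : A.domain, (u : H) + A u = f ∧ F₂ u = y := by
  classical
  have sqrt_le : ∀ a b : ℝ, 0 ≤ a → 0 ≤ b → a ^ 2 ≤ b ^ 2 → a ≤ b := by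
    intro a b ha hb h; nlinarith
  have hMnn : (0 : ℝ) ≤ M := by linarith
  have hCval : ∀ v : A.domain, ∀ u : A₀.domain, ⟪A₀ u, (v : H)⟫ = -⟪(u : H), A v⟫ := by
    intro v
    exact (hC (v : H) (A v)).1 ⟨v.2, rfl⟩
  have hembed : ∀ u₀ : A₀.domain, ∃ hv : (u₀ : H) ∈ A.domain, A ⟨(u₀ : H), hv⟩ = A₀ u₀ :=
    fun u₀ => (hC (u₀ : H) (A₀ u₀)).2 (fun u => hskew u u₀)
  have hpair0 : ∀ (u₀ : A₀.domain) (hv : (u₀ : H) ∈ A.domain),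
      F₁ ⟨(u₀ : H), hv⟩ = 0 ∧ F₂ ⟨(u₀ : H), hv⟩ = 0 := by
    intro u₀ hv
    obtain ⟨hv', hA'⟩ := hembed u₀
    set uh : ↥A.domain := ⟨(u₀ : H), hv⟩ with huh
    have hAuh : A uh = A₀ u₀ := hA'
    have hzero : ∀ v : A.domain, ⟪F₁ uh, F₁ v⟫ - ⟪F₂ uh, F₂ v⟫ = 0 := by
      intro v
      have h1 := hbs uh v
      have h3 := hCval v u₀
      rw [hAuh] at h1
      have h4 : ((uh : H)) = (u₀ : H) := rfl
      rw [h4] at h1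
      linarith
    constructor
    · obtain ⟨v, hv1, hv2⟩ := hFsurj (F₁ uh) 0
      have h5 := hzero v
      rw [hv1, hv2] at h5
      simp only [inner_zero_right, sub_zero] at h5
      exact inner_self_eq_zero.1 h5
    · obtain ⟨v, hv1, hv2⟩ := hFsurj 0 (F₂ uh)
      have h5 := hzero v
      rw [hv1, hv2] at h5
      simp only [inner_zero_right, zero_sub, neg_eq_zero] at h5
      exact inner_self_eq_zero.1 h5
  have nID : ∀ u : A.domain, ‖(u : H) + A u‖ ^ 2 + ‖F₂ u‖ ^ 2
      = ‖(u : H)‖ ^ 2 + ‖A u‖ ^ 2 + ‖F₁ u‖ ^ 2 := by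
    intro u
    have h1 := hbs u u
    rw [real_inner_self_eq_norm_sq, real_inner_self_eq_norm_sq] at h1
    have h2 := norm_add_sq_real ((u : H)) (A u)
    have h3 : ⟪A u, (u : H)⟫ = ⟪(u : H), A u⟫ := real_inner_comm _ _
    linarith
  -- the map ℒ u = (u + A u, F₂ u)
  set L : ↥A.domain →ₗ[ℝ] WithLp 2 (H × G₂) :=
    { toFun := fun u => (WithLp.equiv 2 (H × G₂)).symm ((u : H) + A u, F₂ u)
      map_add' := by
        intro u v
        show (WithLp.equiv 2 (H × G₂)).symm (((u + v : A.domain) : H) + A (u + v), F₂ (u + v))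
            = (WithLp.equiv 2 (H × G₂)).symm ((u : H) + A u, F₂ u)
              + (WithLp.equiv 2 (H × G₂)).symm ((v : H) + A v, F₂ v)
        rw [F₂.map_add, A.map_add]
        have : ((u + v : A.domain) : H) = (u : H) + (v : H) := rfl
        rw [this]
        have hgoal : ((u : H) + (v : H) + (A u + A v), F₂ u + F₂ v)
            = (((u : H) + A u) + ((v : H) + A v), F₂ u + F₂ v) := by
          rw [Prod.mk.injEq]
          constructor
          · abel
          · rfl
        rw [hgoal]
        rfl
      map_smul' := by
        intro c u
        show (WithLp.equiv 2 (H × G₂)).symm (((c • u : A.domain) : H) + A (c • u), F₂ (c • u))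
            = c • (WithLp.equiv 2 (H × G₂)).symm ((u : H) + A u, F₂ u)
        rw [F₂.map_smul, A.map_smul]
        have : ((c • u : A.domain) : H) = c • (u : H) := rfl
        rw [this]
        have hgoal : (c • (u : H) + c • A u, c • F₂ u)
            = (c • ((u : H) + A u), c • F₂ u) := by
          rw [Prod.mk.injEq]
          constructor
          · rw [smul_add]
          · rfl
        rw [hgoal]
        rfl } with hL
  have hLfst : ∀ u : A.domain, (L u).fst = (u : H) + A u := fun u => rfl
  have hLsnd : ∀ u : A.domain, (L u).snd = F₂ u := fun u => rfl
  have nID2 : ∀ u : A.domain, ‖L u‖ ^ 2 = ‖(u : H)‖ ^ 2 + ‖A u‖ ^ 2 + ‖F₁ u‖ ^ 2 := by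
    intro u
    have h1 := WithLp.prod_norm_sq_eq_of_L2 (L u)
    rw [hLfst, hLsnd] at h1
    have h2 := nID u
    linarith
  have hLsub : ∀ u v : A.domain, ‖(u : H) - (v : H)‖ ^ 2 + ‖A u - A v‖ ^ 2 ≤ ‖L u - L v‖ ^ 2 := by
    intro u v
    have h1 : L u - L v = L (u - v) := (map_sub L u v).symm
    have h2 := nID2 (u - v)
    have h3 : ((u - v : A.domain) : H) = (u : H) - (v : H) := rfl
    have h4 : A (u - v) = A u - A v := A.map_sub u v
    rw [h1, h2, h3, h4]
    nlinarith [sq_nonneg ‖F₁ (u - v)‖]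
  -- range of L is closed
  have hrangecl : IsClosed ((LinearMap.range L : Submodule ℝ (WithLp 2 (H × G₂)))
      : Set (WithLp 2 (H × G₂))) := by
    apply IsSeqClosed.isClosed
    intro wseq w hmem hconv
    choose useq huseq using fun n => (LinearMap.mem_range.1 (hmem n))
    have hwc : CauchySeq wseq := hconv.cauchySeq
    have hauc : CauchySeq (fun n => (((useq n : H), A (useq n)) : H × H)) := by
      rw [Metric.cauchySeq_iff] at hwc ⊢
      intro ε hε
      obtain ⟨N, hN⟩ := hwc ε hε
      refine ⟨N, fun m hm n hn => ?_⟩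
      have h1 := hN m hm n hn
      have h2 := hLsub (useq m) (useq n)
      rw [huseq m, huseq n] at h2
      have h3 : dist (wseq m) (wseq n) = ‖wseq m - wseq n‖ := dist_eq_norm _ _
      rw [Prod.dist_eq]
      have hd1 : dist ((useq m : H)) ((useq n : H)) ≤ dist (wseq m) (wseq n) := by
        rw [dist_eq_norm, h3]
        apply sqrt_le _ _ (norm_nonneg _) (norm_nonneg _)
        nlinarith [sq_nonneg ‖A (useq m) - A (useq n)‖]
      have hd2 : dist (A (useq m)) (A (useq n)) ≤ dist (wseq m) (wseq n) := by
        rw [dist_eq_norm, h3]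
        apply sqrt_le _ _ (norm_nonneg _) (norm_nonneg _)
        nlinarith [sq_nonneg ‖(useq m : H) - (useq n : H)‖]
      have := max_le (le_of_lt (lt_of_le_of_lt hd1 h1)) (le_of_lt (lt_of_le_of_lt hd2 h1))
      exact lt_of_le_of_lt (max_le hd1 hd2) h1
    obtain ⟨⟨uinf, winf⟩, hlim⟩ := cauchySeq_tendsto_of_complete hauc
    have hulim : Filter.Tendsto (fun n => (useq n : H)) Filter.atTop (nhds uinf) :=
      (continuous_fst.tendsto _).comp hlim
    have hwlim : Filter.Tendsto (fun n => A (useq n)) Filter.atTop (nhds winf) :=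
      (continuous_snd.tendsto _).comp hlim
    -- the limit is in the domain of A
    have hP : ∀ z : A₀.domain, ⟪A₀ z, uinf⟫ = -⟪(z : H), winf⟫ := by
      intro z
      have h1 : ∀ n, (⟪A₀ z, (useq n : H)⟫ : ℝ) = -⟪(z : H), A (useq n)⟫ :=
        fun n => hCval (useq n) z
      have hL1 : Filter.Tendsto (fun n => (⟪A₀ z, (useq n : H)⟫ : ℝ)) Filter.atTop
          (nhds (⟪A₀ z, uinf⟫ : ℝ)) := (tendsto_const_nhds.inner hulim)
      have hL2 : Filter.Tendsto (fun n => (-⟪(z : H), A (useq n)⟫ : ℝ)) Filter.atTop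
          (nhds (-⟪(z : H), winf⟫ : ℝ)) := (tendsto_const_nhds.inner hwlim).neg
      exact tendsto_nhds_unique (hL1.congr h1) hL2
    obtain ⟨hvmem, hvA⟩ := (hC uinf winf).2 hP
    set uhat : ↥A.domain := ⟨uinf, hvmem⟩ with huhat
    -- F₂ converges
    have hF2lim : Filter.Tendsto (fun n => F₂ (useq n)) Filter.atTop (nhds (F₂ uhat)) := by
      rw [tendsto_iff_norm_sub_tendsto_zero]
      apply squeeze_zero (fun n => norm_nonneg _)
        (g := fun n => M * (‖(useq n : H) - uinf‖ + ‖A (useq n) - winf‖))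
      · intro n
        have h1 : F₂ (useq n) - F₂ uhat = F₂ (useq n - uhat) := (map_sub F₂ _ _).symm
        rw [h1]
        have h2 := hbound (useq n - uhat)
        have h3 : ‖((useq n - uhat : A.domain) : H)‖ = ‖(useq n : H) - uinf‖ := rfl
        have h4 : ‖A (useq n - uhat)‖ = ‖A (useq n) - winf‖ := by
          rw [A.map_sub, hvA]
        rw [h3, h4] at h2
        apply sqrt_le _ _ (norm_nonneg _) (by positivity)
        have expand : (M * (‖(useq n : H) - uinf‖ + ‖A (useq n) - winf‖)) ^ 2
            = M ^ 2 * (‖(useq n : H) - uinf‖ ^ 2 + ‖A (useq n) - winf‖ ^ 2)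
              + M ^ 2 * (2 * (‖(useq n : H) - uinf‖ * ‖A (useq n) - winf‖)) := by ring
        rw [expand]
        have : 0 ≤ M ^ 2 * (2 * (‖(useq n : H) - uinf‖ * ‖A (useq n) - winf‖)) := by positivity
        linarith
      · have h5 : Filter.Tendsto (fun n => ‖(useq n : H) - uinf‖ + ‖A (useq n) - winf‖)
            Filter.atTop (nhds (0 + 0)) := by
          apply Filter.Tendsto.add
          · exact (tendsto_iff_norm_sub_tendsto_zero.1 hulim)
          · exact (tendsto_iff_norm_sub_tendsto_zero.1 hwlim)
        have h6 := h5.const_mul M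
        simpa using h6
    -- L (useq n) converges to L uhat
    have hLlim : Filter.Tendsto (fun n => L (useq n)) Filter.atTop (nhds (L uhat)) := by
      have h1 : Filter.Tendsto (fun n => (((useq n : H) + A (useq n), F₂ (useq n)) : H × G₂))
          Filter.atTop (nhds ((uinf + winf, F₂ uhat) : H × G₂)) :=
        ((hulim.add hwlim).prodMk_nhds hF2lim)
      have h2 : Filter.Tendsto (fun n =>
          (WithLp.equiv 2 (H × G₂)).symm (((useq n : H) + A (useq n), F₂ (useq n))))
          Filter.atTop (nhds ((WithLp.equiv 2 (H × G₂)).symm ((uinf + winf, F₂ uhat)))) := by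
        apply ((WithLp.prodContinuousLinearEquiv 2 ℝ H G₂).symm.continuous.tendsto _).comp h1
      have h3 : ∀ n, (WithLp.equiv 2 (H × G₂)).symm (((useq n : H) + A (useq n), F₂ (useq n)))
          = L (useq n) := fun n => rfl
      have h4 : (WithLp.equiv 2 (H × G₂)).symm ((uinf + winf, F₂ uhat)) = L uhat := by
        show (WithLp.equiv 2 (H × G₂)).symm ((uinf + winf, F₂ uhat))
            = (WithLp.equiv 2 (H × G₂)).symm ((uhat : H) + A uhat, F₂ uhat)
        rw [hvA]
      rw [← h4]
      exact h2.congr h3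
    have hweq : w = L uhat := by
      apply tendsto_nhds_unique _ hLlim
      exact hconv.congr (fun n => (huseq n).symm)
    exact ⟨uhat, hweq.symm⟩
  -- the range of L is dense
  have hdense : ∀ z : WithLp 2 (H × G₂), (∀ u : A.domain, ⟪L u, z⟫ = 0) → z = 0 := by
    intro z hz
    have hz' : ∀ u : A.domain, (⟪(u : H) + A u, z.fst⟫ : ℝ) + ⟪F₂ u, z.snd⟫ = 0 := by
      intro u
      have h1 := hz u
      rw [WithLp.prod_inner_apply] at h1
      rw [← hLfst u, ← hLsnd u]
      exact h1
    -- z.fst belongs to the domain of A with A z.fst = z.fst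
    have hP : ∀ u₀ : A₀.domain, ⟪A₀ u₀, z.fst⟫ = -⟪(u₀ : H), z.fst⟫ := by
      intro u₀
      obtain ⟨hv, hA'⟩ := hembed u₀
      have h1 := hz' ⟨(u₀ : H), hv⟩
      rw [(hpair0 u₀ hv).2] at h1
      rw [inner_zero_left, add_zero] at h1
      have h1' : (⟪(u₀ : H) + A₀ u₀, z.fst⟫ : ℝ) = 0 := by
        rw [← hA']
        exact h1
      rw [inner_add_left] at h1'
      linarith
    obtain ⟨hvmem, hvA⟩ := (hC z.fst z.fst).2 hP
    set zhat : ↥A.domain := ⟨z.fst, hvmem⟩ with hzhat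
    -- F₁ zhat = 0 and F₂ zhat = z.snd
    have hkey : ∀ u : A.domain, (⟪F₁ u, F₁ zhat⟫ : ℝ) - ⟪F₂ u, F₂ zhat⟫ + ⟪F₂ u, z.snd⟫ = 0 := by
      intro u
      have h7 : (⟪A u, z.fst⟫ : ℝ) + ⟪(u : H), z.fst⟫
          = ⟪F₁ u, F₁ zhat⟫ - ⟪F₂ u, F₂ zhat⟫ := by
        have h1 := hbs u zhat
        rw [hvA] at h1
        exact h1
      have h3 := hz' u
      rw [inner_add_left] at h3
      linarith
    have hF1z : F₁ zhat = 0 := by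
      obtain ⟨v, hv1, hv2⟩ := hFsurj (F₁ zhat) 0
      have h1 := hkey v
      rw [hv1, hv2] at h1
      simp only [inner_zero_left, add_zero, sub_zero] at h1
      exact inner_self_eq_zero.1 h1
    have hF2z : F₂ zhat = z.snd := by
      obtain ⟨v, hv1, hv2⟩ := hFsurj 0 (z.snd - F₂ zhat)
      have h1 := hkey v
      rw [hv1, hv2] at h1
      simp only [inner_zero_left, zero_sub] at h1
      have h2 : (⟪z.snd - F₂ zhat, z.snd - F₂ zhat⟫ : ℝ) = 0 := by
        rw [inner_sub_right]
        linarith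
      have := inner_self_eq_zero.1 h2
      rw [sub_eq_zero] at this
      exact this.symm
    -- plug u := zhat
    have h1 : (⟪z.fst + z.fst, z.fst⟫ : ℝ) + ⟪z.snd, z.snd⟫ = 0 := by
      have h0 := hz' zhat
      rw [hvA, hF2z] at h0
      exact h0
    rw [inner_add_left, real_inner_self_eq_norm_sq, real_inner_self_eq_norm_sq] at h1
    have h3 : z.fst = 0 ∧ z.snd = 0 := by
      constructor
      · have : ‖z.fst‖ ^ 2 = 0 := by nlinarith [sq_nonneg ‖z.fst‖, sq_nonneg ‖z.snd‖]
        have := (pow_eq_zero_iff (n := 2) (by norm_num)).1 this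
        exact norm_eq_zero.1 this
      · have : ‖z.snd‖ ^ 2 = 0 := by nlinarith [sq_nonneg ‖z.fst‖, sq_nonneg ‖z.snd‖]
        have := (pow_eq_zero_iff (n := 2) (by norm_num)).1 this
        exact norm_eq_zero.1 this
    apply (WithLp.prodContinuousLinearEquiv 2 ℝ H G₂).injective
    apply Prod.ext
    · exact h3.1
    · exact h3.2
  -- conclude surjectivity
  have hsurj : ∀ w : WithLp 2 (H × G₂), w ∈ LinearMap.range L := by
    set K : Submodule ℝ (WithLp 2 (H × G₂)) := LinearMap.range L with hK
    haveI : CompleteSpace K := hrangecl.completeSpace_coe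
    have horth : Kᗮ = ⊥ := by
      rw [Submodule.eq_bot_iff]
      intro z hz
      apply hdense z
      intro u
      exact (Submodule.mem_orthogonal K z).1 hz (L u) ⟨u, rfl⟩
    have htop := Submodule.orthogonal_eq_bot_iff.1 horth
    intro w
    rw [htop]
    trivial
  intro f y
  obtain ⟨u, hu⟩ := hsurj ((WithLp.equiv 2 (H × G₂)).symm (f, y))
  refine ⟨u, ?_, ?_⟩
  · have := congrArg (fun w : WithLp 2 (H × G₂) => w.fst) hu
    exact this
  · have := congrArg (fun w : WithLp 2 (H × G₂) => w.snd) hu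
    exact this

set_option maxHeartbeats 1000000 in
/-- Main theorem: a restriction `B ⊆ A` is m-accretive iff there is a map `g : G₁ → G₂`
with `‖g x - g y‖ ≤ ‖x - y‖` for all `x, y ∈ G₁` such that
`dom B = {u ∈ dom A : g (F₁ u) = F₂ u}`. -/
theorem stmt_9 {H : Type*} [NormedAddCommGroup H] [InnerProductSpace ℝ H] [CompleteSpace H]
    {G₁ G₂ : Type*} [NormedAddCommGroup G₁] [InnerProductSpace ℝ G₁] [CompleteSpace G₁]
    [NormedAddCommGroup G₂] [InnerProductSpace ℝ G₂] [CompleteSpace G₂]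
    (A₀ : H →ₗ.[ℝ] H) (hdense : Dense (A₀.domain : Set H)) (hclosed : A₀.IsClosed)
    (hskew : ∀ u v : A₀.domain, ⟪A₀ u, (v : H)⟫ = -⟪(u : H), A₀ v⟫)
    (A : H →ₗ.[ℝ] H) (hA : A = -A₀.adjoint)
    (F₁ : A.domain →ₗ[ℝ] G₁) (F₂ : A.domain →ₗ[ℝ] G₂)
    (hFsurj : ∀ (g₁ : G₁) (g₂ : G₂), ∃ u : A.domain, F₁ u = g₁ ∧ F₂ u = g₂)
    (hbs : ∀ u v : A.domain,
      ⟪A u, (v : H)⟫ + ⟪(u : H), A v⟫ = ⟪F₁ u, F₁ v⟫ - ⟪F₂ u, F₂ v⟫)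
    (domB : Set A.domain) :
    ((∀ u ∈ domB, ∀ v ∈ domB, 0 ≤ ⟪A u - A v, (u : H) - (v : H)⟫) ∧
      (∀ f : H, ∃ u ∈ domB, (u : H) + A u = f)) ↔
    (∃ g : G₁ → G₂, (∀ x y : G₁, ‖g x - g y‖ ≤ ‖x - y‖) ∧
      ∀ u : A.domain, u ∈ domB ↔ g (F₁ u) = F₂ u) := by
  classical
  have sqrt_le : ∀ a b : ℝ, 0 ≤ a → 0 ≤ b → a ^ 2 ≤ b ^ 2 → a ≤ b := by
    intro a b ha hb h; nlinarith
  -- characterization of the graph of A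
  have hC : ∀ v w : H, (∃ hv : v ∈ A.domain, A ⟨v, hv⟩ = w) ↔
      (∀ u : A₀.domain, ⟪A₀ u, v⟫ = -⟪(u : H), w⟫) := by
    subst hA
    intro v w
    constructor
    · rintro ⟨hv, hw⟩ u
      have h2 : (-A₀.adjoint) ⟨v, hv⟩ = -((A₀.adjoint) ⟨v, hv⟩) := LinearPMap.neg_apply _ _
      have h1 : (A₀.adjoint) ⟨v, hv⟩ = -w := by
        rw [h2] at hw
        exact neg_eq_iff_eq_neg.1 hw
      have h3 := LinearPMap.adjoint_isFormalAdjoint hdense (⟨v, hv⟩ : A₀.adjoint.domain) u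
      rw [h1] at h3
      have h4 : (⟪A₀ u, v⟫ : ℝ) = ⟪v, A₀ u⟫ := real_inner_comm _ _
      have h5 : (⟪-w, (u : H)⟫ : ℝ) = -⟪w, (u : H)⟫ := by rw [inner_neg_left]
      have h6 : (⟪w, (u : H)⟫ : ℝ) = ⟪(u : H), w⟫ := real_inner_comm _ _
      linarith
    · intro hP
      have heq : ∀ x : A₀.domain, (⟪-w, (x : H)⟫ : ℝ) = ⟪v, A₀ x⟫ := by
        intro x
        have e1 : (⟪v, A₀ x⟫ : ℝ) = ⟪A₀ x, v⟫ := real_inner_comm _ _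
        have e2 := hP x
        have e3 : (⟪-w, (x : H)⟫ : ℝ) = -⟪w, (x : H)⟫ := by rw [inner_neg_left]
        have e4 : (⟪w, (x : H)⟫ : ℝ) = ⟪(x : H), w⟫ := real_inner_comm _ _
        linarith
      have hv : v ∈ (A₀.adjoint).domain :=
        LinearPMap.mem_adjoint_domain_of_exists _ ⟨-w, heq⟩
      have hval : (A₀.adjoint) ⟨v, hv⟩ = -w :=
        LinearPMap.adjoint_apply_eq hdense ⟨v, hv⟩ heq
      refine ⟨hv, ?_⟩
      show (-A₀.adjoint) ⟨v, hv⟩ = w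
      rw [LinearPMap.neg_apply, hval, neg_neg]
  -- the polarization identity for the boundary maps
  have hIP : ∀ u v : A.domain,
      2 * ⟪A u - A v, (u : H) - (v : H)⟫ = ‖F₁ u - F₁ v‖ ^ 2 - ‖F₂ u - F₂ v‖ ^ 2 := by
    intro u v
    have h1 := hbs (u - v) (u - v)
    rw [real_inner_self_eq_norm_sq, real_inner_self_eq_norm_sq] at h1
    rw [map_sub F₁, map_sub F₂, A.map_sub] at h1
    have hco : ((u - v : A.domain) : H) = (u : H) - (v : H) := rfl
    rw [hco] at h1
    have h2 : ⟪(u : H) - (v : H), A u - A v⟫ = ⟪A u - A v, (u : H) - (v : H)⟫ :=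
      real_inner_comm _ _
    linarith
  have nID : ∀ u : A.domain, ‖(u : H) + A u‖ ^ 2 + ‖F₂ u‖ ^ 2
      = ‖(u : H)‖ ^ 2 + ‖A u‖ ^ 2 + ‖F₁ u‖ ^ 2 := by
    intro u
    have h1 := hbs u u
    rw [real_inner_self_eq_norm_sq, real_inner_self_eq_norm_sq] at h1
    have h2 := norm_add_sq_real ((u : H)) (A u)
    have h3 : ⟪A u, (u : H)⟫ = ⟪(u : H), A u⟫ := real_inner_comm _ _
    linarith
  constructor
  · -- m-accretive implies representation by a contraction
    rintro ⟨hacc, hran⟩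
    have hcontr : ∀ u ∈ domB, ∀ v ∈ domB, ‖F₂ u - F₂ v‖ ≤ ‖F₁ u - F₁ v‖ := by
      intro u hu v hv
      have h1 := hacc u hu v hv
      have h2 := hIP u v
      apply sqrt_le _ _ (norm_nonneg _) (norm_nonneg _)
      linarith
    have hmax : ∀ u : A.domain,
        (∀ w ∈ domB, (0 : ℝ) ≤ ⟪A u - A w, (u : H) - (w : H)⟫) → u ∈ domB := by
      intro u hu
      obtain ⟨w, hw, hweq⟩ := hran ((u : H) + A u)
      have hdiff : (u : H) - (w : H) + (A u - A w) = 0 := by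
        have h0 : (u : H) - (w : H) + (A u - A w) = ((u : H) + A u) - ((w : H) + A w) := by
          abel
        rw [h0, hweq, sub_self]
      have hAeq : A u - A w = -((u : H) - (w : H)) := eq_neg_of_add_eq_zero_right hdiff
      have h1 := hu w hw
      rw [hAeq, inner_neg_left] at h1
      have h2 : (⟪(u : H) - (w : H), (u : H) - (w : H)⟫ : ℝ) = 0 := by
        have h3 := real_inner_self_nonneg (x := (u : H) - (w : H))
        linarith
      have h4 := inner_self_eq_zero.1 h2
      rw [sub_eq_zero] at h4
      have h5 : u = w := Subtype.ext h4
      rw [h5]; exact hw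
    set DSet : Set G₁ := {x | ∃ u, u ∈ domB ∧ F₁ u = x} with hDSet
    set g0 : G₁ → G₂ := fun x =>
      if h : ∃ u, u ∈ domB ∧ F₁ u = x then F₂ h.choose else 0 with hg0def
    have hg0 : ∀ u ∈ domB, g0 (F₁ u) = F₂ u := by
      intro u hu
      have hex : ∃ v, v ∈ domB ∧ F₁ v = F₁ u := ⟨u, hu, rfl⟩
      rw [hg0def]
      simp only [dif_pos hex]
      have h1 := hex.choose_spec
      have h2 := hcontr _ h1.1 _ hu
      rw [h1.2] at h2
      simp only [sub_self, norm_zero] at h2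
      exact sub_eq_zero.1 (norm_le_zero_iff.1 h2)
    have hg0lip : ∀ x ∈ DSet, ∀ y ∈ DSet, ‖g0 x - g0 y‖ ≤ ‖x - y‖ := by
      rintro x ⟨u, hu, rfl⟩ y ⟨v, hv, rfl⟩
      rw [hg0 u hu, hg0 v hv]
      exact hcontr u hu v hv
    have hDall : ∀ x : G₁, ∃ u, u ∈ domB ∧ F₁ u = x := by
      intro x
      obtain ⟨y, hy⟩ := kirszbraun_point_s9 DSet g0 hg0lip x
      obtain ⟨ustar, hu1, hu2⟩ := hFsurj x y
      refine ⟨ustar, ?_, hu1⟩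
      apply hmax
      intro w hw
      have h1 := hIP ustar w
      have h2 : g0 (F₁ w) = F₂ w := hg0 w hw
      have h3 : ‖y - F₂ w‖ ≤ ‖x - F₁ w‖ := by
        rw [← h2]
        exact hy (F₁ w) ⟨w, hw, rfl⟩
      rw [hu1, hu2] at h1
      nlinarith [norm_nonneg (y - F₂ w), norm_nonneg (x - F₁ w)]
    set g : G₁ → G₂ := fun x => F₂ (hDall x).choose with hgdef
    have hgF : ∀ u ∈ domB, g (F₁ u) = F₂ u := by
      intro u hu
      have h1 := (hDall (F₁ u)).choose_spec
      have h2 := hcontr _ h1.1 _ hu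
      rw [h1.2] at h2
      simp only [sub_self, norm_zero] at h2
      exact sub_eq_zero.1 (norm_le_zero_iff.1 h2)
    have hglip : ∀ x y : G₁, ‖g x - g y‖ ≤ ‖x - y‖ := by
      intro x y
      have h1 := (hDall x).choose_spec
      have h2 := (hDall y).choose_spec
      have h3 := hcontr _ h1.1 _ h2.1
      rw [h1.2, h2.2] at h3
      exact h3
    refine ⟨g, hglip, ?_⟩
    intro u
    constructor
    · intro hu; exact hgF u hu
    · intro hgu
      apply hmax
      intro w hw
      have h1 := hIP u w
      have h3 : ‖F₂ u - F₂ w‖ ≤ ‖F₁ u - F₁ w‖ := by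
        rw [← hgu, ← hgF w hw]
        exact hglip (F₁ u) (F₁ w)
      nlinarith [norm_nonneg (F₂ u - F₂ w), norm_nonneg (F₁ u - F₁ w)]
  · -- a contraction yields an m-accretive restriction
    rintro ⟨g, hglip, hgdom⟩
    constructor
    · intro u hu v hv
      have h1 := hIP u v
      have h2 : ‖F₂ u - F₂ v‖ ≤ ‖F₁ u - F₁ v‖ := by
        rw [← (hgdom u).1 hu, ← (hgdom v).1 hv]
        exact hglip (F₁ u) (F₁ v)
      nlinarith [norm_nonneg (F₂ u - F₂ v), norm_nonneg (F₁ u - F₁ v)]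
    · intro f
      obtain ⟨M, hM1, hbound⟩ := opcore_bound A₀ A hskew hC F₁ F₂ hFsurj hbs
      have hsurj := opcore_surj A₀ A hskew hC F₁ F₂ hFsurj hbs M hM1 hbound
      choose uy hy1 hy2 using fun y : G₂ => hsurj f y
      set Φ : G₂ → G₂ := fun y => y - g (F₁ (uy y)) with hΦ
      have hMpos : (0 : ℝ) < M := by linarith
      -- difference estimates
      have hdiff : ∀ y z : G₂, ((uy y : H) - (uy z : H)) + (A (uy y) - A (uy z)) = 0 := by
        intro y z
        have h0 : ((uy y : H) - (uy z : H)) + (A (uy y) - A (uy z))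
            = ((uy y : H) + A (uy y)) - ((uy z : H) + A (uy z)) := by abel
        rw [h0, hy1 y, hy1 z, sub_self]
      have hnormid : ∀ y z : G₂, ‖y - z‖ ^ 2
          = ‖(uy y : H) - (uy z : H)‖ ^ 2 + ‖A (uy y) - A (uy z)‖ ^ 2
            + ‖F₁ (uy y) - F₁ (uy z)‖ ^ 2 := by
        intro y z
        have h1 := nID (uy y - uy z)
        have hco : ((uy y - uy z : A.domain) : H) = (uy y : H) - (uy z : H) := rfl
        rw [A.map_sub, map_sub F₁, map_sub F₂, hco] at h1
        rw [hy2 y, hy2 z] at h1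
        rw [hdiff y z] at h1
        simp only [norm_zero] at h1
        linarith
      have hbnd : ∀ y z : G₂, ‖y - z‖ ^ 2
          ≤ M ^ 2 * (‖(uy y : H) - (uy z : H)‖ ^ 2 + ‖A (uy y) - A (uy z)‖ ^ 2) := by
        intro y z
        have h1 := hbound (uy y - uy z)
        have hco : ((uy y - uy z : A.domain) : H) = (uy y : H) - (uy z : H) := rfl
        rw [A.map_sub, map_sub F₂, hco] at h1
        rw [hy2 y, hy2 z] at h1
        exact h1
      have hmono : ∀ y z : G₂, (1 / (2 * M ^ 2)) * ‖y - z‖ ^ 2 ≤ ⟪Φ y - Φ z, y - z⟫ := by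
        intro y z
        have h1 : Φ y - Φ z = (y - z) - (g (F₁ (uy y)) - g (F₁ (uy z))) := by
          rw [hΦ]; dsimp only; abel
        have h2 : (⟪Φ y - Φ z, y - z⟫ : ℝ)
            = ‖y - z‖ ^ 2 - ⟪g (F₁ (uy y)) - g (F₁ (uy z)), y - z⟫ := by
          rw [h1, inner_sub_left, real_inner_self_eq_norm_sq]
        have h3 : (⟪g (F₁ (uy y)) - g (F₁ (uy z)), y - z⟫ : ℝ)
            ≤ ‖g (F₁ (uy y)) - g (F₁ (uy z))‖ * ‖y - z‖ := real_inner_le_norm _ _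
        have h4 : ‖g (F₁ (uy y)) - g (F₁ (uy z))‖ ≤ ‖F₁ (uy y) - F₁ (uy z)‖ := hglip _ _
        have h5 := hnormid y z
        have h6 := hbnd y z
        have h7 : ‖g (F₁ (uy y)) - g (F₁ (uy z))‖ * ‖y - z‖
            ≤ (‖F₁ (uy y) - F₁ (uy z)‖ ^ 2 + ‖y - z‖ ^ 2) / 2 := by
          nlinarith [norm_nonneg (y - z), norm_nonneg (g (F₁ (uy y)) - g (F₁ (uy z))),
            norm_nonneg (F₁ (uy y) - F₁ (uy z)),
            sq_nonneg (‖F₁ (uy y) - F₁ (uy z)‖ - ‖y - z‖)]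
        have h8 : (⟪Φ y - Φ z, y - z⟫ : ℝ)
            ≥ (‖(uy y : H) - (uy z : H)‖ ^ 2 + ‖A (uy y) - A (uy z)‖ ^ 2) / 2 := by
          linarith
        rw [div_mul_eq_mul_div, div_le_iff₀ (by positivity : (0:ℝ) < 2 * M ^ 2)]
        have h9 := mul_le_mul_of_nonneg_left h8 (sq_nonneg M)
        nlinarith [h6, h9]
      have hlip2 : ∀ y z : G₂, ‖Φ y - Φ z‖ ≤ 2 * ‖y - z‖ := by
        intro y z
        have h1 : Φ y - Φ z = (y - z) - (g (F₁ (uy y)) - g (F₁ (uy z))) := by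
          rw [hΦ]; dsimp only; abel
        have h2 := norm_sub_le (y - z) (g (F₁ (uy y)) - g (F₁ (uy z)))
        have h4 : ‖g (F₁ (uy y)) - g (F₁ (uy z))‖ ≤ ‖F₁ (uy y) - F₁ (uy z)‖ := hglip _ _
        have h5 := hnormid y z
        have h6 : ‖F₁ (uy y) - F₁ (uy z)‖ ≤ ‖y - z‖ := by
          apply sqrt_le _ _ (norm_nonneg _) (norm_nonneg _)
          nlinarith [sq_nonneg ‖(uy y : H) - (uy z : H)‖, sq_nonneg ‖A (uy y) - A (uy z)‖]
        rw [h1]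
        calc ‖(y - z) - (g (F₁ (uy y)) - g (F₁ (uy z)))‖
            ≤ ‖y - z‖ + ‖g (F₁ (uy y)) - g (F₁ (uy z))‖ := h2
          _ ≤ 2 * ‖y - z‖ := by linarith
      have hc0 : (0 : ℝ) < 1 / (2 * M ^ 2) := by positivity
      have hc1 : 1 / (2 * M ^ 2) ≤ 1 := by
        rw [div_le_one (by positivity)]
        nlinarith
      obtain ⟨y, hyΦ⟩ := strong_mono_surj Φ (1 / (2 * M ^ 2)) hc0 hc1 hmono hlip2
      have hgy : g (F₁ (uy y)) = y := by
        have h0 : y - g (F₁ (uy y)) = 0 := hyΦ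
        exact (sub_eq_zero.1 h0).symm
      refine ⟨uy y, ?_, hy1 y⟩
      rw [hgdom]
      rw [hgy, hy2 y]
end

section
/- Let (F, G₁, G₂) be a boundary system for A, let g : G₁ → G₂ be 1-Lipschitz, and let B ⊆ A be the restriction of A with dom(B) = {u ∈ dom(A) : g(F₁u) = F₂u}. Then dom(A₀) ⊆ dom(B) if and only if g(0) = 0. -/
open scoped RealInnerProductSpace

/-- For the m-accretive restriction `B ⊆ A` with
`dom B = {u ∈ dom A : g (F₁ u) = F₂ u}` (`g` a contraction),
one has `A₀ ⊆ B` (i.e. `dom A₀ ⊆ dom B`) iff `g 0 = 0`. -/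
theorem stmt_10 {H : Type*} [NormedAddCommGroup H] [InnerProductSpace ℝ H] [CompleteSpace H]
    {G₁ G₂ : Type*} [NormedAddCommGroup G₁] [InnerProductSpace ℝ G₁] [CompleteSpace G₁]
    [NormedAddCommGroup G₂] [InnerProductSpace ℝ G₂] [CompleteSpace G₂]
    (A₀ : H →ₗ.[ℝ] H) (hdense : Dense (A₀.domain : Set H)) (hclosed : A₀.IsClosed)
    (hskew : ∀ u v : A₀.domain, ⟪A₀ u, (v : H)⟫ = -⟪(u : H), A₀ v⟫)
    (A : H →ₗ.[ℝ] H) (hA : A = -A₀.adjoint)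
    (F₁ : A.domain →ₗ[ℝ] G₁) (F₂ : A.domain →ₗ[ℝ] G₂)
    (hFsurj : ∀ (g₁ : G₁) (g₂ : G₂), ∃ u : A.domain, F₁ u = g₁ ∧ F₂ u = g₂)
    (hbs : ∀ u v : A.domain,
      ⟪A u, (v : H)⟫ + ⟪(u : H), A v⟫ = ⟪F₁ u, F₁ v⟫ - ⟪F₂ u, F₂ v⟫)
    (g : G₁ → G₂) (hg : ∀ x y : G₁, ‖g x - g y‖ ≤ ‖x - y‖) :
    (∀ u : A.domain, (u : H) ∈ A₀.domain → g (F₁ u) = F₂ u) ↔ g 0 = 0 := by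
  subst hA
  constructor
  · intro h
    have h0 := h 0 (by simp)
    simpa using h0
  · intro hg0 u hu
    set u₀ : A₀.domain := ⟨(u : H), hu⟩ with hu₀
    have hAu : (-A₀.adjoint) u = A₀ u₀ := by
      rw [LinearPMap.neg_apply]
      have : A₀.adjoint u = -A₀ u₀ := by
        refine LinearPMap.adjoint_apply_eq hdense u fun x => ?_
        rw [inner_neg_left, hskew u₀ x, neg_neg]
      rw [this, neg_neg]
    have key : ∀ v : (-A₀.adjoint).domain,
        ⟪F₁ u, F₁ v⟫ - ⟪F₂ u, F₂ v⟫ = 0 := by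
      intro v
      have hfa : ⟪(u : H), A₀.adjoint v⟫ = ⟪(v : H), A₀ u₀⟫ := by
        rw [real_inner_comm]
        exact (LinearPMap.adjoint_isFormalAdjoint hdense) v u₀
      rw [← hbs u v, hAu, LinearPMap.neg_apply, inner_neg_right, hfa,
        real_inner_comm]
      ring
    obtain ⟨v₁, hv₁₁, hv₁₂⟩ := hFsurj (F₁ u) 0
    obtain ⟨v₂, hv₂₁, hv₂₂⟩ := hFsurj 0 (F₂ u)
    have h1 : F₁ u = 0 := by
      have h := key v₁
      rw [hv₁₁, hv₁₂, inner_zero_right, sub_zero] at h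
      exact inner_self_eq_zero.mp h
    have h2 : F₂ u = 0 := by
      have h := key v₂
      rw [hv₂₁, hv₂₂, inner_zero_right, zero_sub, neg_eq_zero] at h
      exact inner_self_eq_zero.mp h
    rw [h1, h2, hg0]
end

section
/- Let (F, G₁, G₂) be a boundary system for A, let g : G₁ → G₂ be 1-Lipschitz, and let B ⊆ A be the restriction of A with dom(B) = {u ∈ dom(A) : g(F₁u) = F₂u}. Then dom(B) is a linear subspace of dom(A) (i.e. B is a linear operator) if and only if g is linear. -/
open scoped RealInnerProductSpace

/-- For the m-accretive restriction `B ⊆ A` with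
`dom B = {u ∈ dom A : g (F₁ u) = F₂ u}` (`g` a contraction),
`dom B` is a linear subspace of `dom A` (i.e. `B` is linear) iff `g` is linear. -/
theorem stmt_11 {H : Type*} [NormedAddCommGroup H] [InnerProductSpace ℝ H] [CompleteSpace H]
    {G₁ G₂ : Type*} [NormedAddCommGroup G₁] [InnerProductSpace ℝ G₁] [CompleteSpace G₁]
    [NormedAddCommGroup G₂] [InnerProductSpace ℝ G₂] [CompleteSpace G₂]
    (A₀ : H →ₗ.[ℝ] H) (hdense : Dense (A₀.domain : Set H)) (hclosed : A₀.IsClosed)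
    (hskew : ∀ u v : A₀.domain, ⟪A₀ u, (v : H)⟫ = -⟪(u : H), A₀ v⟫)
    (A : H →ₗ.[ℝ] H) (hA : A = -A₀.adjoint)
    (F₁ : A.domain →ₗ[ℝ] G₁) (F₂ : A.domain →ₗ[ℝ] G₂)
    (hFsurj : ∀ (g₁ : G₁) (g₂ : G₂), ∃ u : A.domain, F₁ u = g₁ ∧ F₂ u = g₂)
    (hbs : ∀ u v : A.domain,
      ⟪A u, (v : H)⟫ + ⟪(u : H), A v⟫ = ⟪F₁ u, F₁ v⟫ - ⟪F₂ u, F₂ v⟫)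
    (g : G₁ → G₂) (hg : ∀ x y : G₁, ‖g x - g y‖ ≤ ‖x - y‖) :
    (∃ S : Submodule ℝ A.domain, (S : Set A.domain) = {u : A.domain | g (F₁ u) = F₂ u}) ↔
      ∃ gl : G₁ →ₗ[ℝ] G₂, ∀ x : G₁, gl x = g x := by
  constructor
  · rintro ⟨S, hS⟩
    have hmem : ∀ u : A.domain, u ∈ S ↔ g (F₁ u) = F₂ u := by
      intro u
      constructor
      · intro hu; have : u ∈ (S : Set A.domain) := hu; rwa [hS] at this
      · intro hu; show u ∈ (S : Set A.domain); rw [hS]; exact hu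
    have key : ∀ x : G₁, ∃ u : A.domain, u ∈ S ∧ F₁ u = x ∧ F₂ u = g x := by
      intro x
      obtain ⟨u, h1, h2⟩ := hFsurj x (g x)
      exact ⟨u, (hmem u).2 (by rw [h1, h2]), h1, h2⟩
    refine ⟨{ toFun := g
              map_add' := ?_
              map_smul' := ?_ }, fun x => rfl⟩
    · intro x y
      obtain ⟨u, hu, hu1, hu2⟩ := key x
      obtain ⟨v, hv, hv1, hv2⟩ := key y
      have : g (F₁ (u + v)) = F₂ (u + v) := (hmem _).1 (S.add_mem hu hv)
      simpa [map_add, hu1, hv1, hu2, hv2] using this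
    · intro c x
      obtain ⟨u, hu, hu1, hu2⟩ := key x
      have : g (F₁ (c • u)) = F₂ (c • u) := (hmem _).1 (S.smul_mem c hu)
      simpa [map_smul, hu1, hu2] using this
  · rintro ⟨gl, hgl⟩
    refine ⟨LinearMap.ker (gl.comp F₁ - F₂), ?_⟩
    ext u
    simp [LinearMap.mem_ker, sub_eq_zero, hgl]
end

section
/- Let B : dom(B) ⊆ H → H be a linear operator which is m-accretive and extends A₀ (i.e. dom(A₀) ⊆ dom(B) and B(u) = A₀u for u ∈ dom(A₀)). Then B is a restriction of −A₀*; that is, dom(B) ⊆ dom(A₀*) and B(u) = −A₀*u for all u ∈ dom(B). -/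
open scoped RealInnerProductSpace

lemma key_identity {H : Type*} [NormedAddCommGroup H] [InnerProductSpace ℝ H]
    (A₀ : H →ₗ.[ℝ] H)
    (hskew : ∀ u v : A₀.domain, ⟪A₀ u, (v : H)⟫ = -⟪(u : H), A₀ v⟫)
    (B : H →ₗ.[ℝ] H) (hext : A₀ ≤ B)
    (hacc : ∀ u v : B.domain, 0 ≤ ⟪B u - B v, (u : H) - (v : H)⟫)
    (u : B.domain) (v : A₀.domain) :
    ⟪B u, (v : H)⟫ + ⟪A₀ v, (u : H)⟫ = 0 := by
  set v' : B.domain := ⟨(v : H), hext.1 v.2⟩ with hv'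
  have hBv' : B v' = A₀ v := (hext.2 (x := v) (y := v') rfl).symm
  have hAvv : ⟪A₀ v, (v : H)⟫ = 0 := by
    have h1 := hskew v v
    have h2 := real_inner_comm (A₀ v) ((v : H))
    linarith
  have hmain : ∀ t : ℝ, 0 ≤ ⟪B u, (u : H)⟫ - t * (⟪B u, (v : H)⟫ + ⟪A₀ v, (u : H)⟫) := by
    intro t
    have h := hacc u (t • v')
    have hBsmul : B (t • v') = t • A₀ v := by rw [B.map_smul, hBv']
    have hcoe : ((t • v' : B.domain) : H) = t • (v : H) := rfl
    rw [hBsmul, hcoe] at h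
    rw [inner_sub_left, inner_sub_right, inner_sub_right, real_inner_smul_left,
      real_inner_smul_left, real_inner_smul_right, real_inner_smul_right] at h
    rw [hAvv] at h
    have : ⟪A₀ v, (u : H)⟫ = ⟪(u : H), A₀ v⟫ := real_inner_comm _ _
    nlinarith [h]
  by_contra hd
  have hd' : ⟪B u, (v : H)⟫ + ⟪A₀ v, (u : H)⟫ ≠ 0 := hd
  have := hmain ((⟪B u, (u : H)⟫ + 1) / (⟪B u, (v : H)⟫ + ⟪A₀ v, (u : H)⟫))
  rw [div_mul_cancel₀ _ hd'] at this
  linarith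

/-- A linear m-accretive extension `B` of the closed, densely defined, skew-symmetric
operator `A₀` is a restriction of `-A₀*`. -/
theorem stmt_12 {H : Type*} [NormedAddCommGroup H] [InnerProductSpace ℝ H] [CompleteSpace H]
    (A₀ : H →ₗ.[ℝ] H) (hdense : Dense (A₀.domain : Set H)) (hclosed : A₀.IsClosed)
    (hskew : ∀ u v : A₀.domain, ⟪A₀ u, (v : H)⟫ = -⟪(u : H), A₀ v⟫)
    (B : H →ₗ.[ℝ] H) (hext : A₀ ≤ B)
    (hacc : ∀ u v : B.domain, 0 ≤ ⟪B u - B v, (u : H) - (v : H)⟫)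
    (honto : ∀ f : H, ∃ u : B.domain, (u : H) + B u = f) :
    B ≤ -A₀.adjoint := by
  have key := key_identity A₀ hskew B hext hacc
  have hw : ∀ u : B.domain, ∀ x : A₀.domain, ⟪-B u, (x : H)⟫ = ⟪(u : H), A₀ x⟫ := by
    intro u x
    have h1 := key u x
    have h2 := real_inner_comm (A₀ x) ((u : H))
    rw [inner_neg_left]
    linarith
  have hdom : B.domain ≤ (-A₀.adjoint).domain := by
    intro u hu
    exact A₀.mem_adjoint_domain_of_exists u ⟨-B ⟨u, hu⟩, fun x => hw ⟨u, hu⟩ x⟩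
  refine ⟨hdom, ?_⟩
  intro x y hxy
  have hy : ((y : H) : H) ∈ A₀.adjoint.domain := y.2
  rw [LinearPMap.neg_apply]
  have : A₀.adjoint ⟨(y : H), hy⟩ = -B x := by
    apply LinearPMap.adjoint_apply_eq hdense
    intro v
    have := hw x v
    rw [hxy] at this
    exact this
  simp only [Subtype.coe_eta] at this ⊢
  rw [this, neg_neg]
end
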